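/- arXiv:2509.04613 — 5 statements merged into one kernel-verified Lean document; each statement's English description precedes it below -/
import Mathlib

section
/- For any countable set Ω, the tail equivalence relation E_t(Ω) on Ω^ℕ is a hyperfinite countable Borel equivalence relation. -/
/-- A Borel equivalence relation on a measurable space is *hyperfinite* if it is the
increasing union of finite Borel equivalence relations. -/
def Hyperfinite {X : Type*} [MeasurableSpace X] (E : X → X → Prop) : Prop :=
  ∃ F : ℕ → X → X → Prop,
    (∀ n, Equivalence (F n)) ∧
    (∀ n, MeasurableSet {p : X × X | F n p.1 p.2}) ∧
    (∀ n x, {y | F n x y}.Finite) ∧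
    (∀ n x y, F n x y → F (n + 1) x y) ∧
    (∀ x y, E x y ↔ ∃ n, F n x y)

/-- The tail equivalence relation on `Ω^ℕ`. -/
def TailRel (Ω : Type*) : (ℕ → Ω) → (ℕ → Ω) → Prop :=
  fun s t => ∃ n m : ℕ, ∀ i : ℕ, s (n + i) = t (m + i)

attribute [local instance] Classical.propDecidable

set_option linter.unusedSectionVars false
set_option maxHeartbeats 1000000

namespace Stmt2

variable {Ω : Type} [Countable Ω] [MeasurableSpace Ω] [MeasurableSingletonClass Ω]

/-! ### Shifts -/

def sh (k : ℕ) (s : ℕ → Ω) : ℕ → Ω := fun i => s (k + i)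

lemma sh_sh (k l : ℕ) (s : ℕ → Ω) : sh k (sh l s) = sh (l + k) s := by
  funext i; simp [sh, Nat.add_assoc]

lemma sh_apply (k : ℕ) (s : ℕ → Ω) (i : ℕ) : sh k s i = s (k + i) := rfl

lemma tailRel_iff {s t : ℕ → Ω} : TailRel Ω s t ↔ ∃ a b, sh a s = sh b t := by
  constructor
  · rintro ⟨a, b, h⟩; exact ⟨a, b, funext h⟩
  · rintro ⟨a, b, h⟩; exact ⟨a, b, fun i => congrFun h i⟩

lemma tailRel_refl (s : ℕ → Ω) : TailRel Ω s s := ⟨0, 0, fun _ => rfl⟩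

lemma tailRel_symm {s t : ℕ → Ω} (h : TailRel Ω s t) : TailRel Ω t s := by
  obtain ⟨a, b, h⟩ := h; exact ⟨b, a, fun i => (h i).symm⟩

lemma tailRel_trans {s t u : ℕ → Ω} (h1 : TailRel Ω s t) (h2 : TailRel Ω t u) :
    TailRel Ω s u := by
  rw [tailRel_iff] at h1 h2 ⊢
  obtain ⟨a, b, h1⟩ := h1; obtain ⟨c, d, h2⟩ := h2
  refine ⟨a + c, d + b, ?_⟩
  calc sh (a + c) s = sh c (sh a s) := (sh_sh ..).symm
    _ = sh c (sh b t) := by rw [h1]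
    _ = sh (b + c) t := sh_sh ..
    _ = sh (c + b) t := by rw [Nat.add_comm b c]
    _ = sh b (sh c t) := (sh_sh ..).symm
    _ = sh b (sh d u) := by rw [h2]
    _ = sh (d + b) u := sh_sh ..

lemma equivalence_tailRel : Equivalence (TailRel Ω) :=
  ⟨tailRel_refl, tailRel_symm, tailRel_trans⟩

/-! ### Measurability basics -/

instance : MeasurableSingletonClass (ℕ → Ω) := by
  constructor
  intro s
  have h : {s} = ⋂ i, (fun t : ℕ → Ω => t i) ⁻¹' {s i} := by
    ext t
    simp only [Set.mem_singleton_iff, Set.mem_iInter, Set.mem_preimage, funext_iff]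
  rw [h]
  exact MeasurableSet.iInter fun i => (measurable_pi_apply i) (measurableSet_singleton _)

lemma measSet_coordEq (a b : ℕ) :
    MeasurableSet {p : (ℕ → Ω) × (ℕ → Ω) | p.1 a = p.2 b} := by
  have h : {p : (ℕ → Ω) × (ℕ → Ω) | p.1 a = p.2 b}
      = ⋃ c : Ω, ((fun p : (ℕ → Ω) × (ℕ → Ω) => p.1 a) ⁻¹' {c})
        ∩ ((fun p : (ℕ → Ω) × (ℕ → Ω) => p.2 b) ⁻¹' {c}) := by
    ext p
    simp only [Set.mem_setOf_eq, Set.mem_iUnion, Set.mem_inter_iff, Set.mem_preimage,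
      Set.mem_singleton_iff]
    constructor
    · intro h; exact ⟨p.2 b, h, rfl⟩
    · rintro ⟨c, h1, h2⟩; rw [h1, h2]
  rw [h]
  exact MeasurableSet.iUnion fun c =>
    (((measurable_pi_apply a).comp measurable_fst) (measurableSet_singleton c)).inter
      (((measurable_pi_apply b).comp measurable_snd) (measurableSet_singleton c))

lemma measSet_tailRel :
    MeasurableSet {p : (ℕ → Ω) × (ℕ → Ω) | TailRel Ω p.1 p.2} := by
  have h : {p : (ℕ → Ω) × (ℕ → Ω) | TailRel Ω p.1 p.2}
      = ⋃ a, ⋃ b, ⋂ i, {p : (ℕ → Ω) × (ℕ → Ω) | p.1 (a + i) = p.2 (b + i)} := by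
    ext p
    simp only [Set.mem_setOf_eq, Set.mem_iUnion, Set.mem_iInter, TailRel]
  rw [h]
  exact MeasurableSet.iUnion fun a => MeasurableSet.iUnion fun b =>
    MeasurableSet.iInter fun i => measSet_coordEq _ _

/-! ### Countability of classes -/

def app (w : List Ω) (u : ℕ → Ω) : ℕ → Ω :=
  fun i => if h : i < w.length then w.get ⟨i, h⟩ else u (i - w.length)

lemma countable_class (s : ℕ → Ω) : {t | TailRel Ω s t}.Countable := by
  have hsub : {t | TailRel Ω s t} ⊆
      Set.range (fun q : List Ω × ℕ => app q.1 (sh q.2 s)) := by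
    intro t ht
    rw [Set.mem_setOf_eq, tailRel_iff] at ht
    obtain ⟨a, b, h⟩ := ht
    refine ⟨(List.ofFn (fun i : Fin b => t i), a), ?_⟩
    funext i
    simp only [app, List.length_ofFn]
    split
    · next hi => simp [List.get_ofFn]
    · next hi =>
      have h2 := congrFun h (i - b)
      simp only [sh] at h2
      have h3 : b + (i - b) = i := by omega
      rw [h3] at h2
      exact h2
  exact Set.Countable.mono hsub (Set.countable_range _)

/-! ### Eventually periodic points -/

def EP (s : ℕ → Ω) : Prop := ∃ p, 0 < p ∧ ∃ N, ∀ i, N ≤ i → s (i + p) = s i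

lemma EP_sh_of {s : ℕ → Ω} (k : ℕ) (h : EP s) : EP (sh k s) := by
  obtain ⟨p, hp, N, hN⟩ := h
  refine ⟨p, hp, N, fun i hi => ?_⟩
  have := hN (k + i) (le_trans hi (Nat.le_add_left _ _))
  simp only [sh]
  rw [← this]
  congr 1
  omega

lemma EP_of_sh {s : ℕ → Ω} (k : ℕ) (h : EP (sh k s)) : EP s := by
  obtain ⟨p, hp, N, hN⟩ := h
  refine ⟨p, hp, N + k, fun i hi => ?_⟩
  have := hN (i - k) (by omega)
  simp only [sh] at this
  have h1 : k + (i - k + p) = i + p := by omega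
  have h2 : k + (i - k) = i := by omega
  rw [h1, h2] at this
  exact this

lemma EP_congr {s t : ℕ → Ω} (h : TailRel Ω s t) : EP s ↔ EP t := by
  rw [tailRel_iff] at h
  obtain ⟨a, b, h⟩ := h
  constructor
  · intro hs
    exact EP_of_sh b (h ▸ EP_sh_of a hs)
  · intro ht
    exact EP_of_sh a (h.symm ▸ EP_sh_of b ht)

lemma EP_of_sh_eq {s : ℕ → Ω} {k l : ℕ} (hkl : k < l) (h : sh k s = sh l s) : EP s := by
  refine ⟨l - k, by omega, k, fun i hi => ?_⟩
  have := congrFun h (i - k)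
  simp only [sh] at this
  have h1 : k + (i - k) = i := by omega
  have h2 : l + (i - k) = i + (l - k) := by omega
  rw [h1, h2] at this
  exact this.symm

def PerSet (p N : ℕ) : Set (ℕ → Ω) := {s | ∀ i, N ≤ i → s (i + p) = s i}

lemma periodic_ext {s t : ℕ → Ω} {p N : ℕ} (hp : 0 < p)
    (hs : ∀ i, N ≤ i → s (i + p) = s i) (ht : ∀ i, N ≤ i → t (i + p) = t i)
    (hpre : ∀ j, j < N + p → s j = t j) : s = t := by
  funext i
  induction i using Nat.strong_induction_on with
  | _ i ih =>
    by_cases hi : i < N + p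
    · exact hpre i hi
    · have h1 : N ≤ i - p := by omega
      have h2 : i - p + p = i := by omega
      have h3 := hs (i - p) h1
      have h4 := ht (i - p) h1
      rw [h2] at h3 h4
      rw [h3, h4]
      exact ih (i - p) (by omega)

lemma perSet_countable {p N : ℕ} (hp : 0 < p) : (PerSet (Ω := Ω) p N).Countable := by
  rw [Set.countable_iff_exists_injOn]
  obtain ⟨e, he⟩ := exists_injective_nat (Fin (N + p) → Ω)
  refine ⟨fun s => e (fun j => s j), ?_⟩
  intro s hs t ht hst
  have hpre : ∀ j : Fin (N + p), s j = t j := fun j => congrFun (he hst) j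
  exact periodic_ext hp hs ht (fun j hj => hpre ⟨j, hj⟩)

lemma EP_countable : {s : ℕ → Ω | EP s}.Countable := by
  have hsub : {s : ℕ → Ω | EP s} ⊆
      ⋃ q : ℕ × ℕ, {s : ℕ → Ω | 0 < q.1 ∧ s ∈ PerSet q.1 q.2} := by
    rintro s ⟨p, hp, N, hN⟩
    exact Set.mem_iUnion.2 ⟨(p, N), hp, hN⟩
  refine Set.Countable.mono hsub (Set.countable_iUnion fun q => ?_)
  by_cases hq : 0 < q.1
  · exact (perSet_countable hq).mono (fun s hs => hs.2)
  · have h : {s : ℕ → Ω | 0 < q.1 ∧ s ∈ PerSet q.1 q.2} = ∅ := by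
      ext s; simp [hq]
    rw [h]; exact Set.countable_empty

section Main

variable [Nonempty Ω]

/-! ### The letter index and minimal-index choice -/

noncomputable def idx : Ω → ℕ := (exists_injective_nat Ω).choose

lemma idx_inj : Function.Injective (idx (Ω := Ω)) := (exists_injective_nat Ω).choose_spec

lemma exists_min_idx {S : Set Ω} (h : S.Nonempty) :
    ∃ a, a ∈ S ∧ ∀ b ∈ S, idx a ≤ idx b := by
  have h1 : (idx '' S).Nonempty := h.image idx
  obtain ⟨a, ha, hae⟩ := Nat.sInf_mem h1
  exact ⟨a, ha, fun b hb => by rw [hae]; exact Nat.sInf_le ⟨b, hb, rfl⟩⟩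

noncomputable def pick (S : Set Ω) : Ω :=
  if h : ∃ a, a ∈ S ∧ ∀ b ∈ S, idx a ≤ idx b then h.choose else Classical.arbitrary Ω

lemma pick_spec {S : Set Ω} (h : S.Nonempty) :
    pick S ∈ S ∧ ∀ b ∈ S, idx (pick S) ≤ idx b := by
  rw [pick, dif_pos (exists_min_idx h)]
  exact (exists_min_idx h).choose_spec

lemma pick_eq_iff {S : Set Ω} (h : S.Nonempty) {a : Ω} :
    pick S = a ↔ a ∈ S ∧ ∀ b ∈ S, idx a ≤ idx b := by
  constructor
  · rintro rfl; exact pick_spec h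
  · rintro ⟨ha, hm⟩
    obtain ⟨hp, hpm⟩ := pick_spec h
    exact idx_inj (le_antisymm (hpm a ha) (hm _ hp))

/-! ### Words, infinitely-often occurrences, the canonical thread -/

def wordAt (u : ℕ → Ω) (k : ℕ) (w : List Ω) : Prop :=
  ∀ i : ℕ, ∀ hi : i < w.length, u (k + i) = w[i]

def IOcc (u : ℕ → Ω) (w : List Ω) : Prop := ∀ N, ∃ k, N ≤ k ∧ wordAt u k w

lemma wordAt_nil (u : ℕ → Ω) (k : ℕ) : wordAt u k ([] : List Ω) := by
  intro i hi; simp at hi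

lemma wordAt_sh {u : ℕ → Ω} {k j : ℕ} {w : List Ω} :
    wordAt (sh k u) j w ↔ wordAt u (k + j) w := by
  constructor <;> intro h i hi <;> have := h i hi <;> simp only [sh] at this ⊢ <;>
    rw [← this] <;> congr 1 <;> omega

lemma IOcc_sh {u : ℕ → Ω} {w : List Ω} (k : ℕ) : IOcc (sh k u) w ↔ IOcc u w := by
  constructor
  · intro h N
    obtain ⟨j, hj, hw⟩ := h N
    exact ⟨k + j, by omega, wordAt_sh.1 hw⟩
  · intro h N
    obtain ⟨j, hj, hw⟩ := h (N + k)
    refine ⟨j - k, by omega, wordAt_sh.2 ?_⟩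
    have h2 : k + (j - k) = j := by omega
    rw [h2]; exact hw

lemma wordAt_append_singleton {u : ℕ → Ω} {k : ℕ} {w : List Ω} {a : Ω} :
    wordAt u k (w ++ [a]) ↔ wordAt u k w ∧ u (k + w.length) = a := by
  constructor
  · intro h
    refine ⟨fun i hi => ?_, ?_⟩
    · have h2 := h i (by simp; omega)
      rwa [List.getElem_append_left hi] at h2
    · have h2 := h w.length (by simp)
      have h3 : (w ++ [a])[w.length]'(by simp) = a := by
        rw [List.getElem_append_right (le_refl w.length)]
        simp
      rwa [h3] at h2
  · rintro ⟨h1, h2⟩ i hi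
    simp only [List.length_append, List.length_singleton] at hi
    by_cases hiw : i < w.length
    · rw [List.getElem_append_left hiw]
      exact h1 i hiw
    · have hieq : i = w.length := by omega
      subst hieq
      have h3 : (w ++ [a])[w.length]'(by simp) = a := by
        rw [List.getElem_append_right (le_refl w.length)]
        simp
      rw [h3]
      exact h2

noncomputable def thread (u : ℕ → Ω) : ℕ → List Ω
  | 0 => []
  | m + 1 => thread u m ++ [pick {a | IOcc u (thread u m ++ [a])}]

lemma thread_length (u : ℕ → Ω) (m : ℕ) : (thread u m).length = m := by
  induction m with
  | zero => rfl
  | succ m ih => simp [thread, ih]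

lemma thread_sh (u : ℕ → Ω) (k : ℕ) : ∀ m, thread (sh k u) m = thread u m := by
  intro m
  induction m with
  | zero => rfl
  | succ m ih =>
    have hset : {a | IOcc (sh k u) (thread u m ++ [a])} = {a | IOcc u (thread u m ++ [a])} := by
      ext a
      exact IOcc_sh k
    simp only [thread, ih, hset]

lemma thread_prefix {u : ℕ → Ω} {m m' : ℕ} (h : m' ≤ m) :
    (thread u m').IsPrefix (thread u m) := by
  induction m with
  | zero => 
    have : m' = 0 := by omega
    subst this; exact List.prefix_refl _
  | succ m ih =>
    by_cases hm : m' = m + 1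
    · subst hm; exact List.prefix_refl _
    · have h2 := ih (by omega)
      exact h2.trans ⟨[pick {a | IOcc u (thread u m ++ [a])}], rfl⟩

lemma wordAt_prefix {u : ℕ → Ω} {k : ℕ} {w w' : List Ω} (h : w'.IsPrefix w)
    (hw : wordAt u k w) : wordAt u k w' := by
  obtain ⟨r, rfl⟩ := h
  intro i hi
  have h2 := hw i (by simp; omega)
  rwa [List.getElem_append_left hi] at h2

lemma pigeon {T : Set Ω} (hT : T.Finite) {P : ℕ → Prop} (hP : ∀ N, ∃ k, N ≤ k ∧ P k)
    {g : ℕ → Ω} (hg : ∀ k, P k → g k ∈ T) :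
    ∃ a ∈ T, ∀ N, ∃ k, N ≤ k ∧ P k ∧ g k = a := by
  by_contra hc
  push_neg at hc
  choose! N hN using hc
  obtain ⟨M, hM⟩ := (hT.image N).bddAbove
  obtain ⟨k, hk, hPk⟩ := hP (M + 1)
  have ha := hg k hPk
  have hNk : N (g k) ≤ M := hM ⟨g k, ha, rfl⟩
  exact hN (g k) ha k (by omega) hPk rfl

/-! ### The rank function -/

noncomputable def fB (u : ℕ → Ω) : ℕ :=
  if BddAbove {m | wordAt u 0 (thread u m)} then sSup {m | wordAt u 0 (thread u m)} else 0

noncomputable def ff (u : ℕ → Ω) : ℕ := max (idx (u 0)) (fB u)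

/-- The key unboundedness lemma: ahead of any non-eventually-periodic point there
are points of arbitrarily high rank. -/
lemma exists_marker {u : ℕ → Ω} (hu : ¬ EP u) (n : ℕ) :
    ∃ k, 1 ≤ k ∧ n ≤ ff (sh k u) := by
  by_cases hbig : ∃ k, 1 ≤ k ∧ n ≤ idx (u k)
  · obtain ⟨k, hk, hn⟩ := hbig
    refine ⟨k, hk, le_trans hn ?_⟩
    have h0 : (sh k u) 0 = u k := by simp [sh]
    rw [ff, h0]
    exact le_max_left _ _
  · push_neg at hbig
    have hTfin : ({a : Ω | idx a < n}).Finite := by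
      have h1 : {a : Ω | idx a < n} = idx ⁻¹' (Set.Iio n) := rfl
      rw [h1]
      exact Set.Finite.preimage (Set.injOn_of_injective idx_inj) (Set.finite_Iio n)
    have hthread : ∀ m, IOcc u (thread u m) := by
      intro m
      induction m with
      | zero => intro N; exact ⟨N, le_refl _, wordAt_nil u _⟩
      | succ m ih =>
        have ih' : ∀ N, ∃ k, N ≤ k ∧ (1 ≤ k ∧ wordAt u k (thread u m)) := by
          intro N
          obtain ⟨k, hk, hw⟩ := ih (max N 1)
          exact ⟨k, le_trans (le_max_left _ _) hk, le_trans (le_max_right _ _) hk, hw⟩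
        obtain ⟨a, haT, ha⟩ := pigeon hTfin ih' (g := fun k => u (k + m))
          (fun k hk => hbig (k + m) (by omega))
        have hIO : IOcc u (thread u m ++ [a]) := by
          intro N
          obtain ⟨k, hk, ⟨hk1, hw⟩, hg⟩ := ha N
          refine ⟨k, hk, wordAt_append_singleton.2 ⟨hw, ?_⟩⟩
          rw [thread_length]
          exact hg
        have hne : {b | IOcc u (thread u m ++ [b])}.Nonempty := ⟨a, hIO⟩
        have hp := (pick_spec hne).1
        simpa [thread] using hp
    have hocc : ∀ N, ∃ k, N ≤ k ∧ 1 ≤ k ∧ wordAt u k (thread u n) := by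
      intro N
      obtain ⟨k, hk, hw⟩ := hthread n (max N 1)
      exact ⟨k, le_trans (le_max_left _ _) hk, le_trans (le_max_right _ _) hk, hw⟩
    have hdet : ∀ k, ¬ BddAbove {m | wordAt (sh k u) 0 (thread u m)} →
        ∀ i, (sh k u) i = (thread u (i + 1))[i]'(by rw [thread_length]; omega) := by
      intro k hb i
      rw [not_bddAbove_iff] at hb
      obtain ⟨m, hmS, hm⟩ := hb (i + 1)
      have hmem : wordAt (sh k u) 0 (thread u (i + 1)) :=
        wordAt_prefix (thread_prefix (le_of_lt hm)) hmS
      have h2 := hmem i (by rw [thread_length]; omega)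
      simpa using h2
    have huse : ∀ k, 1 ≤ k → wordAt u k (thread u n) →
        BddAbove {m | wordAt (sh k u) 0 (thread u m)} → n ≤ ff (sh k u) := by
      intro k hk1 hw hb
      have hset : {m | wordAt (sh k u) 0 (thread (sh k u) m)}
          = {m | wordAt (sh k u) 0 (thread u m)} := by
        simp only [thread_sh]
      have hmem : n ∈ {m | wordAt (sh k u) 0 (thread u m)} := by
        rw [Set.mem_setOf_eq, wordAt_sh, Nat.add_zero]
        exact hw
      have hfB : n ≤ fB (sh k u) := by
        rw [fB, hset, if_pos hb]
        exact le_csSup hb hmem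
      exact le_trans hfB (le_max_right _ _)
    obtain ⟨k1, _, hk11, hw1⟩ := hocc 1
    obtain ⟨k2, hk2, hk21, hw2⟩ := hocc (k1 + 1)
    by_cases hb1 : BddAbove {m | wordAt (sh k1 u) 0 (thread u m)}
    · exact ⟨k1, hk11, huse k1 hk11 hw1 hb1⟩
    · by_cases hb2 : BddAbove {m | wordAt (sh k2 u) 0 (thread u m)}
      · exact ⟨k2, hk21, huse k2 hk21 hw2 hb2⟩
      · exfalso
        have h12 : sh k1 u = sh k2 u :=
          funext fun i => by rw [hdet k1 hb1 i, hdet k2 hb2 i]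
        exact hu (EP_of_sh_eq (by omega) h12)

/-! ### The dynamics -/

noncomputable def dd (m : ℕ) (v : ℕ → Ω) : ℕ :=
  if h : ∃ k, m ≤ ff (sh k v) then Nat.find h else 0

lemma dd_exists {v : ℕ → Ω} (hv : ¬ EP v) (m : ℕ) : ∃ k, m ≤ ff (sh k v) :=
  (exists_marker hv m).imp fun _ hk => hk.2

lemma dd_spec {v : ℕ → Ω} (hv : ¬ EP v) (m : ℕ) : m ≤ ff (sh (dd m v) v) := by
  rw [dd, dif_pos (dd_exists hv m)]
  exact Nat.find_spec (dd_exists hv m)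

lemma dd_min {v : ℕ → Ω} (hv : ¬ EP v) (m : ℕ) {i : ℕ} (hi : i < dd m v) :
    ff (sh i v) < m := by
  rw [dd, dif_pos (dd_exists hv m)] at hi
  exact lt_of_not_ge (Nat.find_min (dd_exists hv m) hi)

noncomputable def KK : ℕ → (ℕ → Ω) → ℕ
  | 0, _ => 0
  | n + 1, s => KK n s + dd (n + 1) (sh (KK n s) s)

noncomputable def tl (n : ℕ) (s : ℕ → Ω) : ℕ → Ω := sh (KK n s) s

noncomputable def DD (m : ℕ) (s : ℕ → Ω) : ℕ := dd m (tl (m - 1) s)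

lemma KK_succ (n : ℕ) (s : ℕ → Ω) : KK (n + 1) s = KK n s + DD (n + 1) s := rfl

lemma tl_succ (n : ℕ) (s : ℕ → Ω) : tl (n + 1) s = sh (DD (n + 1) s) (tl n s) := by
  rw [tl, tl, KK_succ, sh_sh]

lemma NEP_tl {s : ℕ → Ω} (hs : ¬ EP s) (n : ℕ) : ¬ EP (tl n s) :=
  fun h => hs (EP_of_sh _ h)

noncomputable def tags (n : ℕ) (s : ℕ → Ω) : ℕ → ℕ :=
  fun m => if 1 ≤ m ∧ m ≤ n ∧ n < m + DD m s then DD m s else 0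

/-! ### Codes for eventually periodic points -/

noncomputable def codeAux : ℕ × ℕ × List Ω → ℕ :=
  (exists_injective_nat (ℕ × ℕ × List Ω)).choose

lemma codeAux_inj : Function.Injective (codeAux (Ω := Ω)) :=
  (exists_injective_nat (ℕ × ℕ × List Ω)).choose_spec

noncomputable def code (s : ℕ → Ω) : ℕ :=
  if h : EP s then
    codeAux (Nat.find h, Nat.find (Nat.find_spec h).2,
      (List.range (Nat.find (Nat.find_spec h).2 + Nat.find h)).map s)
  else 0

lemma code_injOn : Set.InjOn (code (Ω := Ω)) {s | EP s} := by
  intro s hs t ht h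
  simp only [Set.mem_setOf_eq] at hs ht
  unfold code at h
  rw [dif_pos hs, dif_pos ht] at h
  have h2 := codeAux_inj h
  rw [Prod.ext_iff, Prod.ext_iff] at h2
  obtain ⟨hps, hNs, hw⟩ := h2
  simp only at hps hNs hw
  have hper_s : ∀ i, Nat.find (Nat.find_spec hs).2 ≤ i → s (i + Nat.find hs) = s i :=
    Nat.find_spec (Nat.find_spec hs).2
  have hper_t : ∀ i, Nat.find (Nat.find_spec ht).2 ≤ i → t (i + Nat.find ht) = t i :=
    Nat.find_spec (Nat.find_spec ht).2
  have hp_pos : 0 < Nat.find hs := (Nat.find_spec hs).1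
  refine periodic_ext hp_pos hper_s (fun i hi => ?_) (fun j hj => ?_)
  · rw [hps]
    exact hper_t i (hNs ▸ hi)
  · have hj2 : j < Nat.find (Nat.find_spec ht).2 + Nat.find ht := by
      rw [← hNs, ← hps]; exact hj
    have h3 := congrArg (fun l => l[j]?) hw
    simp only [List.getElem?_map] at h3
    rw [List.getElem?_range hj, List.getElem?_range hj2] at h3
    simp only [Option.map_some] at h3
    exact Option.some.inj h3

noncomputable def crep (s : ℕ → Ω) : ℕ := sInf (code '' {t | TailRel Ω s t ∧ EP t})

lemma crep_eq_of_rel {s t : ℕ → Ω} (h : TailRel Ω s t) : crep s = crep t := by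
  have hset : {u | TailRel Ω s u ∧ EP u} = {u | TailRel Ω t u ∧ EP u} := by
    ext u
    exact and_congr_left fun _ =>
      ⟨fun h1 => tailRel_trans (tailRel_symm h) h1, fun h1 => tailRel_trans h h1⟩
  rw [crep, crep, hset]

lemma crep_rel {s t : ℕ → Ω} (hs : EP s) (ht : EP t) (h : crep s = crep t) :
    TailRel Ω s t := by
  have h1 : (code '' {u | TailRel Ω s u ∧ EP u}).Nonempty :=
    ⟨code s, s, ⟨tailRel_refl s, hs⟩, rfl⟩
  have h2 : (code '' {u | TailRel Ω t u ∧ EP u}).Nonempty :=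
    ⟨code t, t, ⟨tailRel_refl t, ht⟩, rfl⟩
  obtain ⟨u1, hu1, he1⟩ := Nat.sInf_mem h1
  obtain ⟨u2, hu2, he2⟩ := Nat.sInf_mem h2
  rw [← crep] at he1 he2
  have : code u1 = code u2 := by rw [he1, he2, h]
  have hu12 : u1 = u2 := code_injOn hu1.2 hu2.2 this
  exact tailRel_trans hu1.1 (hu12 ▸ tailRel_symm hu2.1)

/-! ### The equivalence relations -/

noncomputable def epR (n : ℕ) (s : ℕ → Ω) : ℕ :=
  if code s ≤ n then 2 * crep s else 2 * code s + 1

noncomputable def R (n : ℕ) (s : ℕ → Ω) : ℕ × (ℕ → Ω) × (ℕ → ℕ) :=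
  if EP s then (0, fun _ => Classical.arbitrary Ω, fun _ => epR n s)
  else (1, tl n s, tags n s)

lemma R_eq_iff {n : ℕ} {x y : ℕ → Ω} :
    R n x = R n y ↔ ((EP x ∧ EP y ∧ epR n x = epR n y) ∨
      (¬ EP x ∧ ¬ EP y ∧ tl n x = tl n y ∧ tags n x = tags n y)) := by
  by_cases hx : EP x <;> by_cases hy : EP y <;>
    simp [R, hx, hy, Prod.ext_iff, funext_iff]

/-! ### Monotonicity -/

lemma tags_step' {n m : ℕ} {x y : ℕ → Ω}
    (ht : tags n x m = tags n y m) (hm : 1 ≤ m) (hmn : m ≤ n) :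
    tags (n + 1) x m = tags (n + 1) y m := by
  simp only [tags] at ht ⊢
  split_ifs at ht ⊢ <;> omega

lemma R_mono {n : ℕ} {x y : ℕ → Ω} (h : R n x = R n y) : R (n + 1) x = R (n + 1) y := by
  rw [R_eq_iff] at h ⊢
  rcases h with ⟨hx, hy, he⟩ | ⟨hx, hy, htl, htg⟩
  · left
    refine ⟨hx, hy, ?_⟩
    simp only [epR] at he ⊢
    by_cases hcx : code x ≤ n <;> by_cases hcy : code y ≤ n
    · rw [if_pos hcx, if_pos hcy] at he
      rw [if_pos (by omega : code x ≤ n + 1), if_pos (by omega : code y ≤ n + 1)]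
      exact he
    · rw [if_pos hcx, if_neg hcy] at he; omega
    · rw [if_neg hcx, if_pos hcy] at he; omega
    · rw [if_neg hcx, if_neg hcy] at he
      have hcode : code x = code y := by omega
      have hxy : x = y := code_injOn hx hy hcode
      subst hxy; rfl
  · right
    have hD : DD (n + 1) x = DD (n + 1) y := by
      rw [DD, DD]
      simp only [Nat.add_sub_cancel]
      rw [htl]
    refine ⟨hx, hy, ?_, ?_⟩
    · rw [tl_succ, tl_succ, htl, hD]
    · funext m
      by_cases hm1 : 1 ≤ m
      · by_cases hmn : m ≤ n
        · exact tags_step' (congrFun htg m) hm1 hmn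
        · by_cases hmn1 : m = n + 1
          · subst hmn1
            simp only [tags, hD]
          · simp only [tags]
            rw [if_neg (by omega), if_neg (by omega)]
      · simp only [tags]
        rw [if_neg (by omega), if_neg (by omega)]

/-! ### Finiteness of classes -/

lemma KK_le_succ (n : ℕ) (s : ℕ → Ω) : KK n s ≤ KK (n + 1) s := Nat.le_add_right _ _

lemma KK_mono (s : ℕ → Ω) : Monotone fun n => KK n s :=
  monotone_nat_of_le_succ fun n => KK_le_succ n s

lemma exists_stage {s : ℕ → Ω} {j n : ℕ} (hj : j < KK n s) :
    ∃ m, m < n ∧ KK m s ≤ j ∧ j < KK (m + 1) s := by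
  induction n with
  | zero => simp [KK] at hj
  | succ n ih =>
    by_cases h2 : j < KK n s
    · obtain ⟨m, h3, h4, h5⟩ := ih h2
      exact ⟨m, by omega, h4, h5⟩
    · exact ⟨n, by omega, by omega, hj⟩

lemma idx_le_ff (v : ℕ → Ω) : idx (v 0) ≤ ff v := le_max_left _ _

lemma idx_lt_of_lt_KK {s : ℕ → Ω} (hs : ¬ EP s) {n j : ℕ} (hj : j < KK n s) :
    idx (s j) < n := by
  obtain ⟨m, hmn, h1, h2⟩ := exists_stage hj
  have hK : KK (m + 1) s = KK m s + dd (m + 1) (tl m s) := rfl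
  have hlt : j - KK m s < dd (m + 1) (tl m s) := by omega
  have hm := dd_min (NEP_tl hs m) (m + 1) hlt
  have hsh : sh (j - KK m s) (tl m s) = sh j s := by
    have harith : KK m s + (j - KK m s) = j := by omega
    rw [tl, sh_sh, harith]
  rw [hsh] at hm
  have hidx : idx (s j) ≤ ff (sh j s) := by
    have h0 : (sh j s) 0 = s j := by simp [sh]
    have := idx_le_ff (sh j s)
    rw [h0] at this
    exact this
  omega

lemma KK_eq_sum (n : ℕ) (s : ℕ → Ω) :
    KK n s = ∑ m ∈ Finset.range n, DD (m + 1) s := by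
  induction n with
  | zero => rfl
  | succ n ih => rw [Finset.sum_range_succ, ← ih, KK_succ]

lemma DD_le_of_tags {n m : ℕ} {x y : ℕ → Ω}
    (ht : tags n x m = tags n y m) (hm1 : 1 ≤ m) (hmn : m ≤ n) :
    DD m y ≤ tags n x m + n := by
  simp only [tags] at ht ⊢
  split_ifs at ht ⊢ <;> omega

lemma reconstruct (y : ℕ → Ω) (n : ℕ) :
    y = app (List.ofFn (fun i : Fin (KK n y) => y i)) (tl n y) := by
  funext i
  simp only [app, List.length_ofFn]
  split
  · next hi => simp [List.get_ofFn]
  · next hi =>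
    simp only [tl, sh]
    congr 1
    omega

lemma small_letters_finite (n : ℕ) : ({a : Ω | idx a < n}).Finite := by
  have h1 : {a : Ω | idx a < n} = idx ⁻¹' (Set.Iio n) := rfl
  rw [h1]
  exact Set.Finite.preimage (Set.injOn_of_injective idx_inj) (Set.finite_Iio n)

lemma finite_smallwords (n B : ℕ) :
    {w : List Ω | w.length ≤ B ∧ ∀ a ∈ w, idx a < n}.Finite := by
  induction B with
  | zero =>
    apply Set.Finite.subset (Set.finite_singleton ([] : List Ω))
    rintro w ⟨h1, _⟩
    simp [List.length_eq_zero_iff.1 (by omega : w.length = 0)]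
  | succ B ih =>
    apply Set.Finite.subset (((Set.finite_singleton ([] : List Ω)).union
      (((small_letters_finite n).prod ih).image (fun p : Ω × List Ω => p.1 :: p.2))))
    rintro w ⟨h1, h2⟩
    cases w with
    | nil => left; rfl
    | cons a w' =>
      right
      refine ⟨(a, w'), ⟨h2 a (by simp), ?_, fun b hb => h2 b (by simp [hb])⟩, rfl⟩
      show w'.length ≤ B
      simp only [List.length_cons] at h1
      omega

lemma class_finite (n : ℕ) (x : ℕ → Ω) : {y | R n x = R n y}.Finite := by
  by_cases hx : EP x
  · have hfin : {y : ℕ → Ω | EP y ∧ code y ≤ n}.Finite := by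
      have hsub : {y : ℕ → Ω | EP y ∧ code y ≤ n} ⊆
          ⋃ v ∈ Set.Iic n, {y : ℕ → Ω | EP y ∧ code y = v} := by
        rintro y ⟨h1, h2⟩
        exact Set.mem_biUnion h2 ⟨h1, rfl⟩
      refine Set.Finite.subset (Set.Finite.biUnion (Set.finite_Iic n) fun v _ => ?_) hsub
      apply Set.Subsingleton.finite
      rintro y ⟨hy1, hy2⟩ z ⟨hz1, hz2⟩
      exact code_injOn hy1 hz1 (hy2.trans hz2.symm)
    apply Set.Finite.subset (hfin.union (Set.finite_singleton x))
    intro y hy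
    rw [Set.mem_setOf_eq, R_eq_iff] at hy
    rcases hy with ⟨_, hy2, he⟩ | ⟨hx2, _, _⟩
    · simp only [epR] at he
      by_cases hcy : code y ≤ n
      · exact Or.inl ⟨hy2, hcy⟩
      · rw [if_neg hcy] at he
        by_cases hcx : code x ≤ n
        · rw [if_pos hcx] at he; omega
        · rw [if_neg hcx] at he
          right
          have : code x = code y := by omega
          exact (code_injOn hx hy2 this).symm
    · exact absurd hx hx2
  · set B := ∑ m ∈ Finset.range n, (tags n x (m + 1) + n) with hB
    apply Set.Finite.subset ((finite_smallwords n B).image (fun w => app w (tl n x)))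
    intro y hy
    rw [Set.mem_setOf_eq, R_eq_iff] at hy
    rcases hy with ⟨hx2, _, _⟩ | ⟨_, hy2, htl, htg⟩
    · exact absurd hx2 hx
    refine ⟨List.ofFn (fun i : Fin (KK n y) => y i), ⟨?_, ?_⟩, ?_⟩
    · rw [List.length_ofFn, KK_eq_sum]
      apply Finset.sum_le_sum
      intro m hm
      rw [Finset.mem_range] at hm
      exact DD_le_of_tags (congrFun htg (m + 1)) (by omega) (by omega)
    · intro a ha
      rw [List.mem_ofFn] at ha
      obtain ⟨i, rfl⟩ := ha
      exact idx_lt_of_lt_KK hy2 i.2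
    · rw [htl]
      exact (reconstruct y n).symm

/-! ### Measurability -/

lemma meas_sh (k : ℕ) : Measurable (sh k : (ℕ → Ω) → (ℕ → Ω)) :=
  measurable_pi_lambda _ fun i => measurable_pi_apply (k + i)

lemma meas_comp_nat {β : Type*} [MeasurableSpace β] {g : (ℕ → Ω) → ℕ} (hg : Measurable g)
    {F : ℕ → (ℕ → Ω) → β} (hF : ∀ k, Measurable (F k)) :
    Measurable fun s => F (g s) s := by
  intro A hA
  have h : (fun s => F (g s) s) ⁻¹' A = ⋃ k, (g ⁻¹' {k}) ∩ (F k ⁻¹' A) := by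
    ext s
    simp only [Set.mem_preimage, Set.mem_iUnion, Set.mem_inter_iff, Set.mem_singleton_iff]
    constructor
    · intro hs; exact ⟨g s, rfl, hs⟩
    · rintro ⟨k, hk, hs⟩; rwa [hk]
  rw [h]
  exact MeasurableSet.iUnion fun k => (hg (measurableSet_singleton k)).inter (hF k hA)

lemma measSet_coordVal (i : ℕ) (c : Ω) : MeasurableSet {u : ℕ → Ω | u i = c} := by
  have h : {u : ℕ → Ω | u i = c} = (fun u : ℕ → Ω => u i) ⁻¹' {c} := rfl
  rw [h]
  exact (measurable_pi_apply i) (measurableSet_singleton c)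

lemma measSet_constProp (P : Prop) : MeasurableSet {u : ℕ → Ω | P} := by
  by_cases hP : P
  · have h : {u : ℕ → Ω | P} = Set.univ := by ext u; simp [hP]
    rw [h]; exact MeasurableSet.univ
  · have h : {u : ℕ → Ω | P} = ∅ := by ext u; simp [hP]
    rw [h]; exact MeasurableSet.empty

lemma measSet_wordAt (k : ℕ) (w : List Ω) : MeasurableSet {u : ℕ → Ω | wordAt u k w} := by
  have h : {u : ℕ → Ω | wordAt u k w}
      = ⋂ i : Fin w.length, {u : ℕ → Ω | u (k + i.1) = w[i.1]} := by
    ext u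
    simp only [Set.mem_setOf_eq, Set.mem_iInter, wordAt]
    exact ⟨fun h i => h i.1 i.2, fun h i hi => h ⟨i, hi⟩⟩
  rw [h]
  exact MeasurableSet.iInter fun i => measSet_coordVal _ _

lemma measSet_IOcc (w : List Ω) : MeasurableSet {u : ℕ → Ω | IOcc u w} := by
  have h : {u : ℕ → Ω | IOcc u w}
      = ⋂ N, ⋃ k, ⋃ (_ : N ≤ k), {u : ℕ → Ω | wordAt u k w} := by
    ext u
    simp only [Set.mem_setOf_eq, Set.mem_iInter, Set.mem_iUnion, IOcc]
    exact ⟨fun h N => (h N).imp fun k hk => ⟨hk.1, hk.2⟩,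
      fun h N => (h N).imp fun k hk => ⟨hk.1, hk.2⟩⟩
  rw [h]
  exact MeasurableSet.iInter fun N => MeasurableSet.iUnion fun k =>
    MeasurableSet.iUnion fun _ => measSet_wordAt k w

lemma pick_of_empty {S : Set Ω} (h : ¬ S.Nonempty) : pick S = Classical.arbitrary Ω := by
  rw [pick, dif_neg]
  rintro ⟨a, ha, -⟩
  exact h ⟨a, ha⟩

lemma measSet_pick (w' : List Ω) (c : Ω) :
    MeasurableSet {u : ℕ → Ω | pick {a | IOcc u (w' ++ [a])} = c} := by
  have hexm : MeasurableSet {u : ℕ → Ω | ∃ a, IOcc u (w' ++ [a])} := by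
    have hex : {u : ℕ → Ω | ∃ a, IOcc u (w' ++ [a])}
        = ⋃ a : Ω, {u : ℕ → Ω | IOcc u (w' ++ [a])} := by
      ext u; simp
    rw [hex]
    exact MeasurableSet.iUnion fun a => measSet_IOcc _
  have h : {u : ℕ → Ω | pick {a | IOcc u (w' ++ [a])} = c}
      = (({u : ℕ → Ω | ∃ a, IOcc u (w' ++ [a])}) ∩ ({u | IOcc u (w' ++ [c])}
          ∩ ⋂ b : Ω, {u : ℕ → Ω | IOcc u (w' ++ [b]) → idx c ≤ idx b}))
        ∪ (({u : ℕ → Ω | ∃ a, IOcc u (w' ++ [a])})ᶜ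
            ∩ {u : ℕ → Ω | c = Classical.arbitrary Ω}) := by
    ext u
    by_cases hne : ∃ a, IOcc u (w' ++ [a])
    · have hne' : {a | IOcc u (w' ++ [a])}.Nonempty := hne
      simp only [Set.mem_setOf_eq, Set.mem_union, Set.mem_inter_iff, Set.mem_iInter,
        Set.mem_compl_iff, hne, not_true_eq_false, false_and, or_false, true_and]
      rw [pick_eq_iff hne']
      exact ⟨fun ⟨h1, h2⟩ => ⟨h1, fun b hb => h2 b hb⟩, fun ⟨h1, h2⟩ => ⟨h1, fun b hb => h2 b hb⟩⟩
    · have hpe := pick_of_empty (S := {a | IOcc u (w' ++ [a])}) (fun hn => hne hn)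
      simp only [Set.mem_setOf_eq, Set.mem_union, Set.mem_inter_iff, Set.mem_iInter,
        Set.mem_compl_iff, hne, false_and, false_or, not_false_iff, true_and]
      rw [hpe]
      exact ⟨fun h1 => h1.symm, fun h1 => h1.symm⟩
  rw [h]
  refine MeasurableSet.union ?_ ?_
  · refine MeasurableSet.inter hexm
      (MeasurableSet.inter (measSet_IOcc _) (MeasurableSet.iInter fun b => ?_))
    by_cases hcb : idx c ≤ idx b
    · have he : {u : ℕ → Ω | IOcc u (w' ++ [b]) → idx c ≤ idx b} = Set.univ := by
        ext u; simp [hcb]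
      rw [he]; exact MeasurableSet.univ
    · have he : {u : ℕ → Ω | IOcc u (w' ++ [b]) → idx c ≤ idx b}
          = {u : ℕ → Ω | IOcc u (w' ++ [b])}ᶜ := by
        ext u; simp [hcb]
      rw [he]; exact (measSet_IOcc _).compl
  · exact hexm.compl.inter (measSet_constProp _)

lemma measSet_thread (m : ℕ) (w : List Ω) :
    MeasurableSet {u : ℕ → Ω | thread u m = w} := by
  induction m generalizing w with
  | zero =>
    by_cases hw : ([] : List Ω) = w
    · have h : {u : ℕ → Ω | thread u 0 = w} = Set.univ := by
        ext u; simpa [thread] using hw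
      rw [h]; exact MeasurableSet.univ
    · have h : {u : ℕ → Ω | thread u 0 = w} = ∅ := by
        ext u; simpa [thread] using hw
      rw [h]; exact MeasurableSet.empty
  | succ m ih =>
    have h : {u : ℕ → Ω | thread u (m + 1) = w}
        = ⋃ q : List Ω × Ω, ⋃ (_ : w = q.1 ++ [q.2]),
            ({u : ℕ → Ω | thread u m = q.1}
              ∩ {u : ℕ → Ω | pick {a | IOcc u (q.1 ++ [a])} = q.2}) := by
      ext u
      simp only [Set.mem_setOf_eq, Set.mem_iUnion, Set.mem_inter_iff]
      constructor
      · intro hu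
        refine ⟨(thread u m, pick {a | IOcc u (thread u m ++ [a])}), ?_, rfl, rfl⟩
        rw [← hu]
        rfl
      · rintro ⟨⟨w', b⟩, hq, h1, h2⟩
        simp only at hq h1 h2
        rw [← h1] at h2
        rw [hq, ← h1, ← h2]
        rfl
    rw [h]
    exact MeasurableSet.iUnion fun q => MeasurableSet.iUnion fun _ =>
      (ih q.1).inter (measSet_pick q.1 q.2)

lemma measSet_SsetMem (m : ℕ) :
    MeasurableSet {u : ℕ → Ω | wordAt u 0 (thread u m)} := by
  have h : {u : ℕ → Ω | wordAt u 0 (thread u m)}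
      = ⋃ w : List Ω, {u : ℕ → Ω | thread u m = w} ∩ {u : ℕ → Ω | wordAt u 0 w} := by
    ext u
    simp only [Set.mem_setOf_eq, Set.mem_iUnion, Set.mem_inter_iff]
    exact ⟨fun h => ⟨thread u m, rfl, h⟩, fun ⟨w, h1, h2⟩ => h1 ▸ h2⟩
  rw [h]
  exact MeasurableSet.iUnion fun w => (measSet_thread m w).inter (measSet_wordAt 0 w)

lemma zero_mem_Sset (u : ℕ → Ω) : wordAt u 0 (thread u 0) := wordAt_nil u 0

lemma meas_fB : Measurable (fB : (ℕ → Ω) → ℕ) := by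
  have hBdd : MeasurableSet {u : ℕ → Ω | BddAbove {m | wordAt u 0 (thread u m)}} := by
    have h : {u : ℕ → Ω | BddAbove {m | wordAt u 0 (thread u m)}}
        = ⋃ N, ⋂ m, ⋂ (_ : N < m), {u : ℕ → Ω | wordAt u 0 (thread u m)}ᶜ := by
      ext u
      simp only [Set.mem_setOf_eq, Set.mem_iUnion, Set.mem_iInter, Set.mem_compl_iff]
      constructor
      · rintro ⟨N, hN⟩
        exact ⟨N, fun m hm hmem => absurd (hN hmem) (by omega)⟩
      · rintro ⟨N, hN⟩
        refine ⟨N, fun m hm => ?_⟩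
        by_contra hc
        exact hN m (by omega) hm
    rw [h]
    exact MeasurableSet.iUnion fun N => MeasurableSet.iInter fun m =>
      MeasurableSet.iInter fun _ => (measSet_SsetMem m).compl
  apply measurable_to_countable'
  intro v
  have h : fB ⁻¹' {v}
      = ({u : ℕ → Ω | BddAbove {m | wordAt u 0 (thread u m)}}
          ∩ ({u : ℕ → Ω | wordAt u 0 (thread u v)}
            ∩ ⋂ m, ⋂ (_ : v < m), {u : ℕ → Ω | wordAt u 0 (thread u m)}ᶜ))
        ∪ ({u : ℕ → Ω | BddAbove {m | wordAt u 0 (thread u m)}}ᶜ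
            ∩ {u : ℕ → Ω | v = 0}) := by
    ext u
    by_cases hb : BddAbove {m | wordAt u 0 (thread u m)}
    · have hne : {m | wordAt u 0 (thread u m)}.Nonempty := ⟨0, zero_mem_Sset u⟩
      have hsup := Nat.sSup_mem hne hb
      simp only [Set.mem_preimage, Set.mem_singleton_iff, Set.mem_union, Set.mem_inter_iff,
        Set.mem_setOf_eq, Set.mem_iInter, Set.mem_compl_iff, hb, not_true, false_and, or_false,
        true_and]
      rw [fB, if_pos hb]
      constructor
      · rintro rfl
        refine ⟨hsup, fun m hm hmem => ?_⟩
        exact absurd (le_csSup hb hmem) (by omega)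
      · rintro ⟨h1, h2⟩
        refine le_antisymm ?_ (le_csSup hb h1)
        by_contra hc
        push_neg at hc
        exact h2 _ hc hsup
    · simp only [Set.mem_preimage, Set.mem_singleton_iff, Set.mem_union, Set.mem_inter_iff,
        Set.mem_setOf_eq, Set.mem_compl_iff, hb, false_and, false_or, not_false_iff, true_and]
      rw [fB, if_neg hb]
      exact ⟨fun h1 => h1.symm, fun h1 => h1.symm⟩
  rw [h]
  exact MeasurableSet.union (hBdd.inter (MeasurableSet.inter (measSet_SsetMem v)
    (MeasurableSet.iInter fun m => MeasurableSet.iInter fun _ => (measSet_SsetMem m).compl)))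
    (hBdd.compl.inter (measSet_constProp _))

lemma meas_ff : Measurable (ff : (ℕ → Ω) → ℕ) := by
  apply Measurable.max ?_ meas_fB
  exact (measurable_of_countable idx).comp (measurable_pi_apply 0)

lemma meas_dd (m : ℕ) : Measurable (dd m : (ℕ → Ω) → ℕ) := by
  apply measurable_to_countable'
  intro v
  have hmeas : ∀ k, MeasurableSet {u : ℕ → Ω | m ≤ ff (sh k u)} := fun k =>
    (meas_ff.comp (meas_sh k)) measurableSet_Ici
  have h : dd m ⁻¹' {v}
      = (({u : ℕ → Ω | ∃ k, m ≤ ff (sh k u)}) ∩ ({u : ℕ → Ω | m ≤ ff (sh v u)}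
          ∩ ⋂ i, ⋂ (_ : i < v), {u : ℕ → Ω | m ≤ ff (sh i u)}ᶜ))
        ∪ (({u : ℕ → Ω | ∃ k, m ≤ ff (sh k u)})ᶜ
            ∩ {u : ℕ → Ω | v = 0}) := by
    ext u
    by_cases he : ∃ k, m ≤ ff (sh k u)
    · simp only [Set.mem_preimage, Set.mem_singleton_iff, Set.mem_union, Set.mem_inter_iff,
        Set.mem_setOf_eq, Set.mem_iInter, Set.mem_compl_iff, he, not_true, false_and, or_false,
        true_and]
      rw [dd, dif_pos he, Nat.find_eq_iff he]
    · simp only [Set.mem_preimage, Set.mem_singleton_iff, Set.mem_union, Set.mem_inter_iff,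
        Set.mem_setOf_eq, Set.mem_compl_iff, he, false_and, false_or, not_false_iff, true_and]
      rw [dd, dif_neg he]
      exact ⟨fun h1 => h1.symm, fun h1 => h1.symm⟩
  have hexm : MeasurableSet {u : ℕ → Ω | ∃ k, m ≤ ff (sh k u)} := by
    have hex : {u : ℕ → Ω | ∃ k, m ≤ ff (sh k u)}
        = ⋃ k, {u : ℕ → Ω | m ≤ ff (sh k u)} := by
      ext u; simp
    rw [hex]
    exact MeasurableSet.iUnion fun k => hmeas k
  rw [h]
  exact MeasurableSet.union (hexm.inter
    (MeasurableSet.inter (hmeas v)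
      (MeasurableSet.iInter fun i => MeasurableSet.iInter fun _ => (hmeas i).compl)))
    (hexm.compl.inter (measSet_constProp _))

lemma meas_KK (n : ℕ) : Measurable (fun s => KK n s : (ℕ → Ω) → ℕ) := by
  induction n with
  | zero =>
    have h : (fun s => KK 0 s : (ℕ → Ω) → ℕ) = fun _ => 0 := rfl
    rw [h]; exact measurable_const
  | succ n ih =>
    have h2 : Measurable fun s => dd (n + 1) (sh (KK n s) s) :=
      meas_comp_nat ih fun k => (meas_dd (n + 1)).comp (meas_sh k)
    exact ih.add h2

lemma meas_DD (m : ℕ) : Measurable (fun s => DD m s : (ℕ → Ω) → ℕ) := by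
  have h : (fun s => DD m s : (ℕ → Ω) → ℕ)
      = fun s => dd m (sh (KK (m - 1) s) s) := rfl
  rw [h]
  exact meas_comp_nat (meas_KK (m - 1)) fun k => (meas_dd m).comp (meas_sh k)

lemma meas_tags (n m : ℕ) : Measurable (fun s => tags n s m : (ℕ → Ω) → ℕ) := by
  have hcond : MeasurableSet {s : ℕ → Ω | 1 ≤ m ∧ m ≤ n ∧ n < m + DD m s} := by
    by_cases h1 : 1 ≤ m ∧ m ≤ n
    · have h : {s : ℕ → Ω | 1 ≤ m ∧ m ≤ n ∧ n < m + DD m s}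
          = (fun s => DD m s) ⁻¹' {d | n < m + d} := by
        ext s; simp [h1.1, h1.2]
      rw [h]
      exact (meas_DD m) (Set.Countable.measurableSet (Set.to_countable _))
    · have h : {s : ℕ → Ω | 1 ≤ m ∧ m ≤ n ∧ n < m + DD m s} = ∅ := by
        ext s; simp only [Set.mem_setOf_eq, Set.mem_empty_iff_false, iff_false]
        rintro ⟨hh1, hh2, -⟩
        exact h1 ⟨hh1, hh2⟩
      rw [h]; exact MeasurableSet.empty
  exact Measurable.ite hcond (meas_DD m) measurable_const

lemma measSet_tlEq (n : ℕ) :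
    MeasurableSet {p : (ℕ → Ω) × (ℕ → Ω) | tl n p.1 = tl n p.2} := by
  have h : {p : (ℕ → Ω) × (ℕ → Ω) | tl n p.1 = tl n p.2}
      = ⋃ k, ⋃ l, (((fun p : (ℕ → Ω) × (ℕ → Ω) => KK n p.1) ⁻¹' {k})
          ∩ ((fun p : (ℕ → Ω) × (ℕ → Ω) => KK n p.2) ⁻¹' {l})
          ∩ ⋂ i, {p : (ℕ → Ω) × (ℕ → Ω) | p.1 (k + i) = p.2 (l + i)}) := by
    ext p
    simp only [Set.mem_setOf_eq, Set.mem_iUnion, Set.mem_inter_iff, Set.mem_preimage,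
      Set.mem_singleton_iff, Set.mem_iInter]
    constructor
    · intro hp
      exact ⟨KK n p.1, KK n p.2, ⟨rfl, rfl⟩, fun i => congrFun hp i⟩
    · rintro ⟨k, l, ⟨hk, hl⟩, hcoord⟩
      funext i
      have := hcoord i
      rw [tl, tl, hk, hl]
      exact this
  rw [h]
  refine MeasurableSet.iUnion fun k => MeasurableSet.iUnion fun l =>
    MeasurableSet.inter (MeasurableSet.inter ?_ ?_) (MeasurableSet.iInter fun i =>
      measSet_coordEq (k + i) (l + i))
  · exact ((meas_KK n).comp measurable_fst) (measurableSet_singleton k)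
  · exact ((meas_KK n).comp measurable_snd) (measurableSet_singleton l)

lemma measSet_tagsEq (n : ℕ) :
    MeasurableSet {p : (ℕ → Ω) × (ℕ → Ω) | tags n p.1 = tags n p.2} := by
  have h : {p : (ℕ → Ω) × (ℕ → Ω) | tags n p.1 = tags n p.2}
      = ⋂ m, ⋃ v, (((fun p : (ℕ → Ω) × (ℕ → Ω) => tags n p.1 m) ⁻¹' {v})
          ∩ ((fun p : (ℕ → Ω) × (ℕ → Ω) => tags n p.2 m) ⁻¹' {v})) := by
    ext p
    simp only [Set.mem_setOf_eq, Set.mem_iInter, Set.mem_iUnion, Set.mem_inter_iff,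
      Set.mem_preimage, Set.mem_singleton_iff, funext_iff]
    constructor
    · intro hp m
      exact ⟨tags n p.1 m, rfl, (hp m).symm⟩
    · intro hp m
      obtain ⟨v, h1, h2⟩ := hp m
      rw [h1, h2]
  rw [h]
  refine MeasurableSet.iInter fun m => MeasurableSet.iUnion fun v =>
    MeasurableSet.inter ?_ ?_
  · exact ((meas_tags n m).comp measurable_fst) (measurableSet_singleton v)
  · exact ((meas_tags n m).comp measurable_snd) (measurableSet_singleton v)

lemma meas_Rker (n : ℕ) :
    MeasurableSet {p : (ℕ → Ω) × (ℕ → Ω) | R n p.1 = R n p.2} := by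
  have hEP : MeasurableSet {s : ℕ → Ω | EP s} := EP_countable.measurableSet
  have h : {p : (ℕ → Ω) × (ℕ → Ω) | R n p.1 = R n p.2}
      = ({p : (ℕ → Ω) × (ℕ → Ω) | EP p.1 ∧ EP p.2 ∧ epR n p.1 = epR n p.2})
        ∪ (((fun p : (ℕ → Ω) × (ℕ → Ω) => p.1) ⁻¹' {s | EP s})ᶜ
            ∩ ((fun p : (ℕ → Ω) × (ℕ → Ω) => p.2) ⁻¹' {s | EP s})ᶜ
            ∩ {p : (ℕ → Ω) × (ℕ → Ω) | tl n p.1 = tl n p.2}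
            ∩ {p : (ℕ → Ω) × (ℕ → Ω) | tags n p.1 = tags n p.2}) := by
    ext p
    simp only [Set.mem_setOf_eq, Set.mem_union, Set.mem_inter_iff, Set.mem_compl_iff,
      Set.mem_preimage, R_eq_iff]
    constructor
    · rintro (⟨h1, h2, h3⟩ | ⟨h1, h2, h3, h4⟩)
      · exact Or.inl ⟨h1, h2, h3⟩
      · exact Or.inr ⟨⟨⟨h1, h2⟩, h3⟩, h4⟩
    · rintro (⟨h1, h2, h3⟩ | ⟨⟨⟨h1, h2⟩, h3⟩, h4⟩)
      · exact Or.inl ⟨h1, h2, h3⟩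
      · exact Or.inr ⟨h1, h2, h3, h4⟩
  rw [h]
  refine MeasurableSet.union ?_ ?_
  · apply Set.Countable.measurableSet
    apply Set.Countable.mono (s₂ := {s : ℕ → Ω | EP s} ×ˢ {s : ℕ → Ω | EP s})
    · rintro p ⟨h1, h2, -⟩
      exact ⟨h1, h2⟩
    · exact EP_countable.prod EP_countable
  · exact (((measurable_fst hEP).compl.inter (measurable_snd hEP).compl).inter
      (measSet_tlEq n)).inter (measSet_tagsEq n)

/-! ### Exhaustion -/

lemma mono_stabilize {x : ℕ → ℕ} (hmono : ∀ n, x n ≤ x (n + 1)) {C : ℕ}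
    (hbd : ∀ n, x n ≤ C) : ∃ N, ∀ n, N ≤ n → x n = x N := by
  have hm : Monotone x := monotone_nat_of_le_succ hmono
  have h1 : (Set.range x).Nonempty := ⟨x 0, 0, rfl⟩
  have h2 : BddAbove (Set.range x) := ⟨C, by rintro v ⟨n, rfl⟩; exact hbd n⟩
  obtain ⟨N, hN⟩ := Nat.sSup_mem h1 h2
  refine ⟨N, fun n hn => le_antisymm ?_ (hm hn)⟩
  rw [hN]
  exact le_csSup h2 ⟨n, rfl⟩

/-- The abstract chain-merging lemma: two greedy marker-chasing chains over a common
rank field eventually meet. -/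
lemma chainMerge {G : ℕ → ℕ} {L : ℕ → ℕ} (hL : StrictMono L) {x y : ℕ → ℕ}
    (hxm : ∀ n, x n ≤ x (n + 1)) (hym : ∀ n, y n ≤ y (n + 1))
    (hxG : ∀ n, L (n + 1) ≤ G (x (n + 1))) (hyG : ∀ n, L (n + 1) ≤ G (y (n + 1)))
    (hxmin : ∀ n ρ, x n ≤ ρ → ρ < x (n + 1) → G ρ < L (n + 1))
    (hymin : ∀ n ρ, y n ≤ ρ → ρ < y (n + 1) → G ρ < L (n + 1))
    (h0 : x 0 ≤ y 0) : ∃ n, x n = y n := by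
  by_contra hc
  push_neg at hc
  have hle : ∀ n, x n ≤ y n := by
    intro n
    induction n with
    | zero => exact h0
    | succ n ih =>
      by_contra hlt
      push_neg at hlt
      have h1 : x n ≤ y (n + 1) := le_trans ih (hym n)
      exact absurd (hyG n) (not_le.2 (hxmin n (y (n + 1)) h1 hlt))
  have hlt : ∀ n, x n < y n := fun n => lt_of_le_of_ne (hle n) (hc n)
  have hclaim : ∀ d m, x (m + d + 1) < y m := by
    intro d
    induction d with
    | zero =>
      intro m
      by_contra hge
      push_neg at hge
      exact absurd (hxG m) (not_le.2 (hymin m (x (m + 1)) hge (hlt (m + 1))))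
    | succ d ih =>
      intro m
      have h1 := ih (m + 1)
      rw [show m + 1 + d + 1 = m + (d + 1) + 1 by omega] at h1
      by_contra hge
      push_neg at hge
      have h2 : G (x (m + (d + 1) + 1)) < L (m + 1) :=
        hymin m (x (m + (d + 1) + 1)) hge h1
      have h3 : L (m + (d + 1) + 1) ≤ G (x (m + (d + 1) + 1)) := by
        have := hxG (m + (d + 1))
        exact this
      have h4 : L (m + 1) ≤ L (m + (d + 1) + 1) := hL.monotone (by omega)
      omega
  have hbd : ∀ n, x n ≤ y 0 := by
    intro n
    cases n with
    | zero => exact h0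
    | succ n =>
      have := hclaim n 0
      rw [show 0 + n + 1 = n + 1 by omega] at this
      omega
  obtain ⟨N, hN⟩ := mono_stabilize hxm hbd
  have hcontra : ∀ n, N ≤ n → L (n + 1) ≤ G (x N) := by
    intro n hn
    have h1 := hxG n
    rw [hN (n + 1) (by omega)] at h1
    exact h1
  have hub := hcontra (max N (G (x N))) (le_max_left _ _)
  have hid : max N (G (x N)) + 1 ≤ L (max N (G (x N)) + 1) := hL.le_apply
  omega

lemma KK_unbounded {s : ℕ → Ω} (hs : ¬ EP s) (P : ℕ) : ∃ n, P ≤ KK n s := by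
  by_contra hcon
  push_neg at hcon
  obtain ⟨N, hN⟩ := mono_stabilize (fun n => KK_le_succ n s) (fun n => le_of_lt (hcon n))
  have hff : ∀ n, N ≤ n → n + 1 ≤ ff (tl N s) := by
    intro n hn
    have h1 := hN (n + 1) (by omega)
    have h2 := hN n hn
    have h3 : KK (n + 1) s = KK n s + dd (n + 1) (tl n s) := rfl
    have htl : tl n s = tl N s := by rw [tl, tl, h2]
    rw [htl] at h3
    have hdd0 : dd (n + 1) (tl N s) = 0 := by omega
    have h4 := dd_spec (NEP_tl hs N) (n + 1)
    rw [hdd0] at h4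
    have h5 : sh 0 (tl N s) = tl N s := by
      funext i
      simp [sh]
    rwa [h5] at h4
  have := hff (N + ff (tl N s)) (by omega)
  omega

lemma tl_eq_propagate {x y : ℕ → Ω} {n : ℕ} (h : tl n x = tl n y) :
    ∀ m, n ≤ m → tl m x = tl m y := by
  intro m hm
  induction m with
  | zero =>
    have hn0 : n = 0 := by omega
    subst hn0
    exact h
  | succ m ih =>
    by_cases hc : n = m + 1
    · subst hc
      exact h
    · have h2 := ih (by omega)
      have hD : DD (m + 1) x = DD (m + 1) y := by
        rw [DD, DD]
        simp only [Nat.add_sub_cancel]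
        rw [h2]
      rw [tl_succ, tl_succ, h2, hD]

lemma DD_eq_propagate {x y : ℕ → Ω} {n : ℕ} (h : tl n x = tl n y) :
    ∀ m, n + 1 ≤ m → DD m x = DD m y := by
  intro m hm
  have h2 : tl (m - 1) x = tl (m - 1) y := tl_eq_propagate h (m - 1) (by omega)
  rw [DD, DD, h2]

lemma R_eq_of_tl_eq {x y : ℕ → Ω} (hx : ¬ EP x) (hy : ¬ EP y) {n0 : ℕ}
    (h : tl n0 x = tl n0 y) : ∃ n, R n x = R n y := by
  set M := Finset.sup (Finset.range (n0 + 1)) (fun m => m + max (DD m x) (DD m y)) with hM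
  refine ⟨max n0 M, ?_⟩
  rw [R_eq_iff]
  right
  refine ⟨hx, hy, tl_eq_propagate h _ (le_max_left _ _), ?_⟩
  funext m
  simp only [tags]
  by_cases hm0 : 1 ≤ m
  · by_cases hmn : m ≤ n0
    · have h1 : m + max (DD m x) (DD m y) ≤ M :=
        Finset.le_sup (f := fun m => m + max (DD m x) (DD m y))
          (Finset.mem_range.2 (by omega))
      have h2 : M ≤ max n0 M := le_max_right _ _
      rw [if_neg (by omega), if_neg (by omega)]
    · have hD := DD_eq_propagate h m (by omega)
      rw [hD]
  · rw [if_neg (by omega), if_neg (by omega)]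

lemma union_iff {x y : ℕ → Ω} : TailRel Ω x y ↔ ∃ n, R n x = R n y := by
  constructor
  · intro h
    by_cases hx : EP x
    · have hy : EP y := (EP_congr h).1 hx
      refine ⟨max (code x) (code y), ?_⟩
      rw [R_eq_iff]
      left
      refine ⟨hx, hy, ?_⟩
      simp only [epR]
      rw [if_pos (le_max_left _ _), if_pos (le_max_right _ _), crep_eq_of_rel h]
    · have hy : ¬ EP y := fun h2 => hx ((EP_congr h).2 h2)
      rw [tailRel_iff] at h
      obtain ⟨a, b, hab⟩ := h
      obtain ⟨n1, hn1⟩ := KK_unbounded hx a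
      obtain ⟨n2, hn2⟩ := KK_unbounded hy b
      set N1 := max n1 n2 with hN1
      have hKx : ∀ n, a ≤ KK (N1 + n) x := fun n =>
        le_trans hn1 (KK_mono x (by omega))
      have hKy : ∀ n, b ≤ KK (N1 + n) y := fun n =>
        le_trans hn2 (KK_mono y (by omega))
      set G : ℕ → ℕ := fun ρ => ff (sh ρ (sh a x)) with hG
      set xc : ℕ → ℕ := fun n => KK (N1 + n) x - a with hxc
      set yc : ℕ → ℕ := fun n => KK (N1 + n) y - b with hyc
      set L : ℕ → ℕ := fun n => N1 + n with hL
      have hLs : StrictMono L := fun i j hij => by simp only [hL]; omega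
      -- generic facts for one side
      have hside : ∀ (s : ℕ → Ω) (c : ℕ), (¬ EP s) → (∀ n, c ≤ KK (N1 + n) s) →
          ((∀ n, KK (N1 + n) s - c ≤ KK (N1 + n + 1) s - c) ∧
           (∀ n, L (n + 1) ≤ ff (sh (KK (N1 + n + 1) s - c) (sh c s))) ∧
           (∀ n ρ, KK (N1 + n) s - c ≤ ρ → ρ < KK (N1 + n + 1) s - c →
             ff (sh ρ (sh c s)) < L (n + 1))) := by
        intro s c hsnep hK
        have hshift : ∀ ρ, sh ρ (sh c s) = sh (c + ρ) s := fun ρ => sh_sh ρ c s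
        refine ⟨fun n => by have := KK_le_succ (N1 + n) s; omega, fun n => ?_, fun n ρ h1 h2 => ?_⟩
        · have hspec := dd_spec (NEP_tl hsnep (N1 + n)) (N1 + n + 1)
          have heq : sh (dd (N1 + n + 1) (tl (N1 + n) s)) (tl (N1 + n) s)
              = sh (KK (N1 + n + 1) s) s := by
            rw [tl, sh_sh]
            rfl
          rw [heq] at hspec
          rw [hshift]
          have hk1 : c ≤ KK (N1 + n + 1) s := by
            have h6 := hK (n + 1)
            rwa [show N1 + (n + 1) = N1 + n + 1 by omega] at h6
          have h5 : c + (KK (N1 + n + 1) s - c) = KK (N1 + n + 1) s := by omega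
          rw [h5]
          exact hspec
        · have h3 : KK (N1 + n + 1) s = KK (N1 + n) s + dd (N1 + n + 1) (tl (N1 + n) s) := rfl
          have hklow := hK n
          have hi : c + ρ - KK (N1 + n) s < dd (N1 + n + 1) (tl (N1 + n) s) := by omega
          have hmin := dd_min (NEP_tl hsnep (N1 + n)) (N1 + n + 1) hi
          rw [tl, sh_sh] at hmin
          have h5 : KK (N1 + n) s + (c + ρ - KK (N1 + n) s) = c + ρ := by omega
          rw [h5] at hmin
          rw [hshift]
          exact hmin
      obtain ⟨hxm, hxG, hxmin⟩ := hside x a hx hKx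
      obtain ⟨hym0, hyG0, hymin0⟩ := hside y b hy hKy
      have hGy : ∀ ρ, ff (sh ρ (sh b y)) = G ρ := fun ρ => by rw [hG, hab]
      have hyG : ∀ n, L (n + 1) ≤ G (yc (n + 1)) := fun n => by
        rw [← hGy]
        exact hyG0 n
      have hymin : ∀ n ρ, yc n ≤ ρ → ρ < yc (n + 1) → G ρ < L (n + 1) := fun n ρ h1 h2 => by
        rw [← hGy]
        exact hymin0 n ρ h1 h2
      have hxG' : ∀ n, L (n + 1) ≤ G (xc (n + 1)) := fun n => hxG n
      have hmerge : ∃ n, xc n = yc n := by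
        rcases le_total (xc 0) (yc 0) with h0 | h0
        · exact chainMerge hLs hxm hym0 hxG' hyG hxmin hymin h0
        · obtain ⟨n, hn⟩ := chainMerge hLs hym0 hxm hyG hxG' hymin hxmin h0
          exact ⟨n, hn.symm⟩
      obtain ⟨n, hn⟩ := hmerge
      have htl : tl (N1 + n) x = tl (N1 + n) y := by
        rw [tl, tl]
        have h1 : KK (N1 + n) x = a + xc n := by
          have := hKx n
          simp only [hxc]
          omega
        have h2 : KK (N1 + n) y = b + yc n := by
          have := hKy n
          simp only [hyc]
          omega
        rw [h1, h2, ← sh_sh, ← sh_sh, hab, hn]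
      exact R_eq_of_tl_eq hx hy htl
  · rintro ⟨n, h⟩
    rw [R_eq_iff] at h
    rcases h with ⟨hx, hy, he⟩ | ⟨hx, hy, htl, -⟩
    · simp only [epR] at he
      split_ifs at he with h1 h2 h2
      · exact crep_rel hx hy (by omega)
      · omega
      · omega
      · have hc : code x = code y := by omega
        rw [code_injOn hx hy hc]
        exact tailRel_refl y
    · rw [tailRel_iff]
      exact ⟨KK n x, KK n y, htl⟩

end Main

end Stmt2

open Stmt2 in
/-- for a countable set `Ω` (with the discrete Borel structure), the tail
equivalence relation on `Ω^ℕ` is a hyperfinite countable Borel equivalence relation. -/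
theorem stmt2 (Ω : Type) [Countable Ω] [MeasurableSpace Ω] [MeasurableSingletonClass Ω] :
    Equivalence (TailRel Ω) ∧
    MeasurableSet {p : (ℕ → Ω) × (ℕ → Ω) | TailRel Ω p.1 p.2} ∧
    (∀ s : ℕ → Ω, {t : ℕ → Ω | TailRel Ω s t}.Countable) ∧
    Hyperfinite (TailRel Ω) := by
  refine ⟨equivalence_tailRel, measSet_tailRel, countable_class, ?_⟩
  rcases isEmpty_or_nonempty Ω with hΩ | hΩ
  · have hX : IsEmpty (ℕ → Ω) := ⟨fun s => hΩ.false (s 0)⟩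
    refine ⟨fun _ x y => x = y, fun n => ⟨fun _ => rfl, Eq.symm, Eq.trans⟩, ?_, ?_, ?_, ?_⟩
    · intro n
      have h : {p : (ℕ → Ω) × (ℕ → Ω) | p.1 = p.2} = ∅ := by
        ext p; exact (hX.false p.1).elim
      rw [h]; exact MeasurableSet.empty
    · intro n x; exact hX.elim x
    · intro n x y h; exact h
    · intro x; exact hX.elim x
  · refine ⟨fun n x y => R n x = R n y, fun n => ⟨fun _ => rfl, Eq.symm, Eq.trans⟩,
      meas_Rker, ?_, fun n x y => R_mono, fun x y => union_iff⟩
    intro n x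
    exact class_finite n x
end

section
/- Let Γ be a finite simple graph and X(Γ) the Cayley graph of the right angled Artin group A(Γ) with respect to V(Γ). Let V_A, V_B ⊂ V(Γ) and let A be a coset of ⟨V_A⟩ and B a coset of ⟨V_B⟩ in A(Γ). Then there exists V_{A,B} ⊂ V_A ∩ V_B such that both ρ_A^B and ρ_B^A are cosets of ⟨V_{A,B}⟩. -/
/-- A subset of the vertices of a graph is (combinatorially) convex if every vertex of
every geodesic between two of its points belongs to it. -/
def GraphConvex {V : Type*} (G : SimpleGraph V) (s : Set V) : Prop :=
  ∀ ⦃u v : V⦄, u ∈ s → v ∈ s → ∀ p : G.Walk u v, p.length = G.dist u v →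
    ∀ w ∈ p.support, w ∈ s

variable {V : Type} [Fintype V]

/-- The commutation relators of a right angled Artin group. -/
def raagRels (Γ : SimpleGraph V) : Set (FreeGroup V) :=
  {r | ∃ v w : V, Γ.Adj v w ∧
    r = FreeGroup.of v * FreeGroup.of w * (FreeGroup.of v)⁻¹ * (FreeGroup.of w)⁻¹}

/-- The right angled Artin group `A(Γ)` of a finite simple graph `Γ`. -/
def RAAG (Γ : SimpleGraph V) := PresentedGroup (raagRels Γ)

instance (Γ : SimpleGraph V) : Group (RAAG Γ) := by unfold RAAG; infer_instance

/-- The generator of `A(Γ)` corresponding to a vertex `v` of `Γ`. -/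
def raagGen (Γ : SimpleGraph V) (v : V) : RAAG Γ := PresentedGroup.of v

/-- The Cayley graph `X(Γ)` of `A(Γ)` with respect to the generating set `V(Γ)`
(the `1`-skeleton of the universal cover of the Salvetti complex). -/
def CayG (Γ : SimpleGraph V) : SimpleGraph (RAAG Γ) :=
  SimpleGraph.fromRel (fun g h => ∃ v : V, h = g * raagGen Γ v)

/-- The distance between two subsets of the vertices of a graph. -/
noncomputable def sDist {W : Type*} (G : SimpleGraph W) (A B : Set W) : ℕ :=
  sInf {n : ℕ | ∃ a ∈ A, ∃ b ∈ B, G.dist a b = n}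

/-- The gate `ρ_A^B` of `A` towards `B`: the points of `A` at minimal distance from `B`. -/
noncomputable def gate {W : Type*} (G : SimpleGraph W) (A B : Set W) : Set W :=
  {a ∈ A | sDist G {a} B = sDist G A B}

set_option linter.unusedSectionVars false

namespace S7
open scoped Classical
variable {V : Type} [Fintype V]

def inv (x : V × Bool) : V × Bool := (x.1, !x.2)

@[simp] lemma inv_inv (x : V × Bool) : inv (inv x) = x := by simp [inv]
@[simp] lemma inv_fst (x : V × Bool) : (inv x).1 = x.1 := rfl

variable (Γ : SimpleGraph V)

noncomputable def canc (x : V × Bool) : List (V × Bool) → Option (List (V × Bool))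
  | [] => none
  | y :: M => if y = inv x then some M
      else if Γ.Adj x.1 y.1 then (canc x M).map (y :: ·) else none

lemma canc_eq_some_of (x : V × Bool) (P R : List (V × Bool))
    (hP : ∀ y ∈ P, Γ.Adj x.1 y.1) : canc Γ x (P ++ inv x :: R) = some (P ++ R) := by
  induction P with
  | nil => simp [canc]
  | cons y P ih =>
      have hy : Γ.Adj x.1 y.1 := hP y (by simp)
      have hne : y ≠ inv x := by
        rintro rfl; exact Γ.irrefl hy
      rw [List.cons_append, canc, if_neg hne, if_pos hy,
        ih fun z hz => hP z (by simp [hz])]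
      rfl

lemma canc_spec {x : V × Bool} {M C : List (V × Bool)} (h : canc Γ x M = some C) :
    ∃ P R, M = P ++ inv x :: R ∧ C = P ++ R ∧ ∀ y ∈ P, Γ.Adj x.1 y.1 := by
  induction M generalizing C with
  | nil => simp [canc] at h
  | cons y M ih =>
      by_cases hy : y = inv x
      · refine ⟨[], M, by simp [hy], ?_, by simp⟩
        rw [canc, if_pos hy] at h
        simpa using h.symm
      · by_cases hadj : Γ.Adj x.1 y.1
        · rw [canc, if_neg hy, if_pos hadj, Option.map_eq_some_iff] at h
          obtain ⟨C', hC', rfl⟩ := h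
          obtain ⟨P, R, rfl, rfl, hP⟩ := ih hC'
          refine ⟨y :: P, R, rfl, rfl, ?_⟩
          intro z hz
          rcases List.mem_cons.mp hz with rfl | hz
          · exact hadj
          · exact hP z hz
        · rw [canc, if_neg hy, if_neg hadj] at h; simp at h

noncomputable def ins (x : V × Bool) (M : List (V × Bool)) : List (V × Bool) :=
  (canc Γ x M).getD (x :: M)

lemma ins_eq_cons {x : V × Bool} {M : List (V × Bool)} (h : canc Γ x M = none) :
    ins Γ x M = x :: M := by simp [ins, h]

lemma ins_eq_del {x : V × Bool} {M C : List (V × Bool)} (h : canc Γ x M = some C) :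
    ins Γ x M = C := by simp [ins, h]

lemma length_ins (x : V × Bool) (M : List (V × Bool)) :
    (ins Γ x M).length = M.length + 1 ∨ (ins Γ x M).length + 2 = M.length + 1 := by
  cases h : canc Γ x M with
  | none => left; simp [ins_eq_cons Γ h]
  | some C =>
      right
      obtain ⟨P, R, rfl, rfl, -⟩ := canc_spec Γ h
      simp only [ins_eq_del Γ h, List.length_append, List.length_cons]
      omega

lemma length_ins_le (x : V × Bool) (M : List (V × Bool)) :
    (ins Γ x M).length ≤ M.length + 1 := by
  rcases length_ins Γ x M with h | h <;> omega

lemma mem_ins {x y : V × Bool} {M : List (V × Bool)} (h : y ∈ ins Γ x M) :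
    y = x ∨ y ∈ M := by
  cases hc : canc Γ x M with
  | none =>
      rw [ins_eq_cons Γ hc] at h
      rcases List.mem_cons.mp h with rfl | h
      · exact Or.inl rfl
      · exact Or.inr h
  | some C =>
      rw [ins_eq_del Γ hc] at h
      obtain ⟨P, R, rfl, rfl, -⟩ := canc_spec Γ hc
      right; simp at h ⊢; tauto

noncomputable def Red : List (V × Bool) → List (V × Bool) := List.foldr (ins Γ) []

@[simp] lemma Red_nil : Red Γ ([] : List (V × Bool)) = [] := rfl
lemma Red_cons (x : V × Bool) (L : List (V × Bool)) :
    Red Γ (x :: L) = ins Γ x (Red Γ L) := rfl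

lemma length_Red_le (L : List (V × Bool)) : (Red Γ L).length ≤ L.length := by
  induction L with
  | nil => simp
  | cons x L ih =>
      calc (Red Γ (x :: L)).length ≤ (Red Γ L).length + 1 := length_ins_le Γ x _
      _ ≤ L.length + 1 := by omega

lemma mem_Red {y : V × Bool} {L : List (V × Bool)} (h : y ∈ Red Γ L) : y ∈ L := by
  induction L with
  | nil => simp [Red] at h
  | cons x L ih =>
      rw [Red_cons] at h
      rcases mem_ins Γ h with rfl | h
      · simp
      · simp [ih h]

/-! group layer -/

noncomputable def eps (x : V × Bool) : RAAG Γ :=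
  if x.2 then raagGen Γ x.1 else (raagGen Γ x.1)⁻¹

noncomputable def wprod (L : List (V × Bool)) : RAAG Γ := (L.map (eps Γ)).prod

@[simp] lemma wprod_nil : wprod Γ ([] : List (V × Bool)) = 1 := rfl
@[simp] lemma wprod_cons (x : V × Bool) (L : List (V × Bool)) :
    wprod Γ (x :: L) = eps Γ x * wprod Γ L := by simp [wprod]
@[simp] lemma wprod_append (L₁ L₂ : List (V × Bool)) :
    wprod Γ (L₁ ++ L₂) = wprod Γ L₁ * wprod Γ L₂ := by simp [wprod]

@[simp] lemma eps_inv (x : V × Bool) : eps Γ (inv x) = (eps Γ x)⁻¹ := by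
  cases x with | mk v b => cases b <;> simp [eps, inv]

lemma gen_commute {v w : V} (h : Γ.Adj v w) :
    Commute (raagGen Γ v) (raagGen Γ w) := by
  have hr : (FreeGroup.of v * FreeGroup.of w * (FreeGroup.of v)⁻¹ * (FreeGroup.of w)⁻¹ :
      FreeGroup V) ∈ raagRels Γ := ⟨v, w, h, rfl⟩
  have h1 : PresentedGroup.mk (raagRels Γ)
      (FreeGroup.of v * FreeGroup.of w * (FreeGroup.of v)⁻¹ * (FreeGroup.of w)⁻¹) = 1 :=
    (QuotientGroup.eq_one_iff _).mpr (Subgroup.subset_normalClosure hr)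
  have h2 : raagGen Γ v * raagGen Γ w * (raagGen Γ v)⁻¹ * (raagGen Γ w)⁻¹ = 1 := by
    exact h1
  rw [mul_inv_eq_one, mul_inv_eq_iff_eq_mul] at h2
  exact h2

lemma eps_commute {x y : V × Bool} (h : Γ.Adj x.1 y.1) :
    Commute (eps Γ x) (eps Γ y) := by
  rcases x with ⟨v, b⟩; rcases y with ⟨w, c⟩
  have h0 : Commute (raagGen Γ v) (raagGen Γ w) := gen_commute Γ h
  cases b <;> cases c <;> simp only [eps, if_true, if_false, Bool.false_eq_true] <;>
    [exact h0.inv_left.inv_right; exact h0.inv_left; exact h0.inv_right; exact h0]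

lemma eps_commute_wprod {x : V × Bool} {L : List (V × Bool)}
    (h : ∀ y ∈ L, Γ.Adj x.1 y.1) : Commute (eps Γ x) (wprod Γ L) := by
  induction L with
  | nil => exact Commute.one_right _
  | cons y L ih =>
      rw [wprod_cons]
      exact (eps_commute Γ (h y (by simp))).mul_right (ih fun z hz => h z (by simp [hz]))

lemma wprod_ins (x : V × Bool) (M : List (V × Bool)) :
    wprod Γ (ins Γ x M) = eps Γ x * wprod Γ M := by
  cases hc : canc Γ x M with
  | none => simp [ins_eq_cons Γ hc]
  | some C =>
      obtain ⟨P, R, rfl, rfl, hP⟩ := canc_spec Γ hc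
      have hcomm := eps_commute_wprod Γ (x := x) hP
      rw [ins_eq_del Γ hc]
      simp only [wprod_append, wprod_cons, eps_inv]
      rw [← mul_assoc, hcomm.eq, mul_assoc, mul_inv_cancel_left]

lemma wprod_Red (L : List (V × Bool)) : wprod Γ (Red Γ L) = wprod Γ L := by
  induction L with
  | nil => rfl
  | cons x L ih => rw [Red_cons, wprod_ins, ih, wprod_cons]

def invW (L : List (V × Bool)) : List (V × Bool) := (L.map inv).reverse

@[simp] lemma invW_nil : invW ([] : List (V × Bool)) = [] := rfl
lemma invW_cons (x : V × Bool) (L : List (V × Bool)) :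
    invW (x :: L) = invW L ++ [inv x] := by simp [invW]
@[simp] lemma invW_invW (L : List (V × Bool)) : invW (invW L) = L := by
  have : inv ∘ inv = (id : V × Bool → V × Bool) := funext inv_inv
  simp [invW, List.map_reverse, List.map_map, this]

@[simp] lemma length_invW (L : List (V × Bool)) : (invW L).length = L.length := by
  simp [invW]

lemma mem_invW {y : V × Bool} {L : List (V × Bool)} : y ∈ invW L ↔ inv y ∈ L := by
  simp only [invW, List.mem_reverse, List.mem_map]
  constructor
  · rintro ⟨a, ha, rfl⟩; simpa [inv_inv] using ha
  · intro h; exact ⟨inv y, h, inv_inv y⟩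

lemma wprod_invW (L : List (V × Bool)) : wprod Γ (invW L) = (wprod Γ L)⁻¹ := by
  induction L with
  | nil => simp
  | cons x L ih => rw [invW_cons, wprod_append, ih, wprod_cons]; simp

/-! ### Swap equivalence -/

inductive Sw : List (V × Bool) → List (V × Bool) → Prop
  | swap (A B : List (V × Bool)) (u w : V × Bool) (h : Γ.Adj u.1 w.1) :
      Sw (A ++ u :: w :: B) (A ++ w :: u :: B)

def Equ : List (V × Bool) → List (V × Bool) → Prop := Relation.ReflTransGen (Sw Γ)

lemma Sw.symm' {L L' : List (V × Bool)} (h : Sw Γ L L') : Sw Γ L' L := by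
  rcases h with ⟨A, B, u, w, h⟩; exact Sw.swap A B w u h.symm

lemma equ_refl (L : List (V × Bool)) : Equ Γ L L := Relation.ReflTransGen.refl

lemma equ_trans {L₁ L₂ L₃ : List (V × Bool)} (h₁ : Equ Γ L₁ L₂) (h₂ : Equ Γ L₂ L₃) :
    Equ Γ L₁ L₃ := Relation.ReflTransGen.trans h₁ h₂

lemma equ_symm {L L' : List (V × Bool)} (h : Equ Γ L L') : Equ Γ L' L := by
  induction h with
  | refl => exact Relation.ReflTransGen.refl
  | tail _ h2 ih => exact Relation.ReflTransGen.head (Sw.symm' Γ h2) ih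

lemma equ_single {L L' : List (V × Bool)} (h : Sw Γ L L') : Equ Γ L L' :=
  Relation.ReflTransGen.single h

lemma sw_length {L L' : List (V × Bool)} (h : Sw Γ L L') : L.length = L'.length := by
  rcases h with ⟨A, B, u, w, -⟩; simp

lemma equ_length {L L' : List (V × Bool)} (h : Equ Γ L L') : L.length = L'.length := by
  induction h with
  | refl => rfl
  | tail _ h2 ih => rw [ih, sw_length Γ h2]

lemma sw_wprod {L L' : List (V × Bool)} (h : Sw Γ L L') : wprod Γ L = wprod Γ L' := by
  rcases h with ⟨A, B, u, w, h⟩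
  simp only [wprod_append, wprod_cons]
  rw [← mul_assoc (eps Γ u), (eps_commute Γ h).eq, mul_assoc]

lemma equ_wprod {L L' : List (V × Bool)} (h : Equ Γ L L') : wprod Γ L = wprod Γ L' := by
  induction h with
  | refl => rfl
  | tail _ h2 ih => rw [ih, sw_wprod Γ h2]

lemma sw_mem {L L' : List (V × Bool)} (h : Sw Γ L L') {z : V × Bool} : z ∈ L ↔ z ∈ L' := by
  rcases h with ⟨A, B, u, w, -⟩
  simp only [List.mem_append, List.mem_cons]; tauto

lemma equ_mem {L L' : List (V × Bool)} (h : Equ Γ L L') {z : V × Bool} : z ∈ L ↔ z ∈ L' := by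
  induction h with
  | refl => rfl
  | tail _ h2 ih => rw [ih, sw_mem Γ h2]

lemma sw_cons {L L' : List (V × Bool)} (z : V × Bool) (h : Sw Γ L L') :
    Sw Γ (z :: L) (z :: L') := by
  rcases h with ⟨A, B, u, w, h⟩
  exact Sw.swap (z :: A) B u w h

lemma equ_cons {L L' : List (V × Bool)} (z : V × Bool) (h : Equ Γ L L') :
    Equ Γ (z :: L) (z :: L') := by
  induction h with
  | refl => exact equ_refl Γ _
  | tail _ h2 ih => exact Relation.ReflTransGen.tail ih (sw_cons Γ z h2)

lemma sw_invW {L L' : List (V × Bool)} (h : Sw Γ L L') : Sw Γ (invW L) (invW L') := by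
  rcases h with ⟨A, B, u, w, h⟩
  have e1 : invW (A ++ u :: w :: B) = invW B ++ (inv w) :: (inv u) :: invW A := by
    simp [invW]
  have e2 : invW (A ++ w :: u :: B) = invW B ++ (inv u) :: (inv w) :: invW A := by
    simp [invW]
  rw [e1, e2]
  exact Sw.swap _ _ _ _ (by simpa using h.symm)

lemma equ_invW {L L' : List (V × Bool)} (h : Equ Γ L L') : Equ Γ (invW L) (invW L') := by
  induction h with
  | refl => exact equ_refl Γ _
  | tail _ h2 ih => exact Relation.ReflTransGen.tail ih (sw_invW Γ h2)

lemma equ_cons_append {x : V × Bool} {P R : List (V × Bool)}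
    (hP : ∀ z ∈ P, Γ.Adj x.1 z.1) : Equ Γ (x :: (P ++ R)) (P ++ x :: R) := by
  induction P with
  | nil => exact equ_refl Γ _
  | cons p P ih =>
      have h1 : Sw Γ (x :: p :: (P ++ R)) (p :: x :: (P ++ R)) :=
        Sw.swap [] _ x p (hP p (by simp))
      exact Relation.ReflTransGen.head h1
        (equ_cons Γ p (ih fun z hz => hP z (by simp [hz])))

/-! ### splitting lemma -/

lemma split3 {α : Type*} : ∀ {P : List α} {R A B : List α} {y : α}, P ++ R = A ++ y :: B →
    (∃ t, A = P ++ t ∧ R = t ++ y :: B) ∨ (∃ t, P = A ++ y :: t ∧ B = t ++ R) := by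
  intro P
  induction P with
  | nil =>
      intro R A B y h
      exact Or.inl ⟨A, by simp, by simpa using h⟩
  | cons p P ih =>
      intro R A B y h
      cases A with
      | nil =>
          simp only [List.nil_append, List.cons_append, List.cons.injEq] at h
          exact Or.inr ⟨P, by simp [h.1], h.2.symm⟩
      | cons a A' =>
          simp only [List.cons_append, List.cons.injEq] at h
          obtain ⟨rfl, h2⟩ := h
          rcases ih h2 with ⟨t, rfl, hR⟩ | ⟨t, hP, hB⟩
          · exact Or.inl ⟨t, by simp, hR⟩
          · exact Or.inr ⟨t, by simp [hP], hB⟩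

/-! ### ins is well defined up to swaps -/

lemma canc_cons (x y : V × Bool) (M : List (V × Bool)) :
    canc Γ x (y :: M) = if y = inv x then some M
      else if Γ.Adj x.1 y.1 then (canc Γ x M).map (y :: ·) else none := by
  rw [canc]

lemma ne_inv_of_adj {x y : V × Bool} (h : Γ.Adj x.1 y.1) : y ≠ inv x := by
  rintro rfl; rw [inv_fst] at h; exact Γ.irrefl h

lemma ins_sw (x : V × Bool) : ∀ (A : List (V × Bool)) (u w : V × Bool)
    (B : List (V × Bool)), Γ.Adj u.1 w.1 →
    Equ Γ (ins Γ x (A ++ u :: w :: B)) (ins Γ x (A ++ w :: u :: B)) := by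
  intro A
  induction A with
  | nil =>
      intro u w B h
      simp only [List.nil_append]
      by_cases hu : u = inv x
      · subst hu
        have hxw : Γ.Adj x.1 w.1 := by simpa using h
        have hw : w ≠ inv (x : V × Bool) := ne_inv_of_adj Γ hxw
        have c1 : canc Γ x (inv x :: w :: B) = some (w :: B) := by
          rw [canc_cons, if_pos rfl]
        have c2 : canc Γ x (w :: inv x :: B) = some (w :: B) := by
          rw [canc_cons, if_neg hw, if_pos hxw, canc_cons, if_pos rfl]; rfl
        rw [ins_eq_del Γ c1, ins_eq_del Γ c2]
        exact equ_refl Γ _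
      · by_cases hxu : Γ.Adj x.1 u.1
        · by_cases hw : w = inv x
          · subst hw
            have c1 : canc Γ x (u :: inv x :: B) = some (u :: B) := by
              rw [canc_cons, if_neg hu, if_pos hxu, canc_cons, if_pos rfl]; rfl
            have c2 : canc Γ x (inv x :: u :: B) = some (u :: B) := by
              rw [canc_cons, if_pos rfl]
            rw [ins_eq_del Γ c1, ins_eq_del Γ c2]
            exact equ_refl Γ _
          · by_cases hxw : Γ.Adj x.1 w.1
            · cases hB : canc Γ x B with
              | none =>
                  have c1 : canc Γ x (u :: w :: B) = none := by
                    rw [canc_cons, if_neg hu, if_pos hxu, canc_cons, if_neg hw,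
                      if_pos hxw, hB]; rfl
                  have c2 : canc Γ x (w :: u :: B) = none := by
                    rw [canc_cons, if_neg hw, if_pos hxw, canc_cons, if_neg hu,
                      if_pos hxu, hB]; rfl
                  rw [ins_eq_cons Γ c1, ins_eq_cons Γ c2]
                  exact equ_single Γ (Sw.swap [x] B u w h)
              | some C =>
                  have c1 : canc Γ x (u :: w :: B) = some (u :: w :: C) := by
                    rw [canc_cons, if_neg hu, if_pos hxu, canc_cons, if_neg hw,
                      if_pos hxw, hB]; rfl
                  have c2 : canc Γ x (w :: u :: B) = some (w :: u :: C) := by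
                    rw [canc_cons, if_neg hw, if_pos hxw, canc_cons, if_neg hu,
                      if_pos hxu, hB]; rfl
                  rw [ins_eq_del Γ c1, ins_eq_del Γ c2]
                  exact equ_single Γ (Sw.swap [] C u w h)
            · have c1 : canc Γ x (u :: w :: B) = none := by
                rw [canc_cons, if_neg hu, if_pos hxu, canc_cons, if_neg hw, if_neg hxw]; rfl
              have c2 : canc Γ x (w :: u :: B) = none := by
                rw [canc_cons, if_neg hw, if_neg hxw]
              rw [ins_eq_cons Γ c1, ins_eq_cons Γ c2]
              exact equ_single Γ (Sw.swap [x] B u w h)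
        · have hw : w ≠ inv x := by
            rintro rfl
            exact hxu (Γ.adj_symm (by simpa using h))
          have c1 : canc Γ x (u :: w :: B) = none := by
            rw [canc_cons, if_neg hu, if_neg hxu]
          have c2 : canc Γ x (w :: u :: B) = none := by
            by_cases hxw : Γ.Adj x.1 w.1
            · rw [canc_cons, if_neg hw, if_pos hxw, canc_cons, if_neg hu, if_neg hxu]; rfl
            · rw [canc_cons, if_neg hw, if_neg hxw]
          rw [ins_eq_cons Γ c1, ins_eq_cons Γ c2]
          exact equ_single Γ (Sw.swap [x] B u w h)
  | cons a A' ih =>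
      intro u w B h
      simp only [List.cons_append]
      by_cases ha : a = inv x
      · subst ha
        have c1 : canc Γ x (inv x :: (A' ++ u :: w :: B)) = some (A' ++ u :: w :: B) := by
          rw [canc_cons, if_pos rfl]
        have c2 : canc Γ x (inv x :: (A' ++ w :: u :: B)) = some (A' ++ w :: u :: B) := by
          rw [canc_cons, if_pos rfl]
        rw [ins_eq_del Γ c1, ins_eq_del Γ c2]
        exact equ_single Γ (Sw.swap A' B u w h)
      · by_cases hxa : Γ.Adj x.1 a.1
        · have hIH := ih u w B h
          have hlen : (A' ++ u :: w :: B).length = (A' ++ w :: u :: B).length := by simp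
          cases hT : canc Γ x (A' ++ u :: w :: B) with
          | none =>
              have hT' : canc Γ x (A' ++ w :: u :: B) = none := by
                cases hT2 : canc Γ x (A' ++ w :: u :: B) with
                | none => rfl
                | some C' =>
                    exfalso
                    have l1 := equ_length Γ hIH
                    rw [ins_eq_cons Γ hT, ins_eq_del Γ hT2] at l1
                    obtain ⟨P, R, hPR, rfl, -⟩ := canc_spec Γ hT2
                    have := congrArg List.length hPR
                    simp at this l1
                    omega
              have c1 : canc Γ x (a :: (A' ++ u :: w :: B)) = none := by
                rw [canc_cons, if_neg ha, if_pos hxa, hT]; rfl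
              have c2 : canc Γ x (a :: (A' ++ w :: u :: B)) = none := by
                rw [canc_cons, if_neg ha, if_pos hxa, hT']; rfl
              rw [ins_eq_cons Γ c1, ins_eq_cons Γ c2]
              exact equ_single Γ (Sw.swap (x :: a :: A') B u w h)
          | some C =>
              obtain ⟨C', hT', hCC'⟩ : ∃ C', canc Γ x (A' ++ w :: u :: B) = some C' ∧
                  Equ Γ C C' := by
                cases hT2 : canc Γ x (A' ++ w :: u :: B) with
                | none =>
                    exfalso
                    have l1 := equ_length Γ hIH
                    rw [ins_eq_del Γ hT, ins_eq_cons Γ hT2] at l1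
                    obtain ⟨P, R, hPR, rfl, -⟩ := canc_spec Γ hT
                    have := congrArg List.length hPR
                    simp at this l1
                    omega
                | some C' =>
                    refine ⟨C', rfl, ?_⟩
                    have := hIH
                    rwa [ins_eq_del Γ hT, ins_eq_del Γ hT2] at this
              have c1 : canc Γ x (a :: (A' ++ u :: w :: B)) = some (a :: C) := by
                rw [canc_cons, if_neg ha, if_pos hxa, hT]; rfl
              have c2 : canc Γ x (a :: (A' ++ w :: u :: B)) = some (a :: C') := by
                rw [canc_cons, if_neg ha, if_pos hxa, hT']; rfl
              rw [ins_eq_del Γ c1, ins_eq_del Γ c2]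
              exact equ_cons Γ a hCC'
        · have c1 : canc Γ x (a :: (A' ++ u :: w :: B)) = none := by
            rw [canc_cons, if_neg ha, if_neg hxa]
          have c2 : canc Γ x (a :: (A' ++ w :: u :: B)) = none := by
            rw [canc_cons, if_neg ha, if_neg hxa]
          rw [ins_eq_cons Γ c1, ins_eq_cons Γ c2]
          exact equ_single Γ (Sw.swap (x :: a :: A') B u w h)

lemma ins_equ {x : V × Bool} {L L' : List (V × Bool)} (h : Equ Γ L L') :
    Equ Γ (ins Γ x L) (ins Γ x L') := by
  induction h with
  | refl => exact equ_refl Γ _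
  | tail _ h2 ih =>
      refine equ_trans Γ ih ?_
      rcases h2 with ⟨A, B, u, w, hadj⟩
      exact ins_sw Γ x A u w B hadj

/-! ### reduced words -/

def NC (M : List (V × Bool)) : Prop :=
  ∀ (A : List (V × Bool)) (y : V × Bool) (B : List (V × Bool)),
    M = A ++ y :: B → canc Γ y B = none

lemma nc_nil : NC Γ ([] : List (V × Bool)) := by
  intro A y B h
  have := congrArg List.length h
  simp only [List.length_nil, List.length_append, List.length_cons] at this
  omega

lemma nc_ins (x : V × Bool) {M : List (V × Bool)} (hM : NC Γ M) : NC Γ (ins Γ x M) := by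
  cases hc : canc Γ x M with
  | none =>
      rw [ins_eq_cons Γ hc]
      intro A y B hEq
      cases A with
      | nil =>
          simp only [List.nil_append, List.cons.injEq] at hEq
          obtain ⟨rfl, rfl⟩ := hEq
          exact hc
      | cons a A' =>
          simp only [List.cons_append, List.cons.injEq] at hEq
          exact hM A' y B hEq.2
  | some C =>
      obtain ⟨P, R, rfl, rfl, hP⟩ := canc_spec Γ hc
      rw [ins_eq_del Γ hc]
      intro A y B hEq
      cases hsome : canc Γ y B with
      | none => rfl
      | some C₂ =>
          exfalso
          obtain ⟨Q, T, rfl, rfl, hQ⟩ := canc_spec Γ hsome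
          rcases split3 hEq with ⟨t, rfl, hR⟩ | ⟨t, hPd, hB⟩
          · -- y occurs in R : M = P ++ inv x :: t ++ y :: Q ++ inv y :: T
            have h1 : canc Γ y (Q ++ inv y :: T) = some (Q ++ T) :=
              canc_eq_some_of Γ y Q T hQ
            have h2 := hM (P ++ inv x :: t) y (Q ++ inv y :: T) (by rw [hR]; simp)
            rw [h1] at h2; cases h2
          · -- y occurs in P : P = A ++ y :: t, B = t ++ R
            have hxy : Γ.Adj x.1 y.1 := hP y (by rw [hPd]; simp)
            rcases split3 hB.symm with ⟨s, rfl, hR2⟩ | ⟨s, ht, hT⟩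
            · -- Q = t ++ s, R = s ++ inv y :: T
              have hpre : ∀ z ∈ t ++ inv x :: s, Γ.Adj y.1 z.1 := by
                intro z hz
                rcases List.mem_append.mp hz with hz | hz
                · exact hQ z (by simp [hz])
                · rcases List.mem_cons.mp hz with rfl | hz
                  · rw [inv_fst]; exact hxy.symm
                  · exact hQ z (by simp [hz])
              have h1 := canc_eq_some_of Γ y (t ++ inv x :: s) T hpre
              have h2 := hM A y (t ++ inv x :: (s ++ inv y :: T))
                (by rw [hPd, hR2]; simp)
              simp only [List.append_assoc, List.cons_append] at h1 h2
              rw [h1] at h2; cases h2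
            · -- t = Q ++ inv y :: s, T = s ++ R : pair inside P
              have h1 : canc Γ y (Q ++ inv y :: (s ++ inv x :: R)) =
                  some (Q ++ (s ++ inv x :: R)) := canc_eq_some_of Γ y Q _ hQ
              have h2 := hM A y (Q ++ inv y :: (s ++ inv x :: R))
                (by rw [hPd, ht]; simp)
              rw [h1] at h2; cases h2

lemma ins_ins_inv (x : V × Bool) {M : List (V × Bool)} (hM : NC Γ M) :
    Equ Γ (ins Γ x (ins Γ (inv x) M)) M := by
  cases hc : canc Γ (inv x) M with
  | none =>
      rw [ins_eq_cons Γ hc]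
      have h1 : canc Γ x (inv x :: M) = some M := by
        rw [canc_cons, if_pos rfl]
      rw [ins_eq_del Γ h1]
      exact equ_refl Γ _
  | some C =>
      obtain ⟨P, R, hMd, rfl, hP⟩ := canc_spec Γ hc
      rw [inv_inv] at hMd
      have hP' : ∀ z ∈ P, Γ.Adj x.1 z.1 := by
        intro z hz; have := hP z hz; rwa [inv_fst] at this
      rw [ins_eq_del Γ hc]
      have hnone : canc Γ x (P ++ R) = none := by
        cases hcc : canc Γ x (P ++ R) with
        | none => rfl
        | some C₂ =>
            exfalso
            obtain ⟨P₂, R₂, hEq, rfl, hP₂⟩ := canc_spec Γ hcc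
            rcases split3 hEq with ⟨t, rfl, hR⟩ | ⟨t, hPd, hB⟩
            · have ht : ∀ z ∈ t, Γ.Adj x.1 z.1 := by
                intro z hz; exact hP₂ z (by simp [hz])
              have h2 := hM P x (t ++ inv x :: R₂) (by rw [hMd, hR])
              rw [canc_eq_some_of Γ x t R₂ ht] at h2
              cases h2
            · have hmem : (inv x) ∈ P := by rw [hPd]; simp
              have := hP' _ hmem
              rw [inv_fst] at this
              exact Γ.irrefl this
      rw [ins_eq_cons Γ hnone, hMd]
      exact equ_cons_append Γ hP'

/-! ### commutation of insertions -/

lemma ins_ins_case2 {x y : V × Bool} {M Cx : List (V × Bool)} (hxy : Γ.Adj x.1 y.1)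
    (hy : canc Γ y M = none) (hx : canc Γ x M = some Cx) :
    ins Γ x (ins Γ y M) = y :: Cx ∧ ins Γ y (ins Γ x M) = y :: Cx := by
  have hyx : Γ.Adj y.1 x.1 := hxy.symm
  have hynex : y ≠ inv x := ne_inv_of_adj Γ hxy
  constructor
  · rw [ins_eq_cons Γ hy]
    have h1 : canc Γ x (y :: M) = some (y :: Cx) := by
      rw [canc_cons, if_neg hynex, if_pos hxy, hx]; rfl
    rw [ins_eq_del Γ h1]
  · rw [ins_eq_del Γ hx]
    obtain ⟨Px, Rx, hMd, rfl, hPx⟩ := canc_spec Γ hx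
    have hnone : canc Γ y (Px ++ Rx) = none := by
      cases hcc : canc Γ y (Px ++ Rx) with
      | none => rfl
      | some C₂ =>
          exfalso
          obtain ⟨Q, T, hEq, rfl, hQ⟩ := canc_spec Γ hcc
          rcases split3 hEq with ⟨t, rfl, hR⟩ | ⟨t, hPd, hB⟩
          · have hpre : ∀ z ∈ Px ++ inv x :: t, Γ.Adj y.1 z.1 := by
              intro z hz
              rcases List.mem_append.mp hz with hz | hz
              · exact hQ z (by simp [hz])
              · rcases List.mem_cons.mp hz with rfl | hz
                · rw [inv_fst]; exact hyx
                · exact hQ z (by simp [hz])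
            have h1 := canc_eq_some_of Γ y (Px ++ inv x :: t) T hpre
            rw [hMd, hR] at hy
            simp only [List.append_assoc, List.cons_append] at h1 hy
            rw [hy] at h1; cases h1
          · have h1 := canc_eq_some_of Γ y Q (t ++ inv x :: Rx) hQ
            rw [hMd, hPd] at hy
            simp only [List.append_assoc, List.cons_append] at h1 hy
            rw [hy] at h1; cases h1
    rw [ins_eq_cons Γ hnone]

lemma ins_ins_case4 {x y : V × Bool} (P t R : List (V × Bool))
    (hPx : ∀ z ∈ P, Γ.Adj x.1 z.1) (hPy : ∀ z ∈ P ++ inv x :: t, Γ.Adj y.1 z.1) :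
    ins Γ x (ins Γ y (P ++ inv x :: (t ++ inv y :: R))) = P ++ (t ++ R) ∧
    ins Γ y (ins Γ x (P ++ inv x :: (t ++ inv y :: R))) = P ++ (t ++ R) := by
  constructor
  · have c1 : canc Γ y (P ++ inv x :: (t ++ inv y :: R)) =
        some (P ++ inv x :: (t ++ R)) := by
      have h1 := canc_eq_some_of Γ y (P ++ inv x :: t) R hPy
      simpa using h1
    rw [ins_eq_del Γ c1]
    have c2 : canc Γ x (P ++ inv x :: (t ++ R)) = some (P ++ (t ++ R)) :=
      canc_eq_some_of Γ x P (t ++ R) hPx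
    rw [ins_eq_del Γ c2]
  · have c1 : canc Γ x (P ++ inv x :: (t ++ inv y :: R)) =
        some (P ++ (t ++ inv y :: R)) := canc_eq_some_of Γ x P _ hPx
    rw [ins_eq_del Γ c1]
    have hpre : ∀ z ∈ P ++ t, Γ.Adj y.1 z.1 := by
      intro z hz
      rcases List.mem_append.mp hz with hz | hz
      · exact hPy z (by simp [hz])
      · exact hPy z (by simp [hz])
    have c2 : canc Γ y (P ++ (t ++ inv y :: R)) = some (P ++ (t ++ R)) := by
      have h1 := canc_eq_some_of Γ y (P ++ t) R hpre
      simpa using h1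
    rw [ins_eq_del Γ c2]

lemma ins_ins_comm (x y : V × Bool) (M : List (V × Bool)) (hxy : Γ.Adj x.1 y.1) :
    Equ Γ (ins Γ x (ins Γ y M)) (ins Γ y (ins Γ x M)) := by
  have hyx : Γ.Adj y.1 x.1 := hxy.symm
  cases hcy : canc Γ y M with
  | none =>
      cases hcx : canc Γ x M with
      | none =>
          rw [ins_eq_cons Γ hcy, ins_eq_cons Γ hcx]
          have c1 : canc Γ x (y :: M) = none := by
            rw [canc_cons, if_neg (ne_inv_of_adj Γ hxy), if_pos hxy, hcx]; rfl
          have c2 : canc Γ y (x :: M) = none := by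
            rw [canc_cons, if_neg (ne_inv_of_adj Γ hyx), if_pos hyx, hcy]; rfl
          rw [ins_eq_cons Γ c1, ins_eq_cons Γ c2]
          exact equ_single Γ (Sw.swap [] M x y hxy)
      | some Cx =>
          obtain ⟨e1, e2⟩ := ins_ins_case2 Γ hxy hcy hcx
          rw [e1, e2]
          exact equ_refl Γ _
  | some Cy =>
      cases hcx : canc Γ x M with
      | none =>
          obtain ⟨e1, e2⟩ := ins_ins_case2 Γ hyx hcx hcy
          rw [e1, e2]
          exact equ_refl Γ _
      | some Cx =>
          obtain ⟨Px, Rx, hMx, rfl, hPx⟩ := canc_spec Γ hcx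
          obtain ⟨Py, Ry, hMy, rfl, hPy⟩ := canc_spec Γ hcy
          subst hMx
          rcases split3 hMy with ⟨s, hPyd, hR⟩ | ⟨s, hPxd, hB⟩
          · cases s with
            | nil =>
                exfalso
                simp only [List.nil_append, List.cons.injEq] at hR
                have := congrArg Prod.fst hR.1
                simp only [inv_fst] at this
                exact (Γ.ne_of_adj hxy) this
            | cons s0 s' =>
                simp only [List.cons_append, List.cons.injEq] at hR
                obtain ⟨rfl, hRx⟩ := hR
                subst hRx
                subst hPyd
                have hPy' : ∀ z ∈ Px ++ inv x :: s', Γ.Adj y.1 z.1 := hPy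
                obtain ⟨e1, e2⟩ := ins_ins_case4 Γ Px s' Ry hPx hPy'
                rw [e1, e2]
                exact equ_refl Γ _
          · subst hPxd
            have hRy : Ry = s ++ inv x :: Rx := hB
            subst hRy
            have hPx' : ∀ z ∈ Py ++ inv y :: s, Γ.Adj x.1 z.1 := hPx
            have hassoc : (Py ++ inv y :: s) ++ inv x :: Rx =
                Py ++ inv y :: (s ++ inv x :: Rx) := by simp
            rw [hassoc]
            obtain ⟨e1, e2⟩ := ins_ins_case4 Γ Py s Rx hPy hPx'
            rw [e1, e2]
            exact equ_refl Γ _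

/-! ### the action on reduced classes -/

def RW := {M : List (V × Bool) // NC Γ M}

instance rwSetoid : Setoid (RW Γ) :=
  ⟨fun M N => Equ Γ M.1 N.1,
   fun _ => equ_refl Γ _, fun h => equ_symm Γ h, fun h₁ h₂ => equ_trans Γ h₁ h₂⟩

def CQ := Quotient (rwSetoid Γ)

def mkQ (M : List (V × Bool)) (h : NC Γ M) : CQ Γ := Quotient.mk _ (⟨M, h⟩ : RW Γ)

lemma mkQ_eq_iff {M N : List (V × Bool)} (hM : NC Γ M) (hN : NC Γ N) :
    mkQ Γ M hM = mkQ Γ N hN ↔ Equ Γ M N := by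
  constructor
  · intro h; exact Quotient.exact h
  · intro h; exact Quotient.sound h

noncomputable def insQ (x : V × Bool) : CQ Γ → CQ Γ :=
  Quotient.map (fun M => (⟨ins Γ x M.1, nc_ins Γ x M.2⟩ : RW Γ))
    (fun _ _ h => ins_equ Γ h)

lemma insQ_mkQ (x : V × Bool) (M : List (V × Bool)) (h : NC Γ M) :
    insQ Γ x (mkQ Γ M h) = mkQ Γ (ins Γ x M) (nc_ins Γ x h) := rfl

lemma insQ_insQ_inv (x : V × Bool) (q : CQ Γ) : insQ Γ x (insQ Γ (inv x) q) = q := by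
  induction q using Quotient.ind with
  | _ M =>
      exact Quotient.sound (ins_ins_inv Γ x M.2)

lemma insQ_comm {x y : V × Bool} (h : Γ.Adj x.1 y.1) (q : CQ Γ) :
    insQ Γ x (insQ Γ y q) = insQ Γ y (insQ Γ x q) := by
  induction q using Quotient.ind with
  | _ M => exact Quotient.sound (ins_ins_comm Γ x y M.1 h)

noncomputable def insPerm (v : V) : Equiv.Perm (CQ Γ) where
  toFun := insQ Γ (v, true)
  invFun := insQ Γ (v, false)
  left_inv := fun q => by
    have := insQ_insQ_inv Γ (v, false) (q := q)
    simpa [inv] using this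
  right_inv := fun q => by
    have := insQ_insQ_inv Γ (v, true) (q := q)
    simpa [inv] using this

lemma freeRelsVanish : ∀ r ∈ raagRels Γ,
    FreeGroup.lift (insPerm Γ) r = 1 := by
  rintro r ⟨v, w, hadj, rfl⟩
  simp only [map_mul, map_inv, FreeGroup.lift_apply_of]
  ext q
  simp only [Equiv.Perm.mul_apply, Equiv.Perm.one_apply,
    Equiv.Perm.coe_mul, Function.comp_apply]
  show insPerm Γ v (insPerm Γ w ((insPerm Γ v)⁻¹ ((insPerm Γ w)⁻¹ q))) = q
  have hperm : ∀ u : V, ∀ p : CQ Γ, (insPerm Γ u)⁻¹ p = insQ Γ (u, false) p :=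
    fun u p => rfl
  rw [hperm, hperm]
  show insQ Γ (v, true) (insQ Γ (w, true) (insQ Γ (v, false) (insQ Γ (w, false) q))) = q
  rw [insQ_comm Γ (by simpa using hadj.symm) (insQ Γ (w, false) q)]
  have h1 : insQ Γ (v, true) (insQ Γ (v, false)
      (insQ Γ (w, true) (insQ Γ (w, false) q))) =
      insQ Γ (w, true) (insQ Γ (w, false) q) := by
    have := insQ_insQ_inv Γ (v, true) (insQ Γ (w, true) (insQ Γ (w, false) q))
    simpa [inv] using this
  rw [h1]
  have := insQ_insQ_inv Γ (w, true) q
  simpa [inv] using this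

noncomputable def phiR : RAAG Γ →* Equiv.Perm (CQ Γ) :=
  PresentedGroup.toGroup (freeRelsVanish Γ)

lemma phiR_gen (v : V) : phiR Γ (raagGen Γ v) = insPerm Γ v :=
  PresentedGroup.toGroup.of (freeRelsVanish Γ)

lemma phiR_eps (x : V × Bool) (M : List (V × Bool)) (h : NC Γ M) :
    phiR Γ (eps Γ x) (mkQ Γ M h) = mkQ Γ (ins Γ x M) (nc_ins Γ x h) := by
  rcases x with ⟨v, b⟩
  cases b
  · have : eps Γ (v, false) = (raagGen Γ v)⁻¹ := by simp [eps]
    rw [this, map_inv, phiR_gen]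
    rfl
  · have : eps Γ (v, true) = raagGen Γ v := by simp [eps]
    rw [this, phiR_gen]
    rfl

lemma nc_Red (L : List (V × Bool)) : NC Γ (Red Γ L) := by
  induction L with
  | nil => exact nc_nil Γ
  | cons x L ih => exact nc_ins Γ x ih

lemma phiR_wprod (L : List (V × Bool)) :
    phiR Γ (wprod Γ L) (mkQ Γ [] (nc_nil Γ)) = mkQ Γ (Red Γ L) (nc_Red Γ L) := by
  induction L with
  | nil => simp only [wprod_nil, map_one, Equiv.Perm.one_apply]; rfl
  | cons x L ih =>
      rw [wprod_cons, map_mul, Equiv.Perm.mul_apply, ih, phiR_eps]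
      rfl

lemma red_equ_of_wprod_eq {L L' : List (V × Bool)} (h : wprod Γ L = wprod Γ L') :
    Equ Γ (Red Γ L) (Red Γ L') := by
  have := phiR_wprod Γ L
  rw [h, phiR_wprod Γ L'] at this
  exact Quotient.exact this.symm

/-! ### every element is a word -/

lemma exists_word (g : RAAG Γ) : ∃ L, wprod Γ L = g := by
  have htot : (Subgroup.closure (Set.range (PresentedGroup.of (rels := raagRels Γ))) :
      Subgroup (RAAG Γ)) = ⊤ := PresentedGroup.closure_range_of (raagRels Γ)
  have hg : g ∈ (⊤ : Subgroup (RAAG Γ)) := trivial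
  rw [← htot] at hg
  induction hg using Subgroup.closure_induction with
  | mem z hz =>
      obtain ⟨v, rfl⟩ := hz
      exact ⟨[(v, true)], by simp [wprod, eps]; rfl⟩
  | one => exact ⟨[], rfl⟩
  | mul a b _ _ iha ihb =>
      obtain ⟨La, rfl⟩ := iha
      obtain ⟨Lb, rfl⟩ := ihb
      exact ⟨La ++ Lb, by simp⟩
  | inv a _ iha =>
      obtain ⟨La, rfl⟩ := iha
      exact ⟨invW La, wprod_invW Γ La⟩

/-! ### normal form and length -/

noncomputable def NF (g : RAAG Γ) : CQ Γ := phiR Γ g (mkQ Γ [] (nc_nil Γ))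

noncomputable def NFrep (g : RAAG Γ) : List (V × Bool) := (NF Γ g).out.1

lemma nc_NFrep (g : RAAG Γ) : NC Γ (NFrep Γ g) := (NF Γ g).out.2

lemma mkQ_NFrep (g : RAAG Γ) : mkQ Γ (NFrep Γ g) (nc_NFrep Γ g) = NF Γ g := by
  show Quotient.mk _ _ = _
  convert Quotient.out_eq (NF Γ g)
  exact Iff.rfl

lemma NF_eq_red (L : List (V × Bool)) :
    NF Γ (wprod Γ L) = mkQ Γ (Red Γ L) (nc_Red Γ L) := phiR_wprod Γ L

lemma equ_NFrep_red (L : List (V × Bool)) :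
    Equ Γ (NFrep Γ (wprod Γ L)) (Red Γ L) := by
  have h := mkQ_NFrep Γ (wprod Γ L)
  rw [NF_eq_red Γ L] at h
  exact Quotient.exact h

lemma wprod_NFrep (g : RAAG Γ) : wprod Γ (NFrep Γ g) = g := by
  obtain ⟨L, rfl⟩ := exists_word Γ g
  have := equ_wprod Γ (equ_NFrep_red Γ L)
  rw [this, wprod_Red]

noncomputable def nlen (g : RAAG Γ) : ℕ := (NFrep Γ g).length

lemma nlen_le_of_word {L : List (V × Bool)} {g : RAAG Γ} (h : wprod Γ L = g) :
    nlen Γ g ≤ L.length := by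
  subst h
  calc (NFrep Γ (wprod Γ L)).length = (Red Γ L).length := equ_length Γ (equ_NFrep_red Γ L)
  _ ≤ L.length := length_Red_le Γ L

def Geo (L : List (V × Bool)) : Prop := L.length = nlen Γ (wprod Γ L)

lemma geo_NFrep (g : RAAG Γ) : Geo Γ (NFrep Γ g) := by
  show _ = nlen Γ (wprod Γ (NFrep Γ g))
  rw [wprod_NFrep]
  rfl

lemma geo_equ_red {L : List (V × Bool)} (h : Geo Γ L) : Equ Γ L (Red Γ L) := by
  have hlen : L.length = (Red Γ L).length := by
    have := equ_length Γ (equ_NFrep_red Γ L)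
    unfold Geo nlen at h
    omega
  clear h
  induction L with
  | nil => exact equ_refl Γ _
  | cons x L ih =>
      rw [Red_cons]
      cases hc : canc Γ x (Red Γ L) with
      | some C =>
          exfalso
          obtain ⟨P, R, hd, rfl, -⟩ := canc_spec Γ hc
          rw [Red_cons, ins_eq_del Γ hc] at hlen
          have h1 := length_Red_le Γ L
          have h2 := congrArg List.length hd
          simp only [List.length_cons, List.length_append] at hlen h2 ⊢
          omega
      | none =>
          rw [ins_eq_cons Γ hc]
          rw [Red_cons, ins_eq_cons Γ hc] at hlen
          simp only [List.length_cons] at hlen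
          have h1 := length_Red_le Γ L
          exact equ_cons Γ x (ih (by omega))

lemma geo_equ_NFrep {L : List (V × Bool)} (h : Geo Γ L) :
    Equ Γ L (NFrep Γ (wprod Γ L)) :=
  equ_trans Γ (geo_equ_red Γ h) (equ_symm Γ (equ_NFrep_red Γ L))

lemma geo_geo_equ {L L' : List (V × Bool)} (hL : Geo Γ L) (hL' : Geo Γ L')
    (h : wprod Γ L = wprod Γ L') : Equ Γ L L' := by
  refine equ_trans Γ (geo_equ_NFrep Γ hL) ?_
  rw [h]
  exact equ_symm Γ (geo_equ_NFrep Γ hL')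

lemma nlen_one : nlen Γ (1 : RAAG Γ) = 0 := by
  have := nlen_le_of_word Γ (L := []) (g := 1) rfl
  simp only [List.length_nil] at this
  omega

lemma eq_one_of_nlen_zero {g : RAAG Γ} (h : nlen Γ g = 0) : g = 1 := by
  have h2 : NFrep Γ g = [] := List.length_eq_zero_iff.mp h
  rw [← wprod_NFrep Γ g, h2, wprod_nil]

lemma nlen_eps_mul (x : V × Bool) (g : RAAG Γ) :
    nlen Γ (eps Γ x * g) = nlen Γ g + 1 ∨ nlen Γ (eps Γ x * g) + 1 = nlen Γ g := by
  have h1 : NF Γ (eps Γ x * g) = mkQ Γ (ins Γ x (NFrep Γ g)) (nc_ins Γ x (nc_NFrep Γ g)) := by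
    show phiR Γ _ _ = _
    rw [map_mul, Equiv.Perm.mul_apply]
    show phiR Γ (eps Γ x) (NF Γ g) = _
    rw [← mkQ_NFrep Γ g, phiR_eps]
  have h2 : nlen Γ (eps Γ x * g) = (ins Γ x (NFrep Γ g)).length := by
    unfold nlen
    have := mkQ_NFrep Γ (eps Γ x * g)
    rw [h1] at this
    exact equ_length Γ (Quotient.exact this)
  rw [h2]
  show _ = (NFrep Γ g).length + 1 ∨ _
  rcases length_ins Γ x (NFrep Γ g) with h | h
  · left; exact h
  · right; unfold nlen; omega

lemma nlen_inv (g : RAAG Γ) : nlen Γ g⁻¹ = nlen Γ g := by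
  have key : ∀ h : RAAG Γ, nlen Γ h⁻¹ ≤ nlen Γ h := by
    intro h
    have : wprod Γ (invW (NFrep Γ h)) = h⁻¹ := by
      rw [wprod_invW, wprod_NFrep]
    have h2 := nlen_le_of_word Γ this
    rwa [length_invW] at h2
  have h1 := key g
  have h2 := key g⁻¹
  rw [_root_.inv_inv] at h2
  omega

lemma nlen_mul_le (g h : RAAG Γ) : nlen Γ (g * h) ≤ nlen Γ g + nlen Γ h := by
  have : wprod Γ (NFrep Γ g ++ NFrep Γ h) = g * h := by
    rw [wprod_append, wprod_NFrep, wprod_NFrep]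
  have h2 := nlen_le_of_word Γ this
  simpa [nlen] using h2

/-! ### cancellation characterisation -/

lemma NF_eps (x : V × Bool) (g : RAAG Γ) :
    NF Γ (eps Γ x * g) = mkQ Γ (ins Γ x (NFrep Γ g)) (nc_ins Γ x (nc_NFrep Γ g)) := by
  show phiR Γ _ _ = _
  rw [map_mul, Equiv.Perm.mul_apply]
  show phiR Γ (eps Γ x) (NF Γ g) = _
  rw [← mkQ_NFrep Γ g, phiR_eps]

lemma equ_NFrep_eps (x : V × Bool) (g : RAAG Γ) :
    Equ Γ (NFrep Γ (eps Γ x * g)) (ins Γ x (NFrep Γ g)) := by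
  have h := mkQ_NFrep Γ (eps Γ x * g)
  rw [NF_eps Γ x g] at h
  exact Quotient.exact h

lemma nlen_eps_eq (x : V × Bool) (g : RAAG Γ) :
    nlen Γ (eps Γ x * g) = (ins Γ x (NFrep Γ g)).length :=
  equ_length Γ (equ_NFrep_eps Γ x g)

lemma nlen_lt_iff_canc {x : V × Bool} {g : RAAG Γ} :
    nlen Γ (eps Γ x * g) < nlen Γ g ↔ ∃ C, canc Γ x (NFrep Γ g) = some C := by
  constructor
  · intro h
    cases hc : canc Γ x (NFrep Γ g) with
    | none =>
        exfalso
        rw [nlen_eps_eq Γ x g, ins_eq_cons Γ hc] at h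
        simp only [List.length_cons] at h
        unfold nlen at h
        omega
    | some C => exact ⟨C, rfl⟩
  · rintro ⟨C, hc⟩
    rw [nlen_eps_eq Γ x g, ins_eq_del Γ hc]
    obtain ⟨P, R, hd, rfl, -⟩ := canc_spec Γ hc
    have := congrArg List.length hd
    unfold nlen
    simp only [List.length_append, List.length_cons] at this ⊢
    omega

/-! ### free letters -/

def LFr (x : V × Bool) (L : List (V × Bool)) : Prop :=
  ∃ P R, L = P ++ x :: R ∧ ∀ z ∈ P, Γ.Adj x.1 z.1

def RFr (x : V × Bool) (L : List (V × Bool)) : Prop :=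
  ∃ P R, L = P ++ x :: R ∧ ∀ z ∈ R, Γ.Adj x.1 z.1

lemma invW_append (X Y : List (V × Bool)) : invW (X ++ Y) = invW Y ++ invW X := by
  simp [invW]

lemma lfr_sw {x : V × Bool} {L L' : List (V × Bool)} (h : Sw Γ L L') (hl : LFr Γ x L) :
    LFr Γ x L' := by
  rcases h with ⟨A, B, u, w, hadj⟩
  obtain ⟨P, R, hEq, hP⟩ := hl
  rcases split3 (P := A) (R := u :: w :: B) hEq with ⟨t, hPd, hR⟩ | ⟨t, hA, hR⟩
  · cases t with
    | nil =>
        rw [List.nil_append] at hR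
        injection hR with h1 h2
        subst h1
        subst h2
        refine ⟨A ++ [w], B, by simp, ?_⟩
        intro z hz
        rcases List.mem_append.mp hz with hz | hz
        · exact hP z (by rw [hPd]; simpa using hz)
        · rcases List.mem_singleton.mp hz with rfl
          exact hadj
    | cons t0 t' =>
        rw [List.cons_append] at hR
        injection hR with h1 h2
        subst h1
        cases t' with
        | nil =>
            rw [List.nil_append] at h2
            injection h2 with h3 h4
            subst h3
            subst h4
            refine ⟨A, u :: B, by simp, ?_⟩
            intro z hz
            exact hP z (by rw [hPd]; simp [hz])
        | cons t1 t'' =>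
            rw [List.cons_append] at h2
            injection h2 with h3 h4
            subst h3
            refine ⟨A ++ w :: u :: t'', R, by rw [h4]; simp, ?_⟩
            intro z hz
            apply hP z
            rw [hPd]
            simp only [List.mem_append, List.mem_cons] at hz ⊢
            tauto
  · exact ⟨P, t ++ w :: u :: B, by rw [hA]; simp [hR], hP⟩

lemma lfr_equ {x : V × Bool} {L L' : List (V × Bool)} (h : Equ Γ L L') (hl : LFr Γ x L) :
    LFr Γ x L' := by
  induction h with
  | refl => exact hl
  | tail _ h2 ih => exact lfr_sw Γ h2 ih

lemma lfr_invW_iff {x : V × Bool} {L : List (V × Bool)} :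
    LFr Γ x (invW L) ↔ RFr Γ (inv x) L := by
  constructor
  · rintro ⟨P, R, hEq, hP⟩
    have h2 : L = invW (invW L) := (invW_invW L).symm
    rw [hEq] at h2
    have h4 : invW (P ++ x :: R) = invW R ++ inv x :: invW P := by
      rw [invW_append, invW_cons]; simp
    rw [h4] at h2
    refine ⟨invW R, invW P, h2, ?_⟩
    intro z hz
    have hmem : inv z ∈ P := mem_invW.mp hz
    exact hP (inv z) hmem
  · rintro ⟨P, R, hEq, hR⟩
    have h4 : invW L = invW R ++ x :: invW P := by
      rw [hEq, invW_append, invW_cons]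
      simp
    refine ⟨invW R, invW P, h4, ?_⟩
    intro z hz
    have hmem : inv z ∈ R := mem_invW.mp hz
    exact hR (inv z) hmem

lemma eps_mul_of_split {x : V × Bool} {P R : List (V × Bool)}
    (hP : ∀ z ∈ P, Γ.Adj x.1 z.1) :
    eps Γ x * wprod Γ (P ++ inv x :: R) = wprod Γ (P ++ R) := by
  have hcomm := eps_commute_wprod Γ (x := x) hP
  simp only [wprod_append, wprod_cons, eps_inv]
  rw [← mul_assoc, hcomm.eq, mul_assoc, mul_inv_cancel_left]

lemma mul_eps_of_splitR {x : V × Bool} {P R : List (V × Bool)}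
    (hR : ∀ z ∈ R, Γ.Adj x.1 z.1) :
    wprod Γ (P ++ inv x :: R) * eps Γ x = wprod Γ (P ++ R) := by
  have hcomm := eps_commute_wprod Γ (x := x) hR
  simp only [wprod_append, wprod_cons, eps_inv]
  rw [mul_assoc, mul_assoc, ← hcomm.eq, ← mul_assoc (eps Γ x)⁻¹, inv_mul_cancel,
    one_mul]

lemma geo_word_of (g : RAAG Γ) : Geo Γ (NFrep Γ g) := geo_NFrep Γ g

lemma nlen_lt_iff_lfr {x : V × Bool} {g : RAAG Γ} {L : List (V × Bool)}
    (hL : Geo Γ L) (hw : wprod Γ L = g) :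
    nlen Γ (eps Γ x * g) < nlen Γ g ↔ LFr Γ (inv x) L := by
  have hEqu : Equ Γ L (NFrep Γ g) := by
    have := geo_equ_NFrep Γ hL
    rwa [hw] at this
  rw [nlen_lt_iff_canc]
  constructor
  · rintro ⟨C, hc⟩
    obtain ⟨P, R, hd, rfl, hP⟩ := canc_spec Γ hc
    refine lfr_equ Γ (equ_symm Γ hEqu) ⟨P, R, hd, ?_⟩
    intro z hz
    have := hP z hz
    rwa [inv_fst]
  · intro hl
    have hl2 : LFr Γ (inv x) (NFrep Γ g) := lfr_equ Γ hEqu hl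
    obtain ⟨P, R, hd, hP⟩ := hl2
    have hP' : ∀ z ∈ P, Γ.Adj x.1 z.1 := by
      intro z hz; have := hP z hz; rwa [inv_fst] at this
    exact ⟨P ++ R, by rw [hd]; exact canc_eq_some_of Γ x P R hP'⟩

lemma nlen_eps_mul_ge {x : V × Bool} {g : RAAG Γ} (h : ¬ nlen Γ (eps Γ x * g) < nlen Γ g) :
    nlen Γ (eps Γ x * g) = nlen Γ g + 1 := by
  rcases nlen_eps_mul Γ x g with h2 | h2
  · exact h2
  · omega

lemma nlen_mul_eps_eq_inv (g : RAAG Γ) (x : V × Bool) :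
    nlen Γ (g * eps Γ x) = nlen Γ (eps Γ (inv x) * g⁻¹) := by
  have : (eps Γ (inv x) * g⁻¹)⁻¹ = g * eps Γ x := by
    rw [eps_inv]; group
  rw [← this, nlen_inv]

lemma nlen_lt_iff_rfr {x : V × Bool} {g : RAAG Γ} {L : List (V × Bool)}
    (hL : Geo Γ L) (hw : wprod Γ L = g) :
    nlen Γ (g * eps Γ x) < nlen Γ g ↔ RFr Γ (inv x) L := by
  have hgeo : Geo Γ (invW L) := by
    unfold Geo at hL ⊢
    rw [wprod_invW, hw, nlen_inv, length_invW]
    rw [hw] at hL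
    exact hL
  have hw2 : wprod Γ (invW L) = g⁻¹ := by rw [wprod_invW, hw]
  rw [nlen_mul_eps_eq_inv, ← nlen_inv Γ g,
    nlen_lt_iff_lfr Γ (x := inv x) hgeo hw2]
  rw [inv_inv, lfr_invW_iff]

/-! ### subgroup membership and support -/

lemma eps_mem {W : Set V} {x : V × Bool} (hx : x.1 ∈ W) :
    eps Γ x ∈ Subgroup.closure (raagGen Γ '' W) := by
  have hgen : raagGen Γ x.1 ∈ Subgroup.closure (raagGen Γ '' W) :=
    Subgroup.subset_closure ⟨x.1, hx, rfl⟩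
  cases hb : x.2
  · rw [show eps Γ x = (raagGen Γ x.1)⁻¹ by simp [eps, hb]]
    exact inv_mem hgen
  · rw [show eps Γ x = raagGen Γ x.1 by simp [eps, hb]]
    exact hgen

lemma wprod_mem {W : Set V} {L : List (V × Bool)} (h : ∀ z ∈ L, z.1 ∈ W) :
    wprod Γ L ∈ Subgroup.closure (raagGen Γ '' W) := by
  induction L with
  | nil => exact one_mem _
  | cons x L ih =>
      rw [wprod_cons]
      exact mul_mem (eps_mem Γ (h x (by simp))) (ih fun z hz => h z (by simp [hz]))

lemma mem_closure_iff_word {W : Set V} {g : RAAG Γ} :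
    g ∈ Subgroup.closure (raagGen Γ '' W) ↔
      ∃ L, (∀ z ∈ L, z.1 ∈ W) ∧ wprod Γ L = g := by
  constructor
  · intro hg
    induction hg using Subgroup.closure_induction with
    | mem z hz =>
        obtain ⟨v, hv, rfl⟩ := hz
        exact ⟨[(v, true)], by simpa using hv, by simp [wprod, eps]⟩
    | one => exact ⟨[], by simp, rfl⟩
    | mul a b _ _ iha ihb =>
        obtain ⟨La, hLa, rfl⟩ := iha
        obtain ⟨Lb, hLb, rfl⟩ := ihb
        refine ⟨La ++ Lb, ?_, by simp⟩
        intro z hz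
        rcases List.mem_append.mp hz with hz | hz
        · exact hLa z hz
        · exact hLb z hz
    | inv a _ iha =>
        obtain ⟨La, hLa, rfl⟩ := iha
        refine ⟨invW La, ?_, wprod_invW Γ La⟩
        intro z hz
        have h2 := hLa (inv z) (mem_invW.mp hz)
        rwa [inv_fst] at h2
  · rintro ⟨L, hL, rfl⟩
    exact wprod_mem Γ hL

lemma NFrep_letters {W : Set V} {g : RAAG Γ}
    (hg : g ∈ Subgroup.closure (raagGen Γ '' W)) : ∀ z ∈ NFrep Γ g, z.1 ∈ W := by
  obtain ⟨L, hL, rfl⟩ := (mem_closure_iff_word Γ).mp hg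
  intro z hz
  have h1 : z ∈ Red Γ L := (equ_mem Γ (equ_NFrep_red Γ L)).mp hz
  exact hL z (mem_Red Γ h1)

lemma mem_of_NFrep_letters {W : Set V} {g : RAAG Γ}
    (h : ∀ z ∈ NFrep Γ g, z.1 ∈ W) : g ∈ Subgroup.closure (raagGen Γ '' W) := by
  rw [← wprod_NFrep Γ g]
  exact wprod_mem Γ h

lemma commute_of_adj_nfrep {v : V} {g : RAAG Γ}
    (h : ∀ z ∈ NFrep Γ g, Γ.Adj v z.1) : Commute (raagGen Γ v) g := by
  rw [← wprod_NFrep Γ g]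
  have := eps_commute_wprod Γ (x := (v, true)) (L := NFrep Γ g) h
  simpa [eps] using this

/-! ### more length lemmas -/

lemma NFrep_one : NFrep Γ (1 : RAAG Γ) = [] :=
  List.length_eq_zero_iff.mp (nlen_one Γ)

lemma nlen_eps (x : V × Bool) : nlen Γ (eps Γ x) = 1 := by
  have h := nlen_eps_eq Γ x 1
  rw [mul_one] at h
  rw [h, NFrep_one]
  have : canc Γ x ([] : List (V × Bool)) = none := rfl
  rw [ins_eq_cons Γ this]
  rfl

lemma nlen_mul_eps (g : RAAG Γ) (x : V × Bool) :
    nlen Γ (g * eps Γ x) = nlen Γ g + 1 ∨ nlen Γ (g * eps Γ x) + 1 = nlen Γ g := by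
  rw [nlen_mul_eps_eq_inv, ← nlen_inv Γ g]
  exact nlen_eps_mul Γ (inv x) g⁻¹

lemma eps_ne_one (x : V × Bool) : eps Γ x ≠ 1 := by
  intro h
  have := nlen_eps Γ x
  rw [h, nlen_one] at this
  omega

/-! ### peeling letters -/

lemma peel_last {k : RAAG Γ} (h : k ≠ 1) :
    ∃ (L : List (V × Bool)) (x : V × Bool), NFrep Γ k = L ++ [x] ∧
      k = wprod Γ L * eps Γ x ∧ nlen Γ (wprod Γ L) = nlen Γ k - 1 ∧
      Geo Γ L ∧ L.length + 1 = nlen Γ k := by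
  have hne : NFrep Γ k ≠ [] := by
    intro hnil
    exact h (by rw [← wprod_NFrep Γ k, hnil, wprod_nil])
  rcases List.eq_nil_or_concat (NFrep Γ k) with hnil | ⟨L, x, hsplit0⟩
  · exact absurd hnil hne
  have hsplit : NFrep Γ k = L ++ [x] := by rw [hsplit0, List.concat_eq_append]
  have hk : k = wprod Γ L * eps Γ x := by
    rw [← wprod_NFrep Γ k, hsplit]; simp
  have hlen : L.length + 1 = nlen Γ k := by
    unfold nlen; rw [hsplit]; simp
  have h1 : nlen Γ (wprod Γ L) ≤ L.length := nlen_le_of_word Γ rfl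
  have h2 : nlen Γ k ≤ nlen Γ (wprod Γ L) + 1 := by
    calc nlen Γ k = nlen Γ (wprod Γ L * eps Γ x) := by rw [hk]
    _ ≤ nlen Γ (wprod Γ L) + nlen Γ (eps Γ x) := nlen_mul_le Γ _ _
    _ = nlen Γ (wprod Γ L) + 1 := by rw [nlen_eps]
  refine ⟨L, x, hsplit, hk, by omega, ?_, hlen⟩
  unfold Geo
  omega

lemma peel_first {k : RAAG Γ} (h : k ≠ 1) :
    ∃ (x : V × Bool) (L : List (V × Bool)), NFrep Γ k = x :: L ∧
      k = eps Γ x * wprod Γ L ∧ nlen Γ (wprod Γ L) = nlen Γ k - 1 ∧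
      Geo Γ L ∧ L.length + 1 = nlen Γ k := by
  have hne : NFrep Γ k ≠ [] := by
    intro hnil
    exact h (by rw [← wprod_NFrep Γ k, hnil, wprod_nil])
  rcases List.exists_cons_of_ne_nil hne with ⟨x, L, hsplit⟩
  have hk : k = eps Γ x * wprod Γ L := by
    rw [← wprod_NFrep Γ k, hsplit]; simp
  have hlen : L.length + 1 = nlen Γ k := by
    unfold nlen; rw [hsplit]; simp
  have h1 : nlen Γ (wprod Γ L) ≤ L.length := nlen_le_of_word Γ rfl
  have h2 : nlen Γ k ≤ nlen Γ (wprod Γ L) + 1 := by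
    calc nlen Γ k = nlen Γ (eps Γ x * wprod Γ L) := by rw [hk]
    _ ≤ nlen Γ (eps Γ x) + nlen Γ (wprod Γ L) := nlen_mul_le Γ _ _
    _ = nlen Γ (wprod Γ L) + 1 := by rw [nlen_eps]; omega
  refine ⟨x, L, hsplit, hk, by omega, ?_, hlen⟩
  unfold Geo
  omega

/-! ### Lemma A : geodesics to a coset concatenate -/

lemma lemmaA {W : Set V} {m : RAAG Γ}
    (hmin : ∀ k ∈ Subgroup.closure (raagGen Γ '' W), nlen Γ m ≤ nlen Γ (m * k)) :
    ∀ k ∈ Subgroup.closure (raagGen Γ '' W), nlen Γ (m * k) = nlen Γ m + nlen Γ k := by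
  have main : ∀ n k, k ∈ Subgroup.closure (raagGen Γ '' W) → nlen Γ k = n →
      nlen Γ (m * k) = nlen Γ m + n := by
    intro n
    induction n using Nat.strong_induction_on with
    | _ n ih =>
        intro k hk hkn
        by_cases h1 : k = 1
        · subst h1
          rw [nlen_one] at hkn
          rw [mul_one]
          omega
        · obtain ⟨L, x, hsplit, hkfact, hlen', hgeo, hlen⟩ := peel_last Γ h1
          have hx1 : x.1 ∈ W := by
            refine NFrep_letters Γ hk x ?_
            rw [hsplit]; simp
          have hLW : ∀ z ∈ L, z.1 ∈ W := by
            intro z hz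
            refine NFrep_letters Γ hk z ?_
            rw [hsplit]; simp [hz]
          have hk'mem : wprod Γ L ∈ Subgroup.closure (raagGen Γ '' W) :=
            wprod_mem Γ hLW
          have hn1 : nlen Γ (wprod Γ L) = n - 1 := by rw [hlen']; omega
          have hIH := ih (n - 1) (by omega) (wprod Γ L) hk'mem hn1
          -- m * k = (m * wprod L) * eps x
          have hmk : m * k = (m * wprod Γ L) * eps Γ x := by
            rw [hkfact, mul_assoc]
          rcases nlen_mul_eps Γ (m * wprod Γ L) x with hc | hc
          · rw [hmk, hc, hIH]
            omega
          · -- cancellation case: contradiction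
            exfalso
            have hlt : nlen Γ ((m * wprod Γ L) * eps Γ x) < nlen Γ (m * wprod Γ L) := by
              omega
            have hGeoW : Geo Γ (NFrep Γ m ++ L) := by
              unfold Geo
              rw [wprod_append, wprod_NFrep, hIH]
              unfold Geo at hgeo
              simp only [List.length_append]
              unfold nlen
              omega
            have hwW : wprod Γ (NFrep Γ m ++ L) = m * wprod Γ L := by
              rw [wprod_append, wprod_NFrep]
            have hrfr := (nlen_lt_iff_rfr Γ hGeoW hwW).mp hlt
            obtain ⟨P, R, hEq, hR⟩ := hrfr
            have hR' : ∀ z ∈ R, Γ.Adj x.1 z.1 := hR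
            rcases split3 (P := NFrep Γ m) (R := L) hEq with ⟨t, hPd, hRL⟩ | ⟨t, hm, hRt⟩
            · -- inv x inside L : k would be shorter
              have hkineq : nlen Γ k ≤ L.length - 1 := by
                have : k = wprod Γ (t ++ R) := by
                  rw [hkfact, hRL, mul_eps_of_splitR Γ hR']
                have h4 := nlen_le_of_word Γ this.symm
                have h5 := congrArg List.length hRL
                simp only [List.length_append, List.length_cons] at h4 h5 ⊢
                omega
              omega
            · -- inv x inside NFrep m : m could be shortened by a K-letter
              have ht' : ∀ z ∈ t, Γ.Adj x.1 z.1 := by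
                intro z hz
                exact hR' z (by rw [hRt]; simp [hz])
              have hms : m * eps Γ x = wprod Γ (P ++ t) := by
                conv_lhs => rw [← wprod_NFrep Γ m, hm]
                exact mul_eps_of_splitR Γ ht'
              have h4 := nlen_le_of_word Γ hms.symm
              have h5 : nlen Γ m ≤ nlen Γ (m * eps Γ x) :=
                hmin (eps Γ x) (eps_mem Γ hx1)
              have h6 := congrArg List.length hm
              unfold nlen at h4 h5 h6
              simp only [List.length_append, List.length_cons] at h4 h6
              omega
  intro k hk
  have := main (nlen Γ k) k hk rfl
  omega

lemma lemmaA' {W : Set V} {m : RAAG Γ}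
    (hmin : ∀ h ∈ Subgroup.closure (raagGen Γ '' W), nlen Γ m ≤ nlen Γ (h * m)) :
    ∀ h ∈ Subgroup.closure (raagGen Γ '' W), nlen Γ (h * m) = nlen Γ h + nlen Γ m := by
  have hmin' : ∀ k ∈ Subgroup.closure (raagGen Γ '' W),
      nlen Γ m⁻¹ ≤ nlen Γ (m⁻¹ * k) := by
    intro k hk
    have h1 : (m⁻¹ * k)⁻¹ = k⁻¹ * m := by group
    have h2 := hmin k⁻¹ (inv_mem hk)
    rw [← nlen_inv Γ (m⁻¹ * k), h1, nlen_inv Γ m]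
    exact h2
  intro h hh
  have := lemmaA Γ hmin' h⁻¹ (inv_mem hh)
  have h1 : (h * m)⁻¹ = m⁻¹ * h⁻¹ := by group
  calc nlen Γ (h * m) = nlen Γ (m⁻¹ * h⁻¹) := by rw [← nlen_inv Γ (h * m), h1]
  _ = nlen Γ m⁻¹ + nlen Γ h⁻¹ := this
  _ = nlen Γ h + nlen Γ m := by rw [nlen_inv, nlen_inv]; omega

/-! ### double coset lemmas -/

lemma commute_eps_of_adj_nfrep {x : V × Bool} {g : RAAG Γ}
    (h : ∀ z ∈ NFrep Γ g, Γ.Adj x.1 z.1) : Commute (eps Γ x) g := by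
  have hc : Commute (raagGen Γ x.1) g := commute_of_adj_nfrep Γ h
  unfold eps
  cases x.2
  · simpa using hc.inv_left
  · simpa using hc

section DoubleCoset

variable {VA VB : Set V} {g : RAAG Γ}

/-- M1 : uniqueness of the minimal element in a double coset of special subgroups. -/
lemma dcoset_min_unique
    (hgmin : ∀ h ∈ Subgroup.closure (raagGen Γ '' VA),
      ∀ k ∈ Subgroup.closure (raagGen Γ '' VB), nlen Γ g ≤ nlen Γ (h * g * k)) :
    ∀ h ∈ Subgroup.closure (raagGen Γ '' VA),
      ∀ k ∈ Subgroup.closure (raagGen Γ '' VB),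
        nlen Γ (h * g * k) = nlen Γ g → h * g * k = g := by
  set H := Subgroup.closure (raagGen Γ '' VA) with hH
  set K := Subgroup.closure (raagGen Γ '' VB) with hK
  have hminR : ∀ k ∈ K, nlen Γ g ≤ nlen Γ (g * k) := by
    intro k hk
    have := hgmin 1 (one_mem _) k hk
    simpa using this
  have hAg : ∀ k ∈ K, nlen Γ (g * k) = nlen Γ g + nlen Γ k := lemmaA Γ hminR
  have hminL : ∀ h ∈ H, nlen Γ g ≤ nlen Γ (h * g) := by
    intro h hh
    have := hgmin h hh 1 (one_mem _)
    simpa using this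
  have hA' : ∀ h ∈ H, nlen Γ (h * g) = nlen Γ h + nlen Γ g := lemmaA' Γ hminL
  have main : ∀ n h, h ∈ H → nlen Γ h = n → ∀ k ∈ K,
      nlen Γ (h * g * k) = nlen Γ g → h * g * k = g := by
    intro n
    induction n using Nat.strong_induction_on with
    | _ n ih =>
        intro h hh hhn k hk hx
        by_cases h1 : h = 1
        · subst h1
          rw [one_mul] at hx ⊢
          have := hAg k hk
          have hk0 : nlen Γ k = 0 := by omega
          rw [eq_one_of_nlen_zero Γ hk0, mul_one]
        · set x := h * g * k with hxdef
          have hxK : ∀ k' ∈ K, nlen Γ x ≤ nlen Γ (x * k') := by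
            intro k' hk'
            have h2 : x * k' = h * g * (k * k') := by rw [hxdef]; group
            rw [h2, hx]
            exact hgmin h hh (k * k') (mul_mem hk hk')
          have hAx : ∀ k' ∈ K, nlen Γ (x * k') = nlen Γ x + nlen Γ k' := lemmaA Γ hxK
          obtain ⟨x₀, L₁, hsplit, hfact, hlen', hgeo, hlen⟩ := peel_first Γ h1
          have hx₀A : x₀.1 ∈ VA := NFrep_letters Γ hh x₀ (by rw [hsplit]; simp)
          have hL₁A : ∀ z ∈ L₁, z.1 ∈ VA := fun z hz =>
            NFrep_letters Γ hh z (by rw [hsplit]; simp [hz])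
          set h₁ := wprod Γ L₁ with hh₁
          have hh₁H : h₁ ∈ H := wprod_mem Γ hL₁A
          -- two geodesic words for h * g
          have hW₁geo : Geo Γ (NFrep Γ h ++ NFrep Γ g) := by
            unfold Geo
            rw [wprod_append, wprod_NFrep, wprod_NFrep, hA' h hh]
            simp only [List.length_append]
            rfl
          have hW₁w : wprod Γ (NFrep Γ h ++ NFrep Γ g) = h * g := by
            rw [wprod_append, wprod_NFrep, wprod_NFrep]
          have hW₂w : wprod Γ (NFrep Γ x ++ invW (NFrep Γ k)) = h * g := by
            rw [wprod_append, wprod_NFrep, wprod_invW, wprod_NFrep, hxdef]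
            group
          have hW₂geo : Geo Γ (NFrep Γ x ++ invW (NFrep Γ k)) := by
            unfold Geo
            rw [hW₂w]
            have h2 : x * k⁻¹ = h * g := by rw [hxdef]; group
            have h3 := hAx k⁻¹ (inv_mem hk)
            rw [h2, nlen_inv] at h3
            simp only [List.length_append, length_invW]
            unfold nlen at h3 ⊢
            omega
          have hEqu : Equ Γ (NFrep Γ h ++ NFrep Γ g) (NFrep Γ x ++ invW (NFrep Γ k)) :=
            geo_geo_equ Γ hW₁geo hW₂geo (by rw [hW₁w, hW₂w])
          have hlfr1 : LFr Γ x₀ (NFrep Γ h ++ NFrep Γ g) :=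
            ⟨[], L₁ ++ NFrep Γ g, by rw [hsplit]; simp, by simp⟩
          have hlfr2 : LFr Γ x₀ (NFrep Γ x ++ invW (NFrep Γ k)) :=
            lfr_equ Γ hEqu hlfr1
          obtain ⟨P, R, hEq, hP⟩ := hlfr2
          rcases split3 (P := NFrep Γ x) (R := invW (NFrep Γ k)) hEq with
            ⟨t, hPd, hRt⟩ | ⟨t, hxd, hRt⟩
          · -- x₀ occurs in the k-part; x commutes with x₀
            have hxcomm : Commute (eps Γ x₀) x := by
              apply commute_eps_of_adj_nfrep Γ
              intro z hz
              exact hP z (by rw [hPd]; simp [hz])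
            have hx₀B : x₀.1 ∈ VB := by
              have hx₀mem : x₀ ∈ invW (NFrep Γ k) := by rw [hRt]; simp
              have := NFrep_letters Γ hk (inv x₀) (mem_invW.mp hx₀mem)
              rwa [inv_fst] at this
            -- x = h₁ * g * (k * eps x₀)
            have hxfact : x = h₁ * g * (k * eps Γ x₀) := by
              have e1 : eps Γ (inv x₀) * x = h₁ * g * k := by
                rw [hxdef, hfact, eps_inv]
                group
              have e2 : eps Γ (inv x₀) * x = x * eps Γ (inv x₀) := by
                rw [eps_inv]
                exact (hxcomm.inv_left.eq)
              have e3 : x * eps Γ (inv x₀) = h₁ * g * k := by rw [← e2, e1]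
              have : x = h₁ * g * k * eps Γ x₀ := by
                rw [← e3, eps_inv]; group
              rw [this]; group
            have hknew : k * eps Γ x₀ ∈ K := mul_mem hk (eps_mem Γ hx₀B)
            have hn1 : nlen Γ h₁ = n - 1 := by rw [hh₁, hlen']; omega
            have hnlt : n - 1 < n := by
              have : nlen Γ h ≠ 0 := fun e => h1 (eq_one_of_nlen_zero Γ e)
              omega
            have := ih (n - 1) hnlt h₁ hh₁H hn1 (k * eps Γ x₀) hknew
              (by rw [← hxfact]; exact hx)
            rw [← hxfact] at this
            rw [hxdef] at this
            exact this
          · -- x₀ occurs in NFrep x : x can be shortened, contradiction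
            exfalso
            have ht' : ∀ z ∈ P, Γ.Adj (inv x₀).1 z.1 := by
              intro z hz
              have := hP z hz
              rwa [inv_fst]
            have e1 : eps Γ (inv x₀) * x = wprod Γ (P ++ t) := by
              conv_lhs => rw [← wprod_NFrep Γ x, hxd]
              have := eps_mul_of_split Γ (x := inv x₀) (P := P) (R := t) ht'
              rwa [inv_inv] at this
            have h4 := nlen_le_of_word Γ e1.symm
            have h5 : eps Γ (inv x₀) * x = (eps Γ (inv x₀) * h) * g * k := by
              rw [hxdef]; group
            have h6 : eps Γ (inv x₀) * h ∈ H := mul_mem (eps_mem Γ (by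
              rw [inv_fst]; exact hx₀A)) hh
            have h7 := hgmin _ h6 k hk
            rw [← h5] at h7
            have h8 := congrArg List.length hxd
            unfold nlen at h4 h7 h8
            simp only [List.length_append, List.length_cons] at h4 h8
            have h9 : (NFrep Γ x).length = nlen Γ g := hx
            unfold nlen at h9
            omega
  intro h hh k hk hx
  exact main (nlen Γ h) h hh rfl k hk hx

/-- M2 : elements of `H` conjugating `g` into `K` lie in the special subgroup on
commuting common letters. -/
lemma dcoset_stab
    (hminL : ∀ h ∈ Subgroup.closure (raagGen Γ '' VA), nlen Γ g ≤ nlen Γ (h * g))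
    (hminR : ∀ k ∈ Subgroup.closure (raagGen Γ '' VB), nlen Γ g ≤ nlen Γ (g * k)) :
    ∀ h ∈ Subgroup.closure (raagGen Γ '' VA),
      g⁻¹ * h * g ∈ Subgroup.closure (raagGen Γ '' VB) →
      h ∈ Subgroup.closure
        (raagGen Γ '' {v | v ∈ VA ∧ v ∈ VB ∧ Commute (raagGen Γ v) g}) := by
  set H := Subgroup.closure (raagGen Γ '' VA) with hH
  set K := Subgroup.closure (raagGen Γ '' VB) with hK
  set S := {v | v ∈ VA ∧ v ∈ VB ∧ Commute (raagGen Γ v) g} with hS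
  have hA' : ∀ h ∈ H, nlen Γ (h * g) = nlen Γ h + nlen Γ g := lemmaA' Γ hminL
  have hAg : ∀ k ∈ K, nlen Γ (g * k) = nlen Γ g + nlen Γ k := lemmaA Γ hminR
  have main : ∀ n h, h ∈ H → nlen Γ h = n → g⁻¹ * h * g ∈ K →
      h ∈ Subgroup.closure (raagGen Γ '' S) := by
    intro n
    induction n using Nat.strong_induction_on with
    | _ n ih =>
        intro h hh hhn hkK
        by_cases h1 : h = 1
        · subst h1; exact one_mem _
        · set k := g⁻¹ * h * g with hkdef
          have hhg : h * g = g * k := by rw [hkdef]; group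
          have hnk : nlen Γ k = nlen Γ h := by
            have e1 := hA' h hh
            have e2 := hAg k hkK
            rw [hhg] at e1
            omega
          obtain ⟨x₀, L₁, hsplit, hfact, hlen', hgeo, hlen⟩ := peel_first Γ h1
          have hx₀A : x₀.1 ∈ VA := NFrep_letters Γ hh x₀ (by rw [hsplit]; simp)
          have hL₁A : ∀ z ∈ L₁, z.1 ∈ VA := fun z hz =>
            NFrep_letters Γ hh z (by rw [hsplit]; simp [hz])
          set h₁ := wprod Γ L₁ with hh₁
          have hh₁H : h₁ ∈ H := wprod_mem Γ hL₁A
          have hW₁geo : Geo Γ (NFrep Γ h ++ NFrep Γ g) := by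
            unfold Geo
            rw [wprod_append, wprod_NFrep, wprod_NFrep, hA' h hh]
            simp only [List.length_append]
            rfl
          have hW₁w : wprod Γ (NFrep Γ h ++ NFrep Γ g) = h * g := by
            rw [wprod_append, wprod_NFrep, wprod_NFrep]
          have hW₂w : wprod Γ (NFrep Γ g ++ NFrep Γ k) = h * g := by
            rw [wprod_append, wprod_NFrep, wprod_NFrep, hhg]
          have hW₂geo : Geo Γ (NFrep Γ g ++ NFrep Γ k) := by
            unfold Geo
            rw [hW₂w, hhg, hAg k hkK]
            simp only [List.length_append]
            unfold nlen
            omega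
          have hEqu : Equ Γ (NFrep Γ h ++ NFrep Γ g) (NFrep Γ g ++ NFrep Γ k) :=
            geo_geo_equ Γ hW₁geo hW₂geo (by rw [hW₁w, hW₂w])
          have hlfr1 : LFr Γ x₀ (NFrep Γ h ++ NFrep Γ g) :=
            ⟨[], L₁ ++ NFrep Γ g, by rw [hsplit]; simp, by simp⟩
          have hlfr2 : LFr Γ x₀ (NFrep Γ g ++ NFrep Γ k) := lfr_equ Γ hEqu hlfr1
          obtain ⟨P, R, hEq, hP⟩ := hlfr2
          rcases split3 (P := NFrep Γ g) (R := NFrep Γ k) hEq with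
            ⟨t, hPd, hRt⟩ | ⟨t, hgd, hRt⟩
          · -- x₀ occurs in NFrep k ; g commutes with x₀
            have hgcomm : ∀ z ∈ NFrep Γ g, Γ.Adj x₀.1 z.1 := by
              intro z hz
              exact hP z (by rw [hPd]; simp [hz])
            have hx₀B : x₀.1 ∈ VB := NFrep_letters Γ hkK x₀ (by rw [hRt]; simp)
            have hcommgen : Commute (raagGen Γ x₀.1) g := commute_of_adj_nfrep Γ hgcomm
            have hx₀S : x₀.1 ∈ S := ⟨hx₀A, hx₀B, hcommgen⟩
            have hcommeps : Commute (eps Γ (inv x₀)) g := by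
              have := commute_eps_of_adj_nfrep Γ (x := inv x₀) (g := g) (by
                intro z hz
                have := hgcomm z hz
                rwa [inv_fst])
              exact this
            have hk₁K : g⁻¹ * h₁ * g ∈ K := by
              have e1 : h₁ = eps Γ (inv x₀) * h := by
                rw [hfact, eps_inv]; group
              have e2 : g⁻¹ * h₁ * g = eps Γ (inv x₀) * k := by
                rw [e1, hkdef]
                have : g⁻¹ * (eps Γ (inv x₀) * h) * g =
                    (g⁻¹ * eps Γ (inv x₀) * g) * (g⁻¹ * h * g) := by group
                rw [this]
                have : g⁻¹ * eps Γ (inv x₀) * g = eps Γ (inv x₀) := by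
                  have := hcommeps.eq
                  calc g⁻¹ * eps Γ (inv x₀) * g = g⁻¹ * (eps Γ (inv x₀) * g) := by group
                  _ = g⁻¹ * (g * eps Γ (inv x₀)) := by rw [this]
                  _ = eps Γ (inv x₀) := by group
                rw [this]
              rw [e2]
              exact mul_mem (eps_mem Γ (by rw [inv_fst]; exact hx₀B)) hkK
            have hn1 : nlen Γ h₁ = n - 1 := by rw [hh₁, hlen']; omega
            have hnlt : n - 1 < n := by
              have : nlen Γ h ≠ 0 := fun e => h1 (eq_one_of_nlen_zero Γ e)
              omega
            have hmem := ih (n - 1) hnlt h₁ hh₁H hn1 hk₁K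
            have : h = eps Γ x₀ * h₁ := hfact
            rw [this]
            exact mul_mem (eps_mem Γ hx₀S) hmem
          · -- x₀ occurs inside NFrep g : contradiction with minimality
            exfalso
            have ht' : ∀ z ∈ P, Γ.Adj (inv x₀).1 z.1 := by
              intro z hz
              have := hP z hz
              rwa [inv_fst]
            have e1 : eps Γ (inv x₀) * g = wprod Γ (P ++ t) := by
              conv_lhs => rw [← wprod_NFrep Γ g, hgd]
              have := eps_mul_of_split Γ (x := inv x₀) (P := P) (R := t) ht'
              rwa [inv_inv] at this
            have h4 := nlen_le_of_word Γ e1.symm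
            have h6 : eps Γ (inv x₀) ∈ H := eps_mem Γ (by rw [inv_fst]; exact hx₀A)
            have h7 := hminL _ h6
            have h8 := congrArg List.length hgd
            unfold nlen at h4 h7 h8
            simp only [List.length_append, List.length_cons] at h4 h8
            omega
  intro h hh hc
  exact main (nlen Γ h) h hh rfl hc

end DoubleCoset

/-! ### the Cayley graph distance -/

lemma cay_adj (a : RAAG Γ) (x : V × Bool) : (CayG Γ).Adj a (a * eps Γ x) := by
  rw [CayG, SimpleGraph.fromRel_adj]
  constructor
  · intro h
    apply eps_ne_one Γ x
    have h2 : a * eps Γ x = a * 1 := by rw [mul_one, ← h]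
    exact mul_left_cancel h2
  · rcases hb : x.2 with _ | _
    · right
      refine ⟨x.1, ?_⟩
      have : eps Γ x = (raagGen Γ x.1)⁻¹ := by simp [eps, hb]
      rw [this]; group
    · left
      refine ⟨x.1, ?_⟩
      have : eps Γ x = raagGen Γ x.1 := by simp [eps, hb]
      rw [this]

lemma walk_of_word : ∀ (L : List (V × Bool)) (a b : RAAG Γ), b = a * wprod Γ L →
    ∃ p : (CayG Γ).Walk a b, p.length = L.length := by
  intro L
  induction L with
  | nil =>
      intro a b hb
      rw [wprod_nil, mul_one] at hb
      subst hb
      exact ⟨SimpleGraph.Walk.nil, rfl⟩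
  | cons x L ih =>
      intro a b hb
      obtain ⟨p, hp⟩ := ih (a * eps Γ x) b (by rw [hb, wprod_cons]; group)
      exact ⟨SimpleGraph.Walk.cons (cay_adj Γ a x) p, by simp [hp]⟩

lemma cay_reachable (a b : RAAG Γ) : (CayG Γ).Reachable a b := by
  obtain ⟨p, -⟩ := walk_of_word Γ (NFrep Γ (a⁻¹ * b)) a b (by rw [wprod_NFrep]; group)
  exact ⟨p⟩

lemma nlen_le_walk {a b : RAAG Γ} (p : (CayG Γ).Walk a b) :
    nlen Γ (a⁻¹ * b) ≤ p.length := by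
  induction p with
  | nil => simp [nlen_one]
  | @cons a c b hadj p ih =>
      rw [CayG, SimpleGraph.fromRel_adj] at hadj
      obtain ⟨-, h | h⟩ := hadj.imp id id
      · obtain ⟨v, rfl⟩ := h
        have h1 : a⁻¹ * b = eps Γ (v, true) * ((a * raagGen Γ v)⁻¹ * b) := by
          simp [eps]; group
        rw [h1]
        calc nlen Γ _ ≤ nlen Γ (eps Γ (v, true)) + nlen Γ ((a * raagGen Γ v)⁻¹ * b) :=
              nlen_mul_le Γ _ _
        _ = nlen Γ ((a * raagGen Γ v)⁻¹ * b) + 1 := by rw [nlen_eps]; omega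
        _ ≤ p.length + 1 := by omega
        _ = (SimpleGraph.Walk.cons _ p).length := by simp
      · obtain ⟨v, hv⟩ := h
        have h1 : a⁻¹ * b = eps Γ (v, false) * (c⁻¹ * b) := by
          rw [hv]
          simp [eps]; group
        rw [h1]
        calc nlen Γ _ ≤ nlen Γ (eps Γ (v, false)) + nlen Γ (c⁻¹ * b) :=
              nlen_mul_le Γ _ _
        _ = nlen Γ (c⁻¹ * b) + 1 := by rw [nlen_eps]; omega
        _ ≤ p.length + 1 := by omega
        _ = (SimpleGraph.Walk.cons _ p).length := by simp

lemma cay_dist (a b : RAAG Γ) : (CayG Γ).dist a b = nlen Γ (a⁻¹ * b) := by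
  apply le_antisymm
  · obtain ⟨p, hp⟩ := walk_of_word Γ (NFrep Γ (a⁻¹ * b)) a b (by rw [wprod_NFrep]; group)
    have := SimpleGraph.dist_le p
    rw [hp] at this
    exact this
  · obtain ⟨p, hp⟩ := (cay_reachable Γ a b).exists_walk_length_eq_dist
    rw [← hp]
    exact nlen_le_walk Γ p

/-! ### the gate of a coset -/

lemma commute_of_mem_S {g : RAAG Γ} {S : Set V} (hS : ∀ v ∈ S, Commute (raagGen Γ v) g)
    {s : RAAG Γ} (hs : s ∈ Subgroup.closure (raagGen Γ '' S)) : Commute s g := by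
  induction hs using Subgroup.closure_induction with
  | mem z hz =>
      obtain ⟨v, hv, rfl⟩ := hz
      exact hS v hv
  | one => exact Commute.one_left g
  | mul a b _ _ iha ihb => exact iha.mul_left ihb
  | inv a _ iha => exact iha.inv_left

lemma gate_coset {VA VB : Set V} {A B : Set (RAAG Γ)} (a₀ b₀ p q g : RAAG Γ)
    (hA : A = (a₀ * ·) '' (Subgroup.closure (raagGen Γ '' VA) : Subgroup (RAAG Γ)))
    (hB : B = (b₀ * ·) '' (Subgroup.closure (raagGen Γ '' VB) : Subgroup (RAAG Γ)))
    (hp : p ∈ Subgroup.closure (raagGen Γ '' VA))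
    (hq : q ∈ Subgroup.closure (raagGen Γ '' VB))
    (hgdef : g = p * (a₀⁻¹ * b₀) * q)
    (hDmin : ∀ h ∈ Subgroup.closure (raagGen Γ '' VA),
      ∀ k ∈ Subgroup.closure (raagGen Γ '' VB), nlen Γ g ≤ nlen Γ (h * g * k)) :
    gate (CayG Γ) A B = ((a₀ * p⁻¹) * ·) ''
      (Subgroup.closure (raagGen Γ ''
        {v | v ∈ VA ∧ v ∈ VB ∧ Commute (raagGen Γ v) g}) : Subgroup (RAAG Γ)) := by
  set H := Subgroup.closure (raagGen Γ '' VA) with hHdef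
  set K := Subgroup.closure (raagGen Γ '' VB) with hKdef
  set S := {v | v ∈ VA ∧ v ∈ VB ∧ Commute (raagGen Γ v) g} with hSdef
  set SG := Subgroup.closure (raagGen Γ '' S) with hSGdef
  have hSH : SG ≤ H := Subgroup.closure_mono (Set.image_mono fun v hv => hv.1)
  have hSK : SG ≤ K := Subgroup.closure_mono (Set.image_mono fun v hv => hv.2.1)
  have hcomm : ∀ s ∈ SG, Commute s g :=
    fun s hs => commute_of_mem_S Γ (fun v hv => hv.2.2) hs
  have memA : ∀ h ∈ H, a₀ * h ∈ A := fun h hh => by rw [hA]; exact ⟨h, hh, rfl⟩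
  have memB : ∀ k ∈ K, b₀ * k ∈ B := fun k hk => by rw [hB]; exact ⟨k, hk, rfl⟩
  have dco : ∀ h k : RAAG Γ, (CayG Γ).dist (a₀ * h) (b₀ * k) =
      nlen Γ (h⁻¹ * (a₀⁻¹ * b₀) * k) := by
    intro h k
    rw [cay_dist]
    congr 1
    group
  have hrw : ∀ h k : RAAG Γ, h⁻¹ * (a₀⁻¹ * b₀) * k =
      (h⁻¹ * p⁻¹) * g * (q⁻¹ * k) := by
    intro h k
    rw [hgdef]
    group
  -- distance between the cosets
  have DAB : sDist (CayG Γ) A B = nlen Γ g := by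
    apply le_antisymm
    · apply Nat.sInf_le
      refine ⟨a₀ * p⁻¹, memA p⁻¹ (inv_mem hp), b₀ * q, memB q hq, ?_⟩
      rw [dco]
      congr 1
      rw [hgdef]
      group
    · apply le_csInf
      · exact ⟨(CayG Γ).dist (a₀ * 1) (b₀ * 1),
          a₀ * 1, memA 1 (one_mem _), b₀ * 1, memB 1 (one_mem _), rfl⟩
      · rintro n ⟨a, ha, b, hb, rfl⟩
        rw [hA] at ha
        rw [hB] at hb
        obtain ⟨h, hh, rfl⟩ := ha
        obtain ⟨k, hk, rfl⟩ := hb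
        rw [dco, hrw]
        exact hDmin _ (mul_mem (inv_mem hh) (inv_mem hp)) _ (mul_mem (inv_mem hq) hk)
  -- distance from a point of A
  have pt_iff : ∀ h ∈ H, (sDist (CayG Γ) {a₀ * h} B = nlen Γ g ↔
      ∃ k ∈ K, nlen Γ (h⁻¹ * (a₀⁻¹ * b₀) * k) = nlen Γ g) := by
    intro h hh
    have hset : {n : ℕ | ∃ a' ∈ ({a₀ * h} : Set (RAAG Γ)), ∃ b ∈ B, (CayG Γ).dist a' b = n} =
        {n : ℕ | ∃ k ∈ K, nlen Γ (h⁻¹ * (a₀⁻¹ * b₀) * k) = n} := by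
      ext n
      constructor
      · rintro ⟨a', ha', b, hb, rfl⟩
        rcases ha' with rfl
        rw [hB] at hb
        obtain ⟨k, hk, rfl⟩ := hb
        exact ⟨k, hk, (dco h k).symm⟩
      · rintro ⟨k, hk, rfl⟩
        exact ⟨a₀ * h, rfl, b₀ * k, memB k hk, dco h k⟩
    have hne : {n : ℕ | ∃ k ∈ K, nlen Γ (h⁻¹ * (a₀⁻¹ * b₀) * k) = n}.Nonempty :=
      ⟨_, 1, one_mem _, rfl⟩
    have hlb : ∀ n ∈ {n : ℕ | ∃ k ∈ K, nlen Γ (h⁻¹ * (a₀⁻¹ * b₀) * k) = n},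
        nlen Γ g ≤ n := by
      rintro n ⟨k, hk, rfl⟩
      rw [hrw]
      exact hDmin _ (mul_mem (inv_mem hh) (inv_mem hp)) _ (mul_mem (inv_mem hq) hk)
    unfold sDist
    rw [hset]
    constructor
    · intro he
      have := Nat.sInf_mem hne
      rw [he] at this
      exact this
    · intro hex
      exact le_antisymm (Nat.sInf_le hex) (le_csInf hne hlb)
  -- the characterisation of minimizers
  have char : ∀ h ∈ H, ((∃ k ∈ K, nlen Γ (h⁻¹ * (a₀⁻¹ * b₀) * k) = nlen Γ g) ↔
      p * h ∈ SG) := by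
    intro h hh
    constructor
    · rintro ⟨k, hk, hkmin⟩
      rw [hrw] at hkmin
      set h' := h⁻¹ * p⁻¹ with hh'def
      set k' := q⁻¹ * k with hk'def
      have hh'H : h' ∈ H := mul_mem (inv_mem hh) (inv_mem hp)
      have hk'K : k' ∈ K := mul_mem (inv_mem hq) hk
      have huniq := dcoset_min_unique Γ hDmin h' hh'H k' hk'K hkmin
      have hconj : g⁻¹ * h' * g ∈ K := by
        have h2 : g⁻¹ * (h' * g * k') * k'⁻¹ = g⁻¹ * g * k'⁻¹ := by rw [huniq]
        have h3 : g⁻¹ * h' * g = k'⁻¹ := by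
          calc g⁻¹ * h' * g = g⁻¹ * (h' * g * k') * k'⁻¹ := by group
          _ = g⁻¹ * g * k'⁻¹ := h2
          _ = k'⁻¹ := by group
        rw [h3]
        exact inv_mem hk'K
      have hminL : ∀ h'' ∈ H, nlen Γ g ≤ nlen Γ (h'' * g) := by
        intro h'' hh''
        have := hDmin h'' hh'' 1 (one_mem _)
        simpa using this
      have hminR : ∀ k'' ∈ K, nlen Γ g ≤ nlen Γ (g * k'') := by
        intro k'' hk''
        have := hDmin 1 (one_mem _) k'' hk''
        simpa using this
      have hstab := dcoset_stab Γ hminL hminR h' hh'H hconj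
      have : h'⁻¹ ∈ SG := inv_mem hstab
      have he : h'⁻¹ = p * h := by rw [hh'def]; group
      rwa [he] at this
    · intro hs
      refine ⟨q * (p * h), mul_mem hq (hSK hs), ?_⟩
      rw [hrw]
      have h1 : (h⁻¹ * p⁻¹) * g * (q⁻¹ * (q * (p * h))) = (p * h)⁻¹ * g * (p * h) := by
        group
      have hc := (hcomm (p * h) hs).eq
      have h2 : (p * h)⁻¹ * g * (p * h) = g := by
        calc (p * h)⁻¹ * g * (p * h) = (p * h)⁻¹ * (g * (p * h)) := by group
        _ = (p * h)⁻¹ * ((p * h) * g) := by rw [← hc]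
        _ = g := by group
      rw [h1, h2]
  -- conclusion
  ext a
  constructor
  · rintro ⟨haA, hsd⟩
    rw [hA] at haA
    obtain ⟨h, hh, rfl⟩ := haA
    rw [DAB] at hsd
    have := (char h hh).mp ((pt_iff h hh).mp hsd)
    refine ⟨p * h, this, ?_⟩
    show a₀ * p⁻¹ * (p * h) = a₀ * h
    group
  · rintro ⟨s, hs, rfl⟩
    have hhH : p⁻¹ * s ∈ H := mul_mem (inv_mem hp) (hSH hs)
    have he : a₀ * p⁻¹ * s = a₀ * (p⁻¹ * s) := by group
    constructor
    · show a₀ * p⁻¹ * s ∈ A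
      rw [hA]
      exact ⟨p⁻¹ * s, hhH, he.symm⟩
    · show sDist (CayG Γ) {a₀ * p⁻¹ * s} B = sDist (CayG Γ) A B
      rw [he, DAB]
      apply (pt_iff _ hhH).mpr
      apply (char _ hhH).mpr
      have hps : p * (p⁻¹ * s) = s := by group
      rwa [hps]

end S7

/-- if `A` is a coset of `⟨V_A⟩` and `B` a coset of `⟨V_B⟩` in `A(Γ)`
(for subsets `V_A, V_B` of the vertices of `Γ`), then there is a subset
`V_{A,B} ⊆ V_A ∩ V_B` such that both gates `ρ_A^B` and `ρ_B^A` are cosets of `⟨V_{A,B}⟩`. -/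
theorem stmt7 {V : Type} [Fintype V] (Γ : SimpleGraph V) (VA VB : Set V)
    (A B : Set (RAAG Γ)) (a₀ b₀ : RAAG Γ)
    (hA : A = (a₀ * ·) '' (Subgroup.closure (raagGen Γ '' VA) : Subgroup (RAAG Γ)))
    (hB : B = (b₀ * ·) '' (Subgroup.closure (raagGen Γ '' VB) : Subgroup (RAAG Γ))) :
    ∃ S : Set V, S ⊆ VA ∩ VB ∧
      (∃ c : RAAG Γ, gate (CayG Γ) A B =
        (c * ·) '' (Subgroup.closure (raagGen Γ '' S) : Subgroup (RAAG Γ))) ∧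
      (∃ c : RAAG Γ, gate (CayG Γ) B A =
        (c * ·) '' (Subgroup.closure (raagGen Γ '' S) : Subgroup (RAAG Γ))) := by
  classical
  set H := Subgroup.closure (raagGen Γ '' VA) with hHdef
  set K := Subgroup.closure (raagGen Γ '' VB) with hKdef
  -- find a closest pair
  set DSet := {n : ℕ | ∃ a ∈ A, ∃ b ∈ B, (CayG Γ).dist a b = n} with hDSet
  have hne : DSet.Nonempty := by
    refine ⟨(CayG Γ).dist (a₀ * 1) (b₀ * 1), a₀ * 1, ?_, b₀ * 1, ?_, rfl⟩
    · rw [hA]; exact ⟨1, one_mem _, rfl⟩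
    · rw [hB]; exact ⟨1, one_mem _, rfl⟩
  obtain ⟨a, haA, b, hbB, hd⟩ := Nat.sInf_mem hne
  rw [hA] at haA
  rw [hB] at hbB
  obtain ⟨h₁, hh₁, rfl⟩ := haA
  obtain ⟨k₁, hk₁, rfl⟩ := hbB
  set p := h₁⁻¹ with hpdef
  set q := k₁ with hqdef
  have hp : p ∈ H := inv_mem hh₁
  have hq : q ∈ K := hk₁
  set g := p * (a₀⁻¹ * b₀) * q with hgdef
  have hdg : (CayG Γ).dist (a₀ * h₁) (b₀ * k₁) = S7.nlen Γ g := by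
    rw [S7.cay_dist]
    congr 1
    rw [hgdef, hpdef, hqdef]
    group
  have hDg : S7.nlen Γ g = sInf DSet := by rw [← hd, hdg]
  have hDmin : ∀ h ∈ H, ∀ k ∈ K, S7.nlen Γ g ≤ S7.nlen Γ (h * g * k) := by
    intro h hh k hk
    have hmem : S7.nlen Γ (h * g * k) ∈ DSet := by
      refine ⟨a₀ * (p⁻¹ * h⁻¹), ?_, b₀ * (q * k), ?_, ?_⟩
      · rw [hA]; exact ⟨p⁻¹ * h⁻¹, mul_mem (inv_mem hp) (inv_mem hh), rfl⟩
      · rw [hB]; exact ⟨q * k, mul_mem hq hk, rfl⟩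
      · rw [S7.cay_dist]
        congr 1
        rw [hgdef]
        group
    rw [hDg]
    exact Nat.sInf_le hmem
  -- the common subset S
  set S := {v | v ∈ VA ∧ v ∈ VB ∧ Commute (raagGen Γ v) g} with hSdef
  refine ⟨S, fun v hv => ⟨hv.1, hv.2.1⟩, ?_, ?_⟩
  · exact ⟨a₀ * p⁻¹, S7.gate_coset Γ a₀ b₀ p q g hA hB hp hq hgdef hDmin⟩
  · -- the other gate, with the roles swapped
    set g' := q⁻¹ * (b₀⁻¹ * a₀) * p⁻¹ with hg'def
    have hg'inv : g' = g⁻¹ := by rw [hg'def, hgdef]; group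
    have hDmin' : ∀ k ∈ K, ∀ h ∈ H, S7.nlen Γ g' ≤ S7.nlen Γ (k * g' * h) := by
      intro k hk h hh
      have e1 : (k * g' * h)⁻¹ = h⁻¹ * g * k⁻¹ := by rw [hg'inv]; group
      rw [← S7.nlen_inv Γ (k * g' * h), e1, hg'inv, S7.nlen_inv]
      exact hDmin h⁻¹ (inv_mem hh) k⁻¹ (inv_mem hk)
    have hgate := S7.gate_coset Γ b₀ a₀ q⁻¹ p⁻¹ g' hB hA (inv_mem hq) (inv_mem hp)
      rfl hDmin'
    refine ⟨b₀ * q⁻¹⁻¹, ?_⟩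
    rw [hgate]
    have hSeq : {v | v ∈ VB ∧ v ∈ VA ∧ Commute (raagGen Γ v) g'} = S := by
      ext v
      rw [hSdef]
      simp only [Set.mem_setOf_eq, hg'inv]
      constructor
      · rintro ⟨h1, h2, h3⟩
        exact ⟨h2, h1, (Commute.inv_right_iff).mp h3⟩
      · rintro ⟨h1, h2, h3⟩
        exact ⟨h2, h1, h3.inv_right⟩
    rw [hSeq]
end

section
/- Let X be a CAT(0) cube complex, x, y ∈ X^(0), ξ in the Roller boundary of X, and h, k hyperplanes that separate x from ξ and also y from ξ and such that h and k do not cross. Then d(x,h) < d(x,k) if and only if d(y,h) < d(y,k). -/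
/-- An abstract (combinatorial) model of a CAT(0) cube complex: its `0`-skeleton `V` with
the graph `G` given by the `1`-skeleton, together with its set `H` of hyperplanes; each
hyperplane delimits two halfspaces, recorded by the function `side` telling on which side
of each hyperplane a vertex lies.  The graph metric (ℓ¹-metric) between two vertices is
the number of hyperplanes separating them, and halfspaces are convex. -/
structure CCC where
  V : Type
  G : SimpleGraph V
  conn : G.Preconnected
  H : Type
  side : H → V → Bool
  finsep : ∀ u v : V, {h : H | side h u ≠ side h v}.Finite
  dist_sep : ∀ u v : V, G.dist u v = {h : H | side h u ≠ side h v}.ncard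
  convex_side : ∀ (h : H) (b : Bool), GraphConvex G {v : V | side h v = b}
  nonempty_side : ∀ (h : H) (b : Bool), ∃ v : V, side h v = b

namespace CCC

variable (C : CCC)

/-- A consistent orientation of the hyperplanes: any two chosen halfspaces intersect.
These are exactly the points of the Roller compactification `ℜX`. -/
def Consistent (α : C.H → Bool) : Prop :=
  ∀ h k : C.H, ∃ v : C.V, C.side h v = α h ∧ C.side k v = α k

/-- The point of the Roller compactification determined by a vertex. -/
def vtxPt (v : C.V) : C.H → Bool := fun h => C.side h v

/-- A point of the Roller boundary `∂_ℜ X`: a consistent orientation which does not come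
from a vertex. -/
def InBoundary (α : C.H → Bool) : Prop :=
  Consistent C α ∧ ∀ v : C.V, α ≠ vtxPt C v

/-- The distance in terms of the graph metric from a vertex to (the carrier of) a
hyperplane, measured as the distance to the halfspace of `h` not containing `o`. -/
noncomputable def hdist (o : C.V) (h : C.H) : ℕ :=
  sInf {n : ℕ | ∃ v : C.V, C.side h v ≠ C.side h o ∧ C.G.dist o v = n}

/-- Two hyperplanes cross if all four quadrants are nonempty. -/
def Cross (h k : C.H) : Prop :=
  ∀ b c : Bool, ∃ v : C.V, C.side h v = b ∧ C.side k v = c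

/-- The distance between two subsets of the vertex set. -/
noncomputable def setDist (A B : Set C.V) : ℕ :=
  sInf {n : ℕ | ∃ a ∈ A, ∃ b ∈ B, C.G.dist a b = n}

end CCC

private lemma bool_eq_of_ne_of_ne {a b c : Bool} (h1 : a ≠ c) (h2 : b ≠ c) : a = b := by
  revert h1 h2; cases a <;> cases b <;> cases c <;> decide

/-- Distance from the start of a walk to its `i`-th vertex is at most `i`. -/
private lemma dist_getVert (C : CCC) {u v : C.V} (p : C.G.Walk u v) (i : ℕ) :
    C.G.dist u (p.getVert i) ≤ i := by
  haveI : Nonempty C.V := ⟨u⟩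
  have hconn : C.G.Connected := SimpleGraph.Connected.mk C.conn
  induction i with
  | zero => simp
  | succ i ih =>
    by_cases hi : i < p.length
    · have hadj := p.adj_getVert_succ hi
      have h1 : C.G.dist (p.getVert i) (p.getVert (i + 1)) = 1 :=
        SimpleGraph.dist_eq_one_iff_adj.mpr hadj
      calc C.G.dist u (p.getVert (i + 1))
          ≤ C.G.dist u (p.getVert i) + C.G.dist (p.getVert i) (p.getVert (i + 1)) :=
            hconn.dist_triangle
        _ ≤ i + 1 := by omega
    · rw [p.getVert_of_length_le (by omega)]
      rw [p.getVert_of_length_le (by omega)] at ih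
      omega

/-- Two distinct separating hyperplanes force distance at least `2`. -/
private lemma two_le_dist (C : CCC) {h k : C.H} (hne : h ≠ k) {u v : C.V}
    (hh : C.side h u ≠ C.side h v) (hk : C.side k u ≠ C.side k v) :
    2 ≤ C.G.dist u v := by
  rw [C.dist_sep u v]
  have hsub : ({h, k} : Set C.H) ⊆ {h' : C.H | C.side h' u ≠ C.side h' v} := by
    rintro h' (rfl | rfl) <;> assumption
  calc 2 = ({h, k} : Set C.H).ncard := (Set.ncard_pair hne).symm
    _ ≤ _ := Set.ncard_le_ncard hsub (C.finsep u v)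

/-- Key lemma: if the halfspace `{side k · = c}` is contained in `{side h · = b}`, and `o`
lies in neither, then `o` is strictly closer to `h` than to `k`. -/
private lemma key (C : CCC) {h k : C.H} (hne : h ≠ k) {b c : Bool}
    (hsub : ∀ v : C.V, C.side k v = c → C.side h v = b) {o : C.V}
    (hho : C.side h o ≠ b) (hko : C.side k o ≠ c) :
    CCC.hdist C o h < CCC.hdist C o k := by
  classical
  set S : Set ℕ := {n : ℕ | ∃ v : C.V, C.side k v ≠ C.side k o ∧ C.G.dist o v = n} with hS
  have hSne : S.Nonempty := by
    obtain ⟨v0, hv0⟩ := C.nonempty_side k c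
    exact ⟨C.G.dist o v0, v0, by rw [hv0]; exact fun e => hko e.symm, rfl⟩
  have hmem : CCC.hdist C o k ∈ S := Nat.sInf_mem hSne
  obtain ⟨v, hkv, hdv⟩ := hmem
  set n := CCC.hdist C o k with hn
  have hkvc : C.side k v = c := by
    revert hkv hko; cases hc : C.side k v <;> cases hc' : C.side k o <;> cases c <;> simp_all
  have hhv : C.side h v = b := hsub v hkvc
  have hpos : 0 < C.G.dist o v := by
    rw [C.dist_sep o v]
    exact Set.ncard_pos (C.finsep o v) |>.mpr ⟨k, fun e => hkv e.symm⟩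
  obtain ⟨p, hp⟩ := SimpleGraph.exists_walk_of_dist_ne_zero (G := C.G) (u := o) (v := v) (by omega)
  set T : Set ℕ := {i : ℕ | C.side k (p.getVert i) ≠ C.side k o} with hT
  have hTne : T.Nonempty :=
    ⟨p.length, show C.side k (p.getVert p.length) ≠ C.side k o by
      rw [p.getVert_length]; exact hkv⟩
  set i0 := sInf T with hi0
  have hi0T : i0 ∈ T := Nat.sInf_mem hTne
  have hi0pos : 0 < i0 := by
    rcases Nat.eq_zero_or_pos i0 with h0 | h0
    · exfalso
      rw [h0] at hi0T
      have h0' : C.side k (p.getVert 0) ≠ C.side k o := hi0T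
      rw [p.getVert_zero] at h0'
      exact h0' rfl
    · exact h0
  have hdle : C.G.dist o (p.getVert i0) ≤ i0 := dist_getVert C p i0
  have hle1 : n ≤ C.G.dist o (p.getVert i0) :=
    Nat.sInf_le ⟨p.getVert i0, hi0T, rfl⟩

  have hi0le : i0 ≤ p.length :=
    Nat.sInf_le (show C.side k (p.getVert p.length) ≠ C.side k o by
      rw [p.getVert_length]; exact hkv)
  have hpl : p.length = n := by rw [hp, hdv]
  have hi0eq : i0 = p.length := by omega
  have hgi0 : p.getVert i0 = v := by rw [hi0eq, p.getVert_length]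
  set w := p.getVert (i0 - 1) with hw
  have hwT : (i0 - 1) ∉ T := Nat.notMem_of_lt_sInf (by omega)
  have hkw : C.side k w = C.side k o := by
    by_contra hc
    exact hwT (show C.side k (p.getVert (i0 - 1)) ≠ C.side k o from hc)
  have hadj : C.G.Adj w v := by
    have := p.adj_getVert_succ (show i0 - 1 < p.length by omega)
    rwa [show i0 - 1 + 1 = i0 by omega, hgi0] at this
  have hdw : C.G.dist o w ≤ i0 - 1 := dist_getVert C p (i0 - 1)
  by_cases hb : C.side h w = b
  · have : CCC.hdist C o h ≤ C.G.dist o w :=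
      Nat.sInf_le ⟨w, by rw [hb]; exact fun e => hho e.symm, rfl⟩
    omega
  · exfalso
    have h2 : 2 ≤ C.G.dist w v :=
      two_le_dist C hne (by rw [hhv]; exact hb) (by rw [hkw]; exact fun e => hkv e.symm)
    have h1 : C.G.dist w v = 1 := SimpleGraph.dist_eq_one_iff_adj.mpr hadj
    omega

open CCC in
/-- if hyperplanes `h`, `k` do not cross, and both separate the vertex `x`
from the Roller boundary point `ξ` and also the vertex `y` from `ξ`, then
`d(x,h) < d(x,k) ↔ d(y,h) < d(y,k)`. -/
theorem stmt9 (C : CCC) (x y : C.V) (ξ : C.H → Bool) (hξ : InBoundary C ξ)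
    (h k : C.H) (hcr : ¬ Cross C h k)
    (hhx : C.side h x ≠ ξ h) (hkx : C.side k x ≠ ξ k)
    (hhy : C.side h y ≠ ξ h) (hky : C.side k y ≠ ξ k) :
    (hdist C x h < hdist C x k ↔ hdist C y h < hdist C y k) := by
  by_cases hne : h = k
  · subst hne; simp
  unfold Cross at hcr
  push_neg at hcr
  obtain ⟨b, c, hbc⟩ := hcr
  obtain ⟨v1, hv1h, hv1k⟩ := hξ.1 h k
  by_cases hb : b = ξ h
  · -- quadrant (ξ h, c) empty, with c ≠ ξ k; so {h = ξ h} ⊆ {k = ξ k}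
    have hc : c ≠ ξ k := by
      rintro rfl; exact (hbc v1 (hb ▸ hv1h)) hv1k
    have hsub : ∀ v : C.V, C.side h v = ξ h → C.side k v = ξ k := by
      intro v hv
      have := hbc v (hb ▸ hv)
      exact bool_eq_of_ne_of_ne this (Ne.symm hc)
    have hx' := key C (Ne.symm hne) hsub hkx hhx
    have hy' := key C (Ne.symm hne) hsub hky hhy
    exact iff_of_false (Nat.lt_asymm hx') (Nat.lt_asymm hy')
  · -- b ≠ ξ h; then c = ξ k, so {k = ξ k} ⊆ {h = ξ h}
    have hbx : C.side h x = b := bool_eq_of_ne_of_ne hhx hb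
    have hc : c = ξ k := by
      by_contra hc
      have hcx : C.side k x = c := bool_eq_of_ne_of_ne hkx hc
      exact hbc x hbx hcx
    have hsub : ∀ v : C.V, C.side k v = ξ k → C.side h v = ξ h := by
      intro v hv
      have := fun e => hbc v e (hc ▸ hv)
      exact bool_eq_of_ne_of_ne this (Ne.symm hb)
    have hx' := key C hne hsub hhx hkx
    have hy' := key C hne hsub hhy hky
    exact iff_of_true hx' hy'
end

section
/- Let X be a δ-hyperbolic CAT(0) cube complex (with respect to the ℓ¹ metric on the 1-skeleton). If two combinatorial geodesic rays p and q in X converge to the same point of the Roller boundary, then they converge to the same point of the Gromov boundary ∂_∞X. -/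
namespace CCC

variable (C : CCC)

/-- A combinatorial geodesic ray in the `1`-skeleton. -/
def IsGeodRay (r : ℕ → C.V) : Prop :=
  ∀ m n : ℕ, m ≤ n → C.G.dist (r m) (r n) = n - m

/-- A ray (or any sequence of vertices) converges to a point of the Roller
compactification if it is eventually on the side chosen by that point, for every
hyperplane. -/
def ConvRoller (r : ℕ → C.V) (ξ : C.H → Bool) : Prop :=
  ∀ h : C.H, ∃ N : ℕ, ∀ n ≥ N, C.side h (r n) = ξ h

/-- Twice the Gromov product `(x,y)_o` in the graph metric (which is a natural number
since the Gromov product in a graph is a half-integer). -/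
noncomputable def gp (o x y : C.V) : ℕ := C.G.dist x o + C.G.dist y o - C.G.dist x y

/-- `δ`-hyperbolicity of the `1`-skeleton, via the four-point condition
`(x,z)_w ≥ min((x,y)_w, (y,z)_w) - δ` (stated for twice the Gromov products). -/
def Hyp (δ : ℕ) : Prop :=
  ∀ w x y z : C.V, min (gp C w x y) (gp C w y z) ≤ gp C w x z + 2 * δ

/-- Two sequences represent the same point of the Gromov boundary (equivalently, one of
them converges to infinity and `(s_i, t_j)_o → ∞`). -/
def GEquiv (s t : ℕ → C.V) : Prop :=
  ∀ (o : C.V) (N : ℕ), ∃ M : ℕ, ∀ i ≥ M, ∀ j ≥ M, N ≤ gp C o (s i) (t j)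

/-- A sequence converges to infinity. -/
def ConvInf (s : ℕ → C.V) : Prop := GEquiv C s s

end CCC

namespace CCC

variable (C : CCC)

/-- The key counting identity: `d(x,y) + d(y,z) = 2·#(sep(x,y) ∩ sep(y,z)) + d(x,z)`. -/
lemma key_count (x y z : C.V) :
    C.G.dist x y + C.G.dist y z =
      2 * ({h : C.H | C.side h x ≠ C.side h y} ∩ {h : C.H | C.side h y ≠ C.side h z}).ncard
        + C.G.dist x z := by
  set A := {h : C.H | C.side h x ≠ C.side h y} with hAdef
  set B := {h : C.H | C.side h y ≠ C.side h z} with hBdef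
  have hA : A.Finite := C.finsep x y
  have hB : B.Finite := C.finsep y z
  have hxz : {h : C.H | C.side h x ≠ C.side h z} = (A ∪ B) \ (A ∩ B) := by
    ext h
    simp only [hAdef, hBdef, Set.mem_setOf_eq, Set.mem_diff, Set.mem_union, Set.mem_inter_iff]
    cases hx : C.side h x <;> cases hy : C.side h y <;> cases hz : C.side h z <;> simp
  rw [C.dist_sep x y, C.dist_sep y z, C.dist_sep x z, hxz]
  have h1 : ((A ∪ B) \ (A ∩ B)).ncard + (A ∩ B).ncard = (A ∪ B).ncard :=
    Set.ncard_diff_add_ncard_of_subset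
      (Set.inter_subset_left.trans Set.subset_union_left) (hA.union hB)
  have h2 : (A ∪ B).ncard + (A ∩ B).ncard = A.ncard + B.ncard :=
    Set.ncard_union_add_ncard_inter A B hA hB
  rw [← hAdef, ← hBdef]
  omega

/-- Once a geodesic ray crosses a hyperplane, it stays on the new side. -/
lemma persist {p : ℕ → C.V} (hp : IsGeodRay C p) {m n : ℕ} (hmn : m ≤ n) (h : C.H)
    (hh : C.side h (p m) ≠ C.side h (p 0)) : C.side h (p n) = C.side h (p m) := by
  have hk := key_count C (p 0) (p m) (p n)
  rw [hp 0 m (Nat.zero_le m), hp m n hmn, hp 0 n (Nat.zero_le n)] at hk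
  have hzero : ({h : C.H | C.side h (p 0) ≠ C.side h (p m)} ∩
      {h : C.H | C.side h (p m) ≠ C.side h (p n)}).ncard = 0 := by omega
  have hemp := (Set.ncard_eq_zero ((C.finsep (p 0) (p m)).inter_of_left _)).mp hzero
  by_contra hne
  have : h ∈ ({h : C.H | C.side h (p 0) ≠ C.side h (p m)} ∩
      {h : C.H | C.side h (p m) ≠ C.side h (p n)}) :=
    ⟨fun e => hh e.symm, fun e => hne e.symm⟩
  rw [hemp] at this
  exact this

/-- Twice the Gromov product counts the hyperplanes separating both points from `o`. -/
lemma gp_eq_count (o x y : C.V) :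
    gp C o x y =
      2 * ({h : C.H | C.side h x ≠ C.side h o} ∩ {h : C.H | C.side h y ≠ C.side h o}).ncard := by
  have hk := key_count C x o y
  rw [show C.G.dist o y = C.G.dist y o from SimpleGraph.dist_comm] at hk
  have hset : {h : C.H | C.side h o ≠ C.side h y} = {h : C.H | C.side h y ≠ C.side h o} := by
    ext h; simp [ne_comm]
  rw [hset] at hk
  unfold gp
  omega

/-- If a geodesic ray converges to a Roller boundary point `ξ`, then every hyperplane it
crosses separates its origin from `ξ`. -/
lemma sep_subset_T {p : ℕ → C.V} (hp : IsGeodRay C p) (ξ : C.H → Bool)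
    (hpξ : ConvRoller C p ξ) (n : ℕ) :
    {h : C.H | C.side h (p 0) ≠ C.side h (p n)} ⊆ {h : C.H | C.side h (p 0) ≠ ξ h} := by
  intro h hh
  obtain ⟨Nh, hNh⟩ := hpξ h
  have hper : C.side h (p (max n Nh)) = C.side h (p n) :=
    persist C hp (le_max_left n Nh) h (fun e => hh e.symm)
  have hξh : C.side h (p (max n Nh)) = ξ h := hNh _ (le_max_right n Nh)
  simp only [Set.mem_setOf_eq] at hh ⊢
  rw [← hξh, hper]
  exact hh

/-- For every vertex `o`, infinitely many hyperplanes separate `o` from `ξ`. -/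
lemma T_infinite {p : ℕ → C.V} (hp : IsGeodRay C p) (ξ : C.H → Bool)
    (hpξ : ConvRoller C p ξ) (o : C.V) :
    {h : C.H | C.side h o ≠ ξ h}.Infinite := by
  have hT' : {h : C.H | C.side h (p 0) ≠ ξ h}.Infinite := by
    intro hfin
    set T' := {h : C.H | C.side h (p 0) ≠ ξ h} with hT'def
    have hn : ∀ n : ℕ, n ≤ T'.ncard := by
      intro n
      have hcard : {h : C.H | C.side h (p 0) ≠ C.side h (p n)}.ncard = n := by
        have := C.dist_sep (p 0) (p n)
        rw [hp 0 n (Nat.zero_le n)] at this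
        omega
      calc n = {h : C.H | C.side h (p 0) ≠ C.side h (p n)}.ncard := hcard.symm
        _ ≤ T'.ncard := Set.ncard_le_ncard (sep_subset_T C hp ξ hpξ n) hfin
    exact absurd (hn (T'.ncard + 1)) (by omega)
  intro hfin
  apply hT'
  apply Set.Finite.subset (hfin.union (C.finsep (p 0) o))
  intro h hh
  by_cases hc : C.side h o = ξ h
  · exact Or.inr (by simp only [Set.mem_setOf_eq] at hh ⊢; rw [hc]; exact hh)
  · exact Or.inl hc

end CCC

open CCC in
/-- in a `δ`-hyperbolic CAT(0) cube complex, two combinatorial geodesic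
rays converging to the same point of the Roller boundary converge to the same point of
the Gromov boundary (i.e. they are equivalent sequences converging to infinity). -/
theorem stmt16 (C : CCC) (δ : ℕ) (hδ : Hyp C δ)
    (ξ : C.H → Bool) (hξ : InBoundary C ξ)
    (p q : ℕ → C.V) (hp : IsGeodRay C p) (hq : IsGeodRay C q)
    (hpξ : ConvRoller C p ξ) (hqξ : ConvRoller C q ξ) :
    GEquiv C p q := by
  intro o N
  -- infinitely many hyperplanes separate `o` from `ξ`
  have hTinf : {h : C.H | C.side h o ≠ ξ h}.Infinite := T_infinite C hp ξ hpξ o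
  obtain ⟨F, hFsub, hFfin, hFcard⟩ := hTinf.exists_subset_ncard_eq N
  -- thresholds for each hyperplane in `F`
  classical
  set M : ℕ := hFfin.toFinset.sup
    (fun h => max (Classical.choose (hpξ h)) (Classical.choose (hqξ h))) with hMdef
  refine ⟨M, fun i hi j hj => ?_⟩
  have hFsub' : F ⊆ {h : C.H | C.side h (p i) ≠ C.side h o} ∩
      {h : C.H | C.side h (q j) ≠ C.side h o} := by
    intro h hh
    have hle : max (Classical.choose (hpξ h)) (Classical.choose (hqξ h)) ≤ M := by
      simpa using Finset.le_sup (f := fun h => max (Classical.choose (hpξ h))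
        (Classical.choose (hqξ h))) (hFfin.mem_toFinset.mpr hh)
    have hpi : C.side h (p i) = ξ h :=
      Classical.choose_spec (hpξ h) i (le_trans (le_trans (le_max_left _ _) hle) hi)
    have hqj : C.side h (q j) = ξ h :=
      Classical.choose_spec (hqξ h) j (le_trans (le_trans (le_max_right _ _) hle) hj)
    have ho : C.side h o ≠ ξ h := hFsub hh
    constructor
    · simp only [Set.mem_setOf_eq, hpi]
      exact fun e => ho e.symm
    · simp only [Set.mem_setOf_eq, hqj]
      exact fun e => ho e.symm
  have hcard : F.ncard ≤ ({h : C.H | C.side h (p i) ≠ C.side h o} ∩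
      {h : C.H | C.side h (q j) ≠ C.side h o}).ncard :=
    Set.ncard_le_ncard hFsub' ((C.finsep (p i) o).inter_of_left _)
  rw [gp_eq_count C o (p i) (q j)]
  omega
end

section
/- Let X be a δ-hyperbolic CAT(0) cube complex and f : ∂_ℜX → ∂_∞X the map sending a Roller boundary point to the Gromov boundary limit of any combinatorial geodesic ray converging to it. Then for x, y ∈ ∂_ℜX the following are equivalent: (i) at most δ hyperplanes separate x and y; (ii) only finitely many hyperplanes separate x and y; (iii) f(x) = f(y). -/
namespace CCC

variable (C : CCC)

/-- The set of hyperplanes separating two vertices. -/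
def sep (u v : C.V) : Set C.H := {h | C.side h u ≠ C.side h v}

lemma sep_finite (u v : C.V) : (C.sep u v).Finite := C.finsep u v

lemma sep_comm (u v : C.V) : C.sep u v = C.sep v u := by
  ext h; exact ne_comm

lemma dist_eq_sep (u v : C.V) : C.G.dist u v = (C.sep u v).ncard := C.dist_sep u v

lemma dist_comm' (u v : C.V) : C.G.dist u v = C.G.dist v u := by
  rw [dist_eq_sep, dist_eq_sep, sep_comm]

lemma sep_sub (u v w : C.V) : C.sep u w ⊆ C.sep u v ∪ C.sep v w := by
  intro h hh
  by_contra hc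
  simp only [sep, Set.mem_union, Set.mem_setOf_eq, not_or, not_not] at hc
  exact hh (hc.1.trans hc.2)

lemma dist_tri (u v w : C.V) : C.G.dist u w ≤ C.G.dist u v + C.G.dist v w := by
  rw [C.dist_eq_sep u w, C.dist_eq_sep u v, C.dist_eq_sep v w]
  exact le_trans
    (Set.ncard_le_ncard (C.sep_sub u v w) ((C.sep_finite u v).union (C.sep_finite v w)))
    (Set.ncard_union_le _ _)

lemma gp_eq (o u v : C.V) : gp C o u v = 2 * (C.sep o u ∩ C.sep o v).ncard := by
  have key : ∀ a b c : Bool, (b ≠ c) ↔ ((a ≠ b ∧ ¬(a ≠ c)) ∨ (a ≠ c ∧ ¬(a ≠ b))) := by decide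
  have h1 : C.sep u v = (C.sep o u \ C.sep o v) ∪ (C.sep o v \ C.sep o u) := by
    ext h
    simp only [sep, Set.mem_union, Set.mem_diff, Set.mem_setOf_eq]
    exact key (C.side h o) (C.side h u) (C.side h v)
  have fu := C.sep_finite o u
  have fv := C.sep_finite o v
  have e1 := Set.ncard_inter_add_ncard_diff_eq_ncard (C.sep o u) (C.sep o v) fu
  have e2 := Set.ncard_inter_add_ncard_diff_eq_ncard (C.sep o v) (C.sep o u) fv
  have e3 : ((C.sep o u \ C.sep o v) ∪ (C.sep o v \ C.sep o u)).ncard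
      = (C.sep o u \ C.sep o v).ncard + (C.sep o v \ C.sep o u).ncard :=
    Set.ncard_union_eq disjoint_sdiff_sdiff fu.diff fv.diff
  have e4 : C.sep o v ∩ C.sep o u = C.sep o u ∩ C.sep o v := Set.inter_comm _ _
  rw [e4] at e2
  show C.G.dist u o + C.G.dist v o - C.G.dist u v = _
  rw [C.dist_eq_sep u o, C.dist_eq_sep v o, C.dist_eq_sep u v, C.sep_comm u o, C.sep_comm v o,
    h1, e3]
  omega

lemma gp_comm (o u v : C.V) : gp C o u v = gp C o v u := by
  show C.G.dist u o + C.G.dist v o - C.G.dist u v = C.G.dist v o + C.G.dist u o - C.G.dist v u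
  rw [C.dist_comm' u v]
  omega

lemma gequiv_symm {p q : ℕ → C.V} (h : GEquiv C p q) : GEquiv C q p := by
  intro o N
  obtain ⟨M, hM⟩ := h o N
  exact ⟨M, fun i hi j hj => by rw [C.gp_comm]; exact hM j hj i hi⟩

/-- (ii) → (iii): finitely many separating hyperplanes implies same Gromov limit. -/
lemma partA {x y : C.H → Bool} {p q : ℕ → C.V} (hp : IsGeodRay C p)
    (hpx : ConvRoller C p x) (hqy : ConvRoller C q y)
    (hfin : {h : C.H | x h ≠ y h}.Finite) : GEquiv C p q := by
  choose Np hNp using hpx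
  choose Nq hNq using hqy
  intro o N
  set S := {h : C.H | x h ≠ y h} with hSdef
  set d0 := C.G.dist o (p 0) with hd0
  set m := d0 + S.ncard + N with hm
  set m' := max m ((C.sep_finite o (p m)).toFinset.sup Np) with hm'
  have hmm' : m ≤ m' := le_max_left _ _
  have hconv : ∀ h ∈ C.sep o (p m), C.side h (p m') = x h := by
    intro h hh
    exact hNp h m'
      (le_trans (Finset.le_sup ((C.sep_finite o (p m)).mem_toFinset.mpr hh)) (le_max_right _ _))
  set X := {h : C.H | C.side h o ≠ x h} with hXdef
  have hinter : C.sep o (p m) ∩ C.sep o (p m') = C.sep o (p m) ∩ X := by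
    ext h
    simp only [sep, Set.mem_inter_iff, Set.mem_setOf_eq, hXdef]
    constructor
    · rintro ⟨h1, h2⟩
      refine ⟨h1, ?_⟩
      rw [← hconv h h1]
      exact h2
    · rintro ⟨h1, h2⟩
      refine ⟨h1, ?_⟩
      rw [hconv h h1]
      exact h2
  have g1 : gp C o (p m) (p m') = 2 * (C.sep o (p m) ∩ X).ncard := by
    rw [C.gp_eq o (p m) (p m'), hinter]
  have d1 : C.G.dist (p m) (p m') = m' - m := hp m m' hmm'
  have d2 : C.G.dist (p 0) (p m) = m := by simpa using hp 0 m (Nat.zero_le m)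
  have d3 : C.G.dist (p 0) (p m') = m' := by simpa using hp 0 m' (Nat.zero_le m')
  have t1 : m ≤ d0 + C.G.dist (p m) o := by
    have := C.dist_tri (p 0) o (p m)
    rw [d2, C.dist_comm' (p 0) o, C.dist_comm' o (p m)] at this
    omega
  have t2 : m' ≤ d0 + C.G.dist (p m') o := by
    have := C.dist_tri (p 0) o (p m')
    rw [d3, C.dist_comm' (p 0) o, C.dist_comm' o (p m')] at this
    omega
  have gdef : gp C o (p m) (p m') = C.G.dist (p m) o + C.G.dist (p m') o
      - C.G.dist (p m) (p m') := rfl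
  have glow : S.ncard + N ≤ (C.sep o (p m) ∩ X).ncard := by omega
  set F := (C.sep o (p m) ∩ X) \ S with hFdef
  have hFfin : F.Finite := (((C.sep_finite o (p m)).inter_of_left _).diff)
  have hFcard : N ≤ F.ncard := by
    have hsub : C.sep o (p m) ∩ X ⊆ F ∪ S := by
      intro h hh
      by_cases hs : h ∈ S
      · exact Or.inr hs
      · exact Or.inl ⟨hh, hs⟩
    have h5 := Set.ncard_le_ncard hsub (hFfin.union hfin)
    have h6 := Set.ncard_union_le F S
    omega
  refine ⟨hFfin.toFinset.sup (fun h => max (Np h) (Nq h)), ?_⟩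
  intro i hi j hj
  have hFsub : F ⊆ C.sep o (p i) ∩ C.sep o (q j) := by
    intro h hh
    have hmem : h ∈ hFfin.toFinset := hFfin.mem_toFinset.mpr hh
    have hNi : max (Np h) (Nq h) ≤ i :=
      le_trans (Finset.le_sup (f := fun h => max (Np h) (Nq h)) hmem) hi
    have hNj : max (Np h) (Nq h) ≤ j :=
      le_trans (Finset.le_sup (f := fun h => max (Np h) (Nq h)) hmem) hj
    obtain ⟨⟨-, hXh⟩, hSh⟩ := hh
    have hxy : x h = y h := by
      by_contra hc
      exact hSh hc
    constructor
    · show C.side h o ≠ C.side h (p i)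
      rw [hNp h i (le_trans (le_max_left _ _) hNi)]
      exact hXh
    · show C.side h o ≠ C.side h (q j)
      rw [hNq h j (le_trans (le_max_right _ _) hNj), ← hxy]
      exact hXh
  have hle : F.ncard ≤ (C.sep o (p i) ∩ C.sep o (q j)).ncard :=
    Set.ncard_le_ncard hFsub ((C.sep_finite o (p i)).inter_of_left _)
  have := C.gp_eq o (p i) (q j)
  omega

/-- Core bound used in (iii) → (ii). -/
lemma partB_bound {δ : ℕ} (hδ : Hyp C δ) {x y : C.H → Bool} {p q : ℕ → C.V}
    (hp : IsGeodRay C p) (hpx : ConvRoller C p x) (hqy : ConvRoller C q y)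
    (hG : GEquiv C p q) (T : Finset C.H)
    (hT : ∀ h ∈ T, C.side h (p 0) ≠ x h ∧ x h ≠ y h) : T.card ≤ δ := by
  choose Np hNp using hpx
  choose Nq hNq using hqy
  set i := T.sup Np with hidef
  obtain ⟨M, hM⟩ := hG (p i) (2 * δ + 1)
  set i'' := max i M with hi''
  set j := max M (T.sup Nq) with hj
  have g0 : gp C (p i) (p i'') (p 0) = 0 := by
    have d1 : C.G.dist (p i) (p i'') = i'' - i := hp i i'' (le_max_left _ _)
    have d2 : C.G.dist (p 0) (p i) = i := by simpa using hp 0 i (Nat.zero_le i)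
    have d3 : C.G.dist (p 0) (p i'') = i'' := by simpa using hp 0 i'' (Nat.zero_le i'')
    have hdef : gp C (p i) (p i'') (p 0) = C.G.dist (p i'') (p i) + C.G.dist (p 0) (p i)
        - C.G.dist (p i'') (p 0) := rfl
    rw [C.dist_comm' (p i'') (p i), C.dist_comm' (p i'') (p 0)] at hdef
    have hii : i ≤ i'' := le_max_left _ _
    omega
  have h4 := hδ (p i) (p i'') (q j) (p 0)
  have h5 : 2 * δ + 1 ≤ gp C (p i) (p i'') (q j) :=
    hM i'' (le_max_right _ _) j (le_max_left _ _)
  have h6 : gp C (p i) (q j) (p 0) ≤ 2 * δ := by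
    rcases min_cases (gp C (p i) (p i'') (q j)) (gp C (p i) (q j) (p 0)) with ⟨he, hle⟩ | ⟨he, hle⟩ <;>
      omega
  have h7 := C.gp_eq (p i) (q j) (p 0)
  have hsub : (T : Set C.H) ⊆ C.sep (p i) (q j) ∩ C.sep (p i) (p 0) := by
    intro h hh
    rw [Finset.mem_coe] at hh
    have h1 := (hT h hh).1
    have h2 := (hT h hh).2
    have hpi : C.side h (p i) = x h := hNp h i (Finset.le_sup hh)
    have hqj : C.side h (q j) = y h :=
      hNq h j (le_trans (Finset.le_sup hh) (le_max_right _ _))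
    constructor
    · show C.side h (p i) ≠ C.side h (q j)
      rw [hpi, hqj]
      exact h2
    · show C.side h (p i) ≠ C.side h (p 0)
      rw [hpi]
      exact fun he => h1 he.symm
  have h8 : T.card ≤ (C.sep (p i) (q j) ∩ C.sep (p i) (p 0)).ncard := by
    rw [← Set.ncard_coe_finset]
    exact Set.ncard_le_ncard hsub ((C.sep_finite _ _).inter_of_left _)
  omega

/-- (iii) → (ii): same Gromov limit implies finitely many separating hyperplanes. -/
lemma partB {δ : ℕ} (hδ : Hyp C δ) {x y : C.H → Bool} {p q : ℕ → C.V}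
    (hp : IsGeodRay C p) (hq : IsGeodRay C q)
    (hpx : ConvRoller C p x) (hqy : ConvRoller C q y)
    (hG : GEquiv C p q) : {h : C.H | x h ≠ y h}.Finite := by
  have h1 : {h : C.H | C.side h (p 0) ≠ x h ∧ x h ≠ y h}.Finite := by
    by_contra hc
    obtain ⟨T, hTsub, hTcard⟩ := Set.Infinite.exists_subset_card_eq hc (δ + 1)
    have := C.partB_bound hδ hp hpx hqy hG T (fun h hh => hTsub hh)
    omega
  have h2 : {h : C.H | C.side h (q 0) ≠ y h ∧ x h ≠ y h}.Finite := by
    by_contra hc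
    obtain ⟨T, hTsub, hTcard⟩ := Set.Infinite.exists_subset_card_eq hc (δ + 1)
    have := C.partB_bound hδ hq hqy hpx (C.gequiv_symm hG) T
      (fun h hh => ⟨(hTsub hh).1, fun he => (hTsub hh).2 he.symm⟩)
    omega
  refine Set.Finite.subset ((h1.union h2).union (C.sep_finite (p 0) (q 0))) ?_
  intro h hh
  by_cases c1 : C.side h (p 0) = x h
  · by_cases c2 : C.side h (q 0) = y h
    · refine Or.inr ?_
      show C.side h (p 0) ≠ C.side h (q 0)
      rw [c1, c2]
      exact hh
    · exact Or.inl (Or.inr ⟨c2, hh⟩)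
  · exact Or.inl (Or.inl ⟨c1, hh⟩)

/-- The sharp bound: finitely many separating hyperplanes plus same Gromov limit give at
most `δ` separating hyperplanes. -/
lemma partC {δ : ℕ} (hδ : Hyp C δ) {x y : C.H → Bool} {p q : ℕ → C.V}
    (hpx : ConvRoller C p x) (hqy : ConvRoller C q y)
    (hG : GEquiv C p q) (hfin : {h : C.H | x h ≠ y h}.Finite) :
    {h : C.H | x h ≠ y h}.ncard ≤ δ := by
  choose Np hNp using hpx
  choose Nq hNq using hqy
  set S := {h : C.H | x h ≠ y h} with hSdef
  set w := p (hfin.toFinset.sup Np) with hw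
  set u := q (hfin.toFinset.sup Nq) with hu
  have hSw : ∀ h ∈ S, C.side h w = x h := fun h hh =>
    hNp h _ (Finset.le_sup (hfin.mem_toFinset.mpr hh))
  have hSu : ∀ h ∈ S, C.side h u = y h := fun h hh =>
    hNq h _ (Finset.le_sup (hfin.mem_toFinset.mpr hh))
  have hE : (C.sep w u).Finite := C.sep_finite w u
  set e := (C.sep w u).ncard with he
  obtain ⟨M₂, hM₂⟩ := hG w (2 * e + 2 * δ + 1)
  set n := max (max (hfin.toFinset.sup Np) (hfin.toFinset.sup Nq))
    (max M₂ (hE.toFinset.sup (fun h => max (Np h) (Nq h)))) with hn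
  have hnM₂ : M₂ ≤ n := le_trans (le_max_left _ _) (le_max_right _ _)
  have hSpn : ∀ h ∈ S, C.side h (p n) = x h := fun h hh =>
    hNp h n (le_trans (Finset.le_sup (hfin.mem_toFinset.mpr hh))
      (le_trans (le_max_left _ _) (le_max_left _ _)))
  have hSqn : ∀ h ∈ S, C.side h (q n) = y h := fun h hh =>
    hNq h n (le_trans (Finset.le_sup (hfin.mem_toFinset.mpr hh))
      (le_trans (le_max_right _ _) (le_max_left _ _)))
  have hsupE : (hE.toFinset.sup (fun h => max (Np h) (Nq h))) ≤ n :=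
    le_trans (le_max_right _ _) (le_max_right _ _)
  have hEpn : ∀ h ∈ C.sep w u, C.side h (p n) = x h := fun h hh =>
    hNp h n (le_trans (le_trans (le_max_left _ _)
      (Finset.le_sup (f := fun h => max (Np h) (Nq h)) (hE.mem_toFinset.mpr hh))) hsupE)
  have hEqn : ∀ h ∈ C.sep w u, C.side h (q n) = y h := fun h hh =>
    hNq h n (le_trans (le_trans (le_max_right _ _)
      (Finset.le_sup (f := fun h => max (Np h) (Nq h)) (hE.mem_toFinset.mpr hh))) hsupE)
  have fact1 : C.sep w (q n) ∩ C.sep w u = (C.sep w u) \ (C.sep u (q n)) := by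
    have key : ∀ a b c : Bool, ((a ≠ c) ∧ (a ≠ b)) ↔ ((a ≠ b) ∧ ¬(b ≠ c)) := by decide
    ext h
    simp only [sep, Set.mem_inter_iff, Set.mem_diff, Set.mem_setOf_eq]
    exact key (C.side h w) (C.side h u) (C.side h (q n))
  have i1 : S ⊆ (C.sep w u) \ (C.sep u (q n)) := by
    intro h hh
    constructor
    · show C.side h w ≠ C.side h u
      rw [hSw h hh, hSu h hh]
      exact hh
    · show ¬ C.side h u ≠ C.side h (q n)
      rw [hSu h hh, hSqn h hh]
      simp
  have i2 : (C.sep w (p n) ∩ C.sep w u) ⊆ (C.sep w u) \ (C.sep u (q n)) := by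
    intro h hh
    obtain ⟨hA, hEh⟩ := hh
    refine ⟨hEh, ?_⟩
    intro hB
    have hxh : C.side h (p n) = x h := hEpn h hEh
    have hyh : C.side h (q n) = y h := hEqn h hEh
    have hA' : C.side h w ≠ x h := by
      rw [← hxh]
      exact hA
    have hB' : C.side h u ≠ y h := by
      rw [← hyh]
      exact hB
    have hwu : C.side h w ≠ C.side h u := hEh
    have hS : x h ≠ y h := by
      have key : ∀ a b c d : Bool, a ≠ c → b ≠ d → a ≠ b → c ≠ d := by decide
      exact key _ _ _ _ hA' hB' hwu
    exact hA' (hSw h hS)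
  have disj : Disjoint S (C.sep w (p n) ∩ C.sep w u) := by
    rw [Set.disjoint_left]
    intro h hh hh2
    exact hh2.1 (by rw [hSw h hh, hSpn h hh])
  have c1 : (S ∪ (C.sep w (p n) ∩ C.sep w u)).ncard
      = S.ncard + (C.sep w (p n) ∩ C.sep w u).ncard :=
    Set.ncard_union_eq disj hfin ((C.sep_finite w (p n)).inter_of_left _)
  have c2 : (S ∪ (C.sep w (p n) ∩ C.sep w u)).ncard ≤ ((C.sep w u) \ (C.sep u (q n))).ncard :=
    Set.ncard_le_ncard (Set.union_subset i1 i2) hE.diff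
  have f1 : gp C w (p n) u = 2 * (C.sep w (p n) ∩ C.sep w u).ncard := C.gp_eq w (p n) u
  have f2 : gp C w (q n) u = 2 * ((C.sep w u) \ (C.sep u (q n))).ncard := by
    rw [C.gp_eq w (q n) u, fact1]
  have f4 := hδ w (p n) (q n) u
  have f5 : 2 * e + 2 * δ + 1 ≤ gp C w (p n) (q n) := hM₂ n hnM₂ n hnM₂
  have hAE : (C.sep w (p n) ∩ C.sep w u).ncard ≤ e :=
    Set.ncard_le_ncard Set.inter_subset_right hE
  rcases min_cases (gp C w (p n) (q n)) (gp C w (q n) u) with ⟨he1, -⟩ | ⟨he1, -⟩ <;> omega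

end CCC

open CCC in
/-- in a `δ`-hyperbolic CAT(0) cube complex, for points `x`, `y` of the
Roller boundary and geodesic rays `p`, `q` converging to them, the following are
equivalent: (i) at most `δ` hyperplanes separate `x` and `y`; (ii) finitely many
hyperplanes separate `x` and `y`; (iii) the rays have the same Gromov boundary limit
(i.e. `f x = f y` for the map `f : ∂_ℜX → ∂_∞X`). -/
theorem stmt17 (C : CCC) (δ : ℕ) (hδ : Hyp C δ)
    (x y : C.H → Bool) (hx : InBoundary C x) (hy : InBoundary C y)
    (p q : ℕ → C.V) (hp : IsGeodRay C p) (hq : IsGeodRay C q)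
    (hpx : ConvRoller C p x) (hqy : ConvRoller C q y) :
    ({h : C.H | x h ≠ y h}.encard ≤ (δ : ℕ∞) ↔ {h : C.H | x h ≠ y h}.Finite) ∧
    ({h : C.H | x h ≠ y h}.Finite ↔ GEquiv C p q) := by
  have hA : {h : C.H | x h ≠ y h}.Finite → GEquiv C p q := fun hf => C.partA hp hpx hqy hf
  have hB : GEquiv C p q → {h : C.H | x h ≠ y h}.Finite := fun hg =>
    C.partB hδ hp hq hpx hqy hg
  have hC : {h : C.H | x h ≠ y h}.Finite → {h : C.H | x h ≠ y h}.ncard ≤ δ := fun hf =>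
    C.partC hδ hpx hqy (hA hf) hf
  refine ⟨⟨fun h1 => ?_, fun hf => ?_⟩, hA, hB⟩
  · have h2 : {h : C.H | x h ≠ y h}.encard < ⊤ := lt_of_le_of_lt h1 (WithTop.coe_lt_top δ)
    exact Set.encard_lt_top_iff.mp h2
  · rw [← hf.cast_ncard_eq]
    exact_mod_cast hC hf
end
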